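/- arXiv:1406.3081 — 6 statements merged into one kernel-verified Lean document; each statement's English description precedes it below -/
import Mathlib

section
/- Let β be an n-cycle in S_n. Then for k ∈ {1, 2, 3} with k ≤ n, and also for k = n, the number of permutations α ∈ S_n with H(αβ, βα) ≤ k satisfies c(≤k, β) = n·C(n,k)·(k−1)! − n·C(n,k) + n, where C(a,b) denotes the binomial coefficient. -/
/-- The Hamming metric between two permutations of `Fin n`. -/
def hamming {n : ℕ} (f g : Equiv.Perm (Fin n)) : ℕ :=
  (Finset.univ.filter fun a : Fin n => f a ≠ g a).card

/-- `cle k β` is the number of permutations `α` with `H(αβ, βα) ≤ k`. -/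
def cle {n : ℕ} (k : ℕ) (β : Equiv.Perm (Fin n)) : ℕ :=
  (Finset.univ.filter fun α : Equiv.Perm (Fin n) =>
    hamming (α * β) (β * α) ≤ k).card

open Equiv Equiv.Perm Finset

lemma hamming_eq {n : ℕ} (f g : Equiv.Perm (Fin n)) :
    hamming f g = (g⁻¹ * f).support.card := by
  unfold hamming
  congr 1
  ext x
  simp only [mem_filter, mem_univ, true_and, Equiv.Perm.mem_support, Equiv.Perm.mul_apply]
  constructor
  · intro h hx; exact h (by simpa using congrArg g hx)
  · intro h hx; exact h (by rw [hx]; simp)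

lemma hamming_self {n : ℕ} (f : Equiv.Perm (Fin n)) : hamming f f = 0 := by
  simp [hamming]

lemma hamming_comm_eq {n : ℕ} (α β : Equiv.Perm (Fin n)) :
    hamming (α * β) (β * α) = hamming β (α⁻¹ * β * α) := by
  rw [hamming_eq, hamming_eq]
  congr 2


/-- forward 3-cycle: a → b → c → a -/
def tc {n : ℕ} (a b c : Fin n) : Equiv.Perm (Fin n) := Equiv.swap a c * Equiv.swap a b

lemma tc_a {n : ℕ} {a b c : Fin n} (hab : a ≠ b) (hbc : b ≠ c) : tc a b c a = b := by
  simp [tc, Equiv.swap_apply_of_ne_of_ne (Ne.symm hab) hbc]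

lemma tc_b {n : ℕ} {a b c : Fin n} (hab : a ≠ b) : tc a b c b = c := by
  simp [tc, Equiv.swap_apply_of_ne_of_ne (Ne.symm hab)]

lemma tc_c {n : ℕ} {a b c : Fin n} (hac : a ≠ c) (hbc : b ≠ c) : tc a b c c = a := by
  simp [tc, Equiv.swap_apply_of_ne_of_ne (Ne.symm hac) (Ne.symm hbc)]

lemma tc_other {n : ℕ} {a b c x : Fin n} (hxa : x ≠ a) (hxb : x ≠ b) (hxc : x ≠ c) :
    tc a b c x = x := by
  simp [tc, Equiv.swap_apply_of_ne_of_ne, hxa, hxb, hxc]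

lemma tc_support {n : ℕ} {a b c : Fin n} (hab : a ≠ b) (hac : a ≠ c) (hbc : b ≠ c) :
    (tc a b c).support = {a, b, c} := by
  ext x
  simp only [Equiv.Perm.mem_support, mem_insert, mem_singleton]
  constructor
  · intro h
    by_contra hx
    push_neg at hx
    exact h (tc_other hx.1 hx.2.1 hx.2.2)
  · rintro (rfl | rfl | rfl)
    · rw [tc_a hab hbc]; exact Ne.symm hab
    · rw [tc_b hab]; exact Ne.symm hbc
    · rw [tc_c hac hbc]; exact hac

/-- a permutation with support {a,b,c} is one of the two 3-cycles -/
lemma support_three {n : ℕ} {σ : Equiv.Perm (Fin n)} {a b c : Fin n}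
    (hab : a ≠ b) (hac : a ≠ c) (hbc : b ≠ c) (hs : σ.support = {a, b, c}) :
    σ = tc a b c ∨ σ = tc a c b := by
  have mem : ∀ x : Fin n, x ∈ σ.support ↔ (x = a ∨ x = b ∨ x = c) := by
    intro x; rw [hs]; simp
  have ha : σ a ≠ a := by rw [← Equiv.Perm.mem_support, mem]; tauto
  have hb : σ b ≠ b := by rw [← Equiv.Perm.mem_support, mem]; tauto
  have hc : σ c ≠ c := by rw [← Equiv.Perm.mem_support, mem]; tauto
  have hma : σ a = a ∨ σ a = b ∨ σ a = c := by
    rw [← mem, Equiv.Perm.apply_mem_support, mem]; tauto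
  have hmb : σ b = a ∨ σ b = b ∨ σ b = c := by
    rw [← mem, Equiv.Perm.apply_mem_support, mem]; tauto
  have hmc : σ c = a ∨ σ c = b ∨ σ c = c := by
    rw [← mem, Equiv.Perm.apply_mem_support, mem]; tauto
  have hother : ∀ x, x ≠ a → x ≠ b → x ≠ c → σ x = x := by
    intro x h1 h2 h3
    by_contra h
    have := (mem x).mp (Equiv.Perm.mem_support.mpr h); tauto
  have inj := σ.injective
  rcases hma with h1 | h1 | h1
  · exact absurd h1 ha
  · -- sigma a = b
    left
    have h2 : σ b = c := by
      rcases hmb with h2 | h2 | h2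
      · exfalso
        rcases hmc with h3 | h3 | h3
        · exact hbc (inj (h2.trans h3.symm))
        · exact hac (inj (h3.trans h1.symm)).symm
        · exact hc h3
      · exact absurd h2 hb
      · exact h2
    have h3 : σ c = a := by
      rcases hmc with h3 | h3 | h3
      · exact h3
      · exact absurd (inj (h3.trans h1.symm)) (Ne.symm hac)
      · exact absurd h3 hc
    ext x
    rcases eq_or_ne x a with rfl | hxa
    · rw [h1, tc_a hab hbc]
    rcases eq_or_ne x b with rfl | hxb
    · rw [h2, tc_b hab]
    rcases eq_or_ne x c with rfl | hxc
    · rw [h3, tc_c hac hbc]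
    · rw [hother x hxa hxb hxc, tc_other hxa hxb hxc]
  · -- sigma a = c
    right
    have h2 : σ c = b := by
      rcases hmc with h3 | h3 | h3
      · exfalso
        rcases hmb with h4 | h4 | h4
        · exact hbc (inj (h4.trans h3.symm))
        · exact hb h4
        · exact hab (inj (h4.trans h1.symm)).symm
      · exact h3
      · exact absurd h3 hc
    have h3 : σ b = a := by
      rcases hmb with h4 | h4 | h4
      · exact h4
      · exact absurd h4 hb
      · exact absurd (inj (h4.trans h1.symm)) (Ne.symm hab)
    ext x
    rcases eq_or_ne x a with rfl | hxa
    · rw [h1, tc_a hac (Ne.symm hbc)]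
    rcases eq_or_ne x b with rfl | hxb
    · rw [h3, tc_c hab (Ne.symm hbc)]
    rcases eq_or_ne x c with rfl | hxc
    · rw [h2, tc_b hac]
    · rw [hother x hxa hxb hxc, tc_other hxa hxc hxb]

open Equiv Equiv.Perm Finset

section
variable {n : ℕ} {β : Equiv.Perm (Fin n)}

lemma chain' {δ : Equiv.Perm (Fin n)} {a : Fin n} (s : ℕ) (m : ℕ)
    (h : ∀ u, s ≤ u → u < s + m → δ ((β ^ u) a) = (β ^ (u + 1)) a) :
    (δ ^ m) ((β ^ s) a) = (β ^ (s + m)) a := by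
  induction m with
  | zero => simp
  | succ m ih =>
    rw [pow_succ', Equiv.Perm.mul_apply, ih (fun u hu hu' => h u hu (by omega))]
    exact h (s + m) (by omega) (by omega)

lemma bstep (a : Fin n) (u : ℕ) : β ((β ^ u) a) = (β ^ (u + 1)) a := by
  rw [pow_succ']; rfl

lemma bmove (hs : β.support = Finset.univ) (x : Fin n) : β x ≠ x :=
  Equiv.Perm.mem_support.mp (hs ▸ Finset.mem_univ x)

lemma bord (hc : β.IsCycle) (hs : β.support = Finset.univ) : orderOf β = n := by
  rw [hc.orderOf, hs, Finset.card_univ, Fintype.card_fin]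

lemma bpow_n (hc : β.IsCycle) (hs : β.support = Finset.univ) : β ^ n = 1 := by
  have h := pow_orderOf_eq_one β
  rwa [bord hc hs] at h

lemma binj (hc : β.IsCycle) (hs : β.support = Finset.univ) {a : Fin n} {s t : ℕ}
    (hsn : s < n) (htn : t < n) (h : (β ^ s) a = (β ^ t) a) : s = t := by
  wlog hle : s ≤ t generalizing s t
  · exact (this htn hsn h.symm (by omega)).symm
  have h2 : (β ^ s) ((β ^ (t - s)) a) = (β ^ s) a := by
    rw [← Equiv.Perm.mul_apply, ← pow_add, show s + (t - s) = t by omega, h]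
  have h3 : (β ^ (t - s)) a = a := (β ^ s).injective h2
  have h4 : β ^ (t - s) = 1 := (hc.pow_eq_one_iff' (bmove hs a)).mpr h3
  have h5 : orderOf β ∣ t - s := orderOf_dvd_of_pow_eq_one h4
  rw [bord hc hs] at h5
  rcases Nat.eq_zero_of_dvd_of_lt h5 (by omega) with h6
  omega

lemma breach (hc : β.IsCycle) (hs : β.support = Finset.univ) (a y : Fin n) :
    ∃ t, t < n ∧ (β ^ t) a = y := by
  obtain ⟨i, hi⟩ := hc.exists_pow_eq (bmove hs a) (bmove hs y)
  refine ⟨i % n, ?_, ?_⟩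
  · have h2 : 2 ≤ n := by
      have := hc.two_le_card_support
      rw [hs, Finset.card_univ, Fintype.card_fin] at this
      omega
    exact Nat.mod_lt _ (by omega)
  · have h : β ^ (i % orderOf β) = β ^ i := pow_mod_orderOf β i
    rw [bord hc hs] at h
    rw [h, hi]

end


section
variable {n : ℕ} {β : Equiv.Perm (Fin n)}

lemma bpne (hc : β.IsCycle) (hs : β.support = Finset.univ) {a : Fin n} {s t : ℕ}
    (hsn : s < n) (htn : t < n) (hst : s ≠ t) : (β ^ s) a ≠ (β ^ t) a :=
  fun h => hst (binj hc hs hsn htn h)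

/-- generic: off the three special points, β * tc acts as β -/
lemma e4gen (hc : β.IsCycle) (hs : β.support = Finset.univ) (a : Fin n) {p q : ℕ}
    (hp : 0 < p) (hq : 0 < q) (hpq : p ≠ q) (hpn : p < n) (hqn : q < n) :
    ∀ u, u ≠ 0 → u ≠ p → u ≠ q → u < n →
      (β * tc a ((β ^ p) a) ((β ^ q) a)) ((β ^ u) a) = (β ^ (u + 1)) a := by
  intro u h0 hup huq hun
  have hn0 : 0 < n := by omega
  rw [Equiv.Perm.mul_apply,
    tc_other (show (β ^ u) a ≠ a by
        have := bpne hc hs hun hn0 h0 (a := a); simpa using this)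
      (bpne hc hs hun hpn hup) (bpne hc hs hun hqn huq),
    bstep]

lemma fwd_good (hc : β.IsCycle) (hs : β.support = Finset.univ) (a : Fin n) {i j : ℕ}
    (hi : 0 < i) (hij : i < j) (hjn : j < n) :
    (β * tc a ((β ^ i) a) ((β ^ j) a)).IsCycle ∧
      (β * tc a ((β ^ i) a) ((β ^ j) a)).support = Finset.univ := by
  have hn0 : 0 < n := by omega
  set δ := β * tc a ((β ^ i) a) ((β ^ j) a) with hδ
  have hab : a ≠ (β ^ i) a := by
    have := bpne hc hs hn0 (show i < n by omega) (show (0:ℕ) ≠ i by omega) (a := a)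
    simpa using this
  have hacn : a ≠ (β ^ j) a := by
    have := bpne hc hs hn0 hjn (show (0:ℕ) ≠ j by omega) (a := a)
    simpa using this
  have hbc : (β ^ i) a ≠ (β ^ j) a := bpne hc hs (by omega) hjn (by omega)
  have e1 : δ a = (β ^ (i + 1)) a := by
    rw [hδ, Equiv.Perm.mul_apply, tc_a hab hbc, bstep]
  have e2 : δ ((β ^ j) a) = (β ^ 1) a := by
    rw [hδ, Equiv.Perm.mul_apply, tc_c hacn hbc, pow_one]
  have e3 : δ ((β ^ i) a) = (β ^ (j + 1)) a := by
    rw [hδ, Equiv.Perm.mul_apply, tc_b hab, bstep]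
  have e4 := e4gen hc hs a (show 0 < i by omega) (show 0 < j by omega)
    (show i ≠ j by omega) (show i < n by omega) hjn
  have P1 : ∀ t, i < t → t ≤ j → (δ ^ (t - i)) a = (β ^ t) a := by
    intro t ht1 ht2
    have hch := chain' (β := β) (δ := δ) (a := a) (i + 1) (t - i - 1)
      (fun u hu hu' => e4 u (by omega) (by omega) (by omega) (by omega))
    rw [show i + 1 + (t - i - 1) = t by omega] at hch
    rw [show t - i = (t - i - 1) + 1 by omega, pow_succ, Equiv.Perm.mul_apply, e1, hch]
  have P2 : ∀ t, 0 < t → t ≤ i → (δ ^ (j - i + t)) a = (β ^ t) a := by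
    intro t ht1 ht2
    have hch := chain' (β := β) (δ := δ) (a := a) 1 (t - 1)
      (fun u hu hu' => e4 u (by omega) (by omega) (by omega) (by omega))
    rw [show 1 + (t - 1) = t by omega] at hch
    have hji : (δ ^ (j - i)) a = (β ^ j) a := by
      have := P1 j (by omega) (by omega); exact this
    rw [show j - i + t = (t - 1) + 1 + (j - i) by omega, pow_add, pow_add, pow_one,
      Equiv.Perm.mul_apply, Equiv.Perm.mul_apply, hji]
    rw [e2, hch]
  have P3 : ∀ t, j < t → t < n → (δ ^ t) a = (β ^ t) a := by
    intro t ht1 ht2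
    have hch := chain' (β := β) (δ := δ) (a := a) (j + 1) (t - j - 1)
      (fun u hu hu' => e4 u (by omega) (by omega) (by omega) (by omega))
    rw [show j + 1 + (t - j - 1) = t by omega] at hch
    have hj' : (δ ^ j) a = (β ^ i) a := by
      have := P2 i hi (le_refl i)
      rwa [show j - i + i = j by omega] at this
    nth_rewrite 1 [show t = (t - j - 1) + 1 + j by omega]
    rw [pow_add, pow_add, pow_one,
      Equiv.Perm.mul_apply, Equiv.Perm.mul_apply, hj']
    rw [e3, hch]
  have reach : ∀ y : Fin n, ∃ k : ℕ, (δ ^ k) a = y := by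
    intro y
    obtain ⟨t, htn, hty⟩ := breach hc hs a y
    rcases Nat.eq_zero_or_pos t with rfl | ht0
    · exact ⟨0, by simpa using hty⟩
    rcases le_or_gt t i with hti | hti
    · exact ⟨j - i + t, by rw [P2 t ht0 hti, hty]⟩
    rcases le_or_gt t j with htj | htj
    · exact ⟨t - i, by rw [P1 t hti htj, hty]⟩
    · exact ⟨t, by rw [P3 t htj htn, hty]⟩
  have δa : δ a ≠ a := by
    rw [e1]
    have := bpne hc hs (show i + 1 < n by omega) hn0 (show i + 1 ≠ 0 by omega) (a := a)
    simpa using this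
  have moved : ∀ y : Fin n, δ y ≠ y := by
    intro y hy
    obtain ⟨k, hk⟩ := reach y
    apply δa
    have h1 : (δ ^ k) (δ a) = (δ ^ k) a := by
      rw [← Equiv.Perm.mul_apply, ((Commute.refl δ).pow_left k).eq,
        Equiv.Perm.mul_apply, hk]
      exact hy
    exact (δ ^ k).injective h1
  refine ⟨⟨a, δa, fun y hy => ?_⟩, ?_⟩
  · obtain ⟨k, hk⟩ := reach y
    exact ⟨(k : ℤ), by simpa using hk⟩
  · ext x
    simp only [Equiv.Perm.mem_support, Finset.mem_univ, iff_true]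
    exact moved x

lemma rev_not (hc : β.IsCycle) (hs : β.support = Finset.univ) (a : Fin n) {i j : ℕ}
    (hi : 0 < i) (hij : i < j) (hjn : j < n) :
    ¬ ((β * tc a ((β ^ j) a) ((β ^ i) a)).IsCycle ∧
       (β * tc a ((β ^ j) a) ((β ^ i) a)).support.card = n) := by
  rintro ⟨hcy, hcard⟩
  have hn0 : 0 < n := by omega
  set δ := β * tc a ((β ^ j) a) ((β ^ i) a) with hδ
  have hsupp : δ.support = Finset.univ :=
    Finset.eq_univ_of_card _ (by rw [hcard, Fintype.card_fin])
  have hmv : δ a ≠ a := Equiv.Perm.mem_support.mp (hsupp ▸ Finset.mem_univ a)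
  have hab : a ≠ (β ^ j) a := by
    have := bpne hc hs hn0 hjn (show (0:ℕ) ≠ j by omega) (a := a)
    simpa using this
  have hbc : (β ^ j) a ≠ (β ^ i) a := bpne hc hs hjn (by omega) (by omega)
  have e1 : δ a = (β ^ (j + 1)) a := by
    rw [hδ, Equiv.Perm.mul_apply, tc_a hab hbc, bstep]
  have e4 := e4gen hc hs a (show 0 < j by omega) (show 0 < i by omega)
    (show j ≠ i by omega) hjn (show i < n by omega)
  have hch := chain' (β := β) (δ := δ) (a := a) (j + 1) (n - 1 - j)
    (fun u hu hu' => e4 u (by omega) (by omega) (by omega) (by omega))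
  rw [show j + 1 + (n - 1 - j) = n by omega, bpow_n hc hs] at hch
  have key : (δ ^ (n - j)) a = a := by
    rw [show n - j = (n - 1 - j) + 1 by omega, pow_succ, Equiv.Perm.mul_apply, e1, hch]
    rfl
  have h1 : δ ^ (n - j) = 1 := (hcy.pow_eq_one_iff' hmv).mpr key
  have h2 : orderOf δ ∣ n - j := orderOf_dvd_of_pow_eq_one h1
  rw [hcy.orderOf, hcard] at h2
  have := Nat.le_of_dvd (by omega) h2
  omega

lemma param (hc : β.IsCycle) (hs : β.support = Finset.univ) {S : Finset (Fin n)}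
    (h3 : S.card = 3) :
    ∃ (a : Fin n) (i j : ℕ), 0 < i ∧ i < j ∧ j < n ∧
      S = {a, (β ^ i) a, (β ^ j) a} := by
  obtain ⟨x, y, z, hxy, hxz, hyz, rfl⟩ := Finset.card_eq_three.mp h3
  obtain ⟨p, hpn, hp⟩ := breach hc hs x y
  obtain ⟨q, hqn, hq⟩ := breach hc hs x z
  have hp0 : p ≠ 0 := by rintro rfl; simp at hp; exact hxy hp
  have hq0 : q ≠ 0 := by rintro rfl; simp at hq; exact hxz hq
  have hpq : p ≠ q := by rintro rfl; exact hyz (hp.symm.trans hq)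
  rcases lt_or_gt_of_ne hpq with h | h
  · exact ⟨x, p, q, by omega, h, hqn, by rw [hp, hq]⟩
  · refine ⟨x, q, p, by omega, h, hpn, ?_⟩
    rw [hq, hp, Finset.pair_comm z y]

lemma unique_dist3 (hc : β.IsCycle) (hs : β.support = Finset.univ)
    {δ₁ δ₂ : Equiv.Perm (Fin n)} (hc1 : δ₁.IsCycle) (hn1 : δ₁.support.card = n)
    (hc2 : δ₂.IsCycle) (hn2 : δ₂.support.card = n)
    (h3 : (β⁻¹ * δ₁).support.card = 3)
    (hsup : (β⁻¹ * δ₁).support = (β⁻¹ * δ₂).support) : δ₁ = δ₂ := by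
  obtain ⟨a, i, j, hi, hij, hjn, hS⟩ := param hc hs h3
  have hab : a ≠ (β ^ i) a := by
    have := bpne hc hs (show 0 < n by omega) (show i < n by omega)
      (show (0:ℕ) ≠ i by omega) (a := a)
    simpa using this
  have hac : a ≠ (β ^ j) a := by
    have := bpne hc hs (show 0 < n by omega) hjn (show (0:ℕ) ≠ j by omega) (a := a)
    simpa using this
  have hbc : (β ^ i) a ≠ (β ^ j) a := bpne hc hs (by omega) hjn (by omega)
  have key : ∀ δ : Equiv.Perm (Fin n), δ.IsCycle → δ.support.card = n →
      (β⁻¹ * δ).support = {a, (β ^ i) a, (β ^ j) a} →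
      δ = β * tc a ((β ^ i) a) ((β ^ j) a) := by
    intro δ hcy hcd hsp
    rcases support_three hab hac hbc hsp with h | h
    · rw [← mul_inv_cancel_left β δ, h]
    · exfalso
      refine rev_not hc hs a hi hij hjn ⟨?_, ?_⟩
      · rw [← mul_inv_cancel_left β δ, h] at hcy; exact hcy
      · rw [← mul_inv_cancel_left β δ, h] at hcd; exact hcd
  rw [key δ₁ hc1 hn1 hS, key δ₂ hc2 hn2 (hsup ▸ hS)]
end

section
variable {n : ℕ} {β : Equiv.Perm (Fin n)}

lemma comm_card (hc : β.IsCycle) (hs : β.support = Finset.univ) :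
    (Finset.univ.filter fun τ : Equiv.Perm (Fin n) => τ * β = β * τ).card = n := by
  have hn2 : 2 ≤ n := by
    have := hc.two_le_card_support
    rwa [hs, Finset.card_univ, Fintype.card_fin] at this
  have a0 : Fin n := ⟨0, by omega⟩
  have himg : (Finset.univ.filter fun τ : Equiv.Perm (Fin n) => τ * β = β * τ)
      = Finset.univ.image (fun m : Fin n => β ^ (m : ℕ)) := by
    ext τ
    simp only [Finset.mem_filter, Finset.mem_univ, true_and, Finset.mem_image]
    constructor
    · intro hτ
      obtain ⟨m, hm, hma⟩ := breach hc hs a0 (τ a0)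
      refine ⟨⟨m, hm⟩, ?_⟩
      refine Equiv.Perm.ext fun y => ?_
      obtain ⟨t, ht, hty⟩ := breach hc hs a0 y
      have hcomm : β ^ m * β ^ t = β ^ t * β ^ m := by
        rw [← pow_add, ← pow_add, Nat.add_comm]
      have hτc : τ * β ^ t = β ^ t * τ := ((Commute.pow_right (hτ : Commute τ β) t))
      calc (β ^ (m : ℕ)) y = (β ^ m * β ^ t) a0 := by
            rw [Equiv.Perm.mul_apply, hty]
        _ = (β ^ t) ((β ^ m) a0) := by rw [hcomm]; rfl
        _ = (β ^ t) (τ a0) := by rw [hma]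
        _ = τ ((β ^ t) a0) := by rw [← Equiv.Perm.mul_apply, ← hτc]; rfl
        _ = τ y := by rw [hty]
    · rintro ⟨m, -, rfl⟩
      exact ((Commute.refl β).pow_left (m : ℕ)).eq
  rw [himg, Finset.card_image_of_injective _ ?_, Finset.card_univ, Fintype.card_fin]
  intro s t hst
  have hst' : β ^ (s : ℕ) = β ^ (t : ℕ) := hst
  exact Fin.ext (binj hc hs (a := a0) s.2 t.2 (by rw [hst']))

lemma fiber_card (hc : β.IsCycle) (hs : β.support = Finset.univ)
    {δ : Equiv.Perm (Fin n)} (hcy : δ.IsCycle) (hcd : δ.support.card = n) :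
    (Finset.univ.filter fun α : Equiv.Perm (Fin n) => α⁻¹ * β * α = δ).card = n := by
  have hbcard : β.support.card = n := by rw [hs, Finset.card_univ, Fintype.card_fin]
  obtain ⟨g, hg⟩ := isConj_iff.mp (hc.isConj hcy (hbcard.trans hcd.symm))
  set α0 := g⁻¹ with hα0def
  have hα0 : α0⁻¹ * β * α0 = δ := by
    rw [hα0def, inv_inv]
    exact hg
  refine Eq.trans ?_ (comm_card hc hs)
  apply Finset.card_nbij' (fun α => α * α0⁻¹) (fun τ => τ * α0)
  · intro α hα
    simp only [Finset.mem_coe, Finset.mem_filter, Finset.mem_univ, true_and] at hα ⊢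
    have h2 := congrArg (fun x => α * x * α0⁻¹) (hα.trans hα0.symm)
    simp only [mul_assoc, mul_inv_cancel_left, inv_mul_cancel_left,
      mul_inv_cancel, inv_mul_cancel, mul_one] at h2 ⊢
    exact h2.symm
  · intro τ hτ
    simp only [Finset.mem_coe, Finset.mem_filter, Finset.mem_univ, true_and] at hτ ⊢
    have hτβ : τ⁻¹ * β * τ = β := by
      rw [mul_assoc, ← hτ, ← mul_assoc, inv_mul_cancel, one_mul]
    have : (τ * α0)⁻¹ * β * (τ * α0) = α0⁻¹ * (τ⁻¹ * β * τ) * α0 := by group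
    rw [this, hτβ, hα0]
  · intro α hα; dsimp only; rw [inv_mul_cancel_right]
  · intro τ hτ; dsimp only; rw [mul_inv_cancel_right]

open scoped Classical in
lemma cle_eq (hc : β.IsCycle) (hs : β.support = Finset.univ) (k : ℕ) :
    cle k β = n * (Finset.univ.filter fun δ : Equiv.Perm (Fin n) =>
      δ.IsCycle ∧ δ.support.card = n ∧ hamming β δ ≤ k).card := by
  classical
  set D := Finset.univ.filter fun δ : Equiv.Perm (Fin n) =>
      δ.IsCycle ∧ δ.support.card = n ∧ hamming β δ ≤ k with hD
  unfold cle
  rw [Finset.card_eq_sum_card_fiberwise (f := fun α => α⁻¹ * β * α) (t := D) ?_]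
  · rw [Finset.sum_congr rfl (g := fun _ => n) ?_, Finset.sum_const, smul_eq_mul,
      Nat.mul_comm]
    intro δ hδ
    simp only [hD, Finset.mem_filter, Finset.mem_univ, true_and] at hδ
    show _ = n
    refine Eq.trans ?_ (fiber_card hc hs hδ.1 hδ.2.1)
    congr 1
    ext α
    simp only [Finset.mem_filter, Finset.mem_univ, true_and]
    constructor
    · tauto
    · intro hα
      refine ⟨?_, hα⟩
      rw [hamming_comm_eq, hα]
      exact hδ.2.2
  · intro α hα
    simp only [Finset.mem_coe, Finset.mem_filter, Finset.mem_univ, true_and] at hα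
    simp only [hD, Finset.mem_coe, Finset.mem_filter, Finset.mem_univ, true_and]
    have hconj : α⁻¹ * β * α = α⁻¹ * β * (α⁻¹)⁻¹ := by rw [inv_inv]
    refine ⟨by rw [hconj]; exact hc.conj, ?_, ?_⟩
    · rw [hconj]
      have := Equiv.Perm.card_support_conj (σ := α⁻¹) (τ := β)
      rw [this, hs, Finset.card_univ, Fintype.card_fin]
    · rw [← hamming_comm_eq]; exact hα

end
section
variable {n : ℕ} {β : Equiv.Perm (Fin n)}

lemma hamming_eq' (f g : Equiv.Perm (Fin n)) :
    hamming f g = (f⁻¹ * g).support.card := by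
  rw [hamming_eq, ← Equiv.Perm.support_inv, mul_inv_rev, inv_inv]

lemma dist_le_two (hc : β.IsCycle) (hs : β.support = Finset.univ)
    {δ : Equiv.Perm (Fin n)} (hcy : δ.IsCycle) (hcd : δ.support.card = n)
    (h : hamming β δ ≤ 2) : δ = β := by
  have hβn : β.support.card = n := by rw [hs, Finset.card_univ, Fintype.card_fin]
  rw [hamming_eq'] at h
  have hne1 := Equiv.Perm.card_support_ne_one (β⁻¹ * δ)
  have hsign : Equiv.Perm.sign β = Equiv.Perm.sign δ := by
    rw [hc.sign, hcy.sign, hβn, hcd]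
  have hcases : (β⁻¹ * δ).support.card = 0 ∨ (β⁻¹ * δ).support.card = 2 := by omega
  rcases hcases with h0 | h2
  · have : (β⁻¹ * δ).support = ∅ := Finset.card_eq_zero.mp h0
    have h1 : β⁻¹ * δ = 1 := Equiv.Perm.support_eq_empty_iff.mp this
    exact (inv_mul_eq_one.mp h1).symm
  · exfalso
    obtain ⟨x, y, hxy, hσ⟩ := Equiv.Perm.card_support_eq_two.mp h2
    have e1 : Equiv.Perm.sign (β⁻¹ * δ) = 1 := by
      rw [map_mul, map_inv, hsign, inv_mul_cancel]
    rw [hσ, Equiv.Perm.sign_swap hxy] at e1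
    exact absurd e1 (by decide)

open scoped Classical in
lemma D_card_le_two (hc : β.IsCycle) (hs : β.support = Finset.univ)
    {k : ℕ} (hk : k ≤ 2) :
    (Finset.univ.filter fun δ : Equiv.Perm (Fin n) =>
      δ.IsCycle ∧ δ.support.card = n ∧ hamming β δ ≤ k).card = 1 := by
  have hβn : β.support.card = n := by rw [hs, Finset.card_univ, Fintype.card_fin]
  have hset : (Finset.univ.filter fun δ : Equiv.Perm (Fin n) =>
      δ.IsCycle ∧ δ.support.card = n ∧ hamming β δ ≤ k) = {β} := by
    ext δ
    simp only [Finset.mem_filter, Finset.mem_univ, true_and, Finset.mem_singleton]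
    constructor
    · rintro ⟨h1, h2, h3⟩
      exact dist_le_two hc hs h1 h2 (le_trans h3 hk)
    · rintro rfl
      exact ⟨hc, hβn, by rw [hamming_self]; omega⟩
  rw [hset, Finset.card_singleton]

open scoped Classical in
lemma D3_card (hc : β.IsCycle) (hs : β.support = Finset.univ) :
    (Finset.univ.filter fun δ : Equiv.Perm (Fin n) =>
      δ.IsCycle ∧ δ.support.card = n ∧ hamming β δ ≤ 3).card = Nat.choose n 3 + 1 := by
  classical
  have hβn : β.support.card = n := by rw [hs, Finset.card_univ, Fintype.card_fin]
  set E := Finset.univ.filter (fun δ : Equiv.Perm (Fin n) =>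
      δ.IsCycle ∧ δ.support.card = n ∧ hamming β δ = 3) with hE
  have hins : (Finset.univ.filter fun δ : Equiv.Perm (Fin n) =>
      δ.IsCycle ∧ δ.support.card = n ∧ hamming β δ ≤ 3) = insert β E := by
    ext δ
    simp only [hE, Finset.mem_filter, Finset.mem_univ, true_and, Finset.mem_insert]
    constructor
    · rintro ⟨h1, h2, h3⟩
      rcases Nat.lt_or_ge (hamming β δ) 3 with hlt | hge
      · exact Or.inl (dist_le_two hc hs h1 h2 (by omega))
      · exact Or.inr ⟨h1, h2, by omega⟩
    · rintro (rfl | ⟨h1, h2, h3⟩)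
      · exact ⟨hc, hβn, by rw [hamming_self]; omega⟩
      · exact ⟨h1, h2, by omega⟩
  have hβE : β ∉ E := by
    simp only [hE, Finset.mem_filter, Finset.mem_univ, true_and, hamming_self]
    rintro ⟨-, -, h⟩
    omega
  rw [hins, Finset.card_insert_of_notMem hβE]
  have hEcard : E.card = Nat.choose n 3 := by
    have := Finset.card_powersetCard 3 (Finset.univ : Finset (Fin n))
    rw [Finset.card_univ, Fintype.card_fin] at this
    rw [← this]
    apply Finset.card_bij (fun δ _ => (β⁻¹ * δ).support)
    · intro δ hδ
      simp only [hE, Finset.mem_filter, Finset.mem_univ, true_and] at hδ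
      rw [Finset.mem_powersetCard]
      exact ⟨Finset.subset_univ _, by rw [← hamming_eq']; exact hδ.2.2⟩
    · intro δ₁ h₁ δ₂ h₂ heq
      simp only [hE, Finset.mem_filter, Finset.mem_univ, true_and] at h₁ h₂
      exact unique_dist3 hc hs h₁.1 h₁.2.1 h₂.1 h₂.2.1
        (by rw [← hamming_eq']; exact h₁.2.2) heq
    · intro S hS
      rw [Finset.mem_powersetCard] at hS
      obtain ⟨a, i, j, hi, hij, hjn, hSeq⟩ := param hc hs hS.2
      obtain ⟨hcy, hsupp⟩ := fwd_good hc hs a hi hij hjn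
      have hab : a ≠ (β ^ i) a := by
        have := bpne hc hs (show 0 < n by omega) (show i < n by omega)
          (show (0:ℕ) ≠ i by omega) (a := a)
        simpa using this
      have hac : a ≠ (β ^ j) a := by
        have := bpne hc hs (show 0 < n by omega) hjn (show (0:ℕ) ≠ j by omega) (a := a)
        simpa using this
      have hbc : (β ^ i) a ≠ (β ^ j) a := bpne hc hs (by omega) hjn (by omega)
      refine ⟨β * tc a ((β ^ i) a) ((β ^ j) a), ?_, ?_⟩
      · simp only [hE, Finset.mem_filter, Finset.mem_univ, true_and]
        refine ⟨hcy, by rw [hsupp, Finset.card_univ, Fintype.card_fin], ?_⟩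
        rw [hamming_eq', inv_mul_cancel_left, tc_support hab hac hbc, ← hSeq, hS.2]
      · rw [inv_mul_cancel_left, tc_support hab hac hbc, hSeq]
  omega

end

theorem cle_equality_small_k_and_n (n : ℕ) (β : Equiv.Perm (Fin n))
    (hβ : β.IsCycle ∧ β.support.card = n) :
    (∀ k : ℕ, (k = 1 ∨ k = 2 ∨ k = 3) → k ≤ n →
      cle k β = n * Nat.choose n k * Nat.factorial (k - 1) - n * Nat.choose n k + n) ∧
    cle n β = n * Nat.choose n n * Nat.factorial (n - 1) - n * Nat.choose n n + n := by
  obtain ⟨hc, hn⟩ := hβ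
  have hs : β.support = Finset.univ :=
    Finset.eq_univ_of_card _ (by rw [hn, Fintype.card_fin])
  have hn2 : 2 ≤ n := by
    have := hc.two_le_card_support
    omega
  constructor
  · intro k hk hkn
    rcases hk with rfl | rfl | rfl
    · rw [cle_eq hc hs 1, D_card_le_two hc hs (by omega)]
      simp [Nat.choose_one_right, Nat.factorial]
    · rw [cle_eq hc hs 2, D_card_le_two hc hs (by omega)]
      simp [Nat.factorial]
    · rw [cle_eq hc hs 3, D3_card hc hs]
      have h2 : Nat.factorial (3 - 1) = 2 := rfl
      rw [h2]
      have h3 : n * Nat.choose n 3 * 2 = n * Nat.choose n 3 + n * Nat.choose n 3 := by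
        ring
      rw [h3, Nat.add_sub_cancel, Nat.mul_add, mul_one]
  · have hall : ∀ α : Equiv.Perm (Fin n), hamming (α * β) (β * α) ≤ n := by
      intro α
      calc hamming (α * β) (β * α) ≤ (Finset.univ : Finset (Fin n)).card :=
            Finset.card_filter_le _ _
        _ = n := by rw [Finset.card_univ, Fintype.card_fin]
    have hcle : cle n β = Nat.factorial n := by
      unfold cle
      rw [Finset.filter_true_of_mem (fun α _ => hall α), Finset.card_univ,
        Fintype.card_perm, Fintype.card_fin]
    rw [hcle, Nat.choose_self]
    have h1 : n * (Nat.factorial (n - 1)) = Nat.factorial n :=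
      Nat.mul_factorial_pred (by omega)
    have h2 : n ≤ Nat.factorial n := Nat.self_le_factorial n
    rw [mul_one, h1]
    omega
end

section
/- Let β₂ be a transposition in S_n. Then: (1) c(0, β₂) = 2(n−2)! for n ≥ 2; (2) c(3, β₂) = 4(n−2)·(n−2)! for n ≥ 3; (3) c(4, β₂) = (n−2)(n−3)·(n−2)! for n ≥ 4; (4) c(k, β₂) = 0 for every k with 5 ≤ k ≤ n. -/
open Equiv Finset

/-- `kcomm k β` is the number of permutations `α` that `k`-commute with `β`,
i.e. with `H(αβ, βα) = k`. -/
def kcomm {n : ℕ} (k : ℕ) (β : Equiv.Perm (Fin n)) : ℕ :=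
  (Finset.univ.filter fun α : Equiv.Perm (Fin n) =>
    hamming (α * β) (β * α) = k).card

lemma hamA {n : ℕ} (α β : Equiv.Perm (Fin n)) :
    hamming (α * β) (β * α) = hamming (α * β * α⁻¹) β := by
  unfold hamming
  apply Finset.card_bij' (fun a _ => α a) (fun b _ => α⁻¹ b)
  · intro a ha
    simp only [mem_filter, mem_univ, true_and] at ha ⊢
    simpa using ha
  · intro b hb
    simp only [mem_filter, mem_univ, true_and] at hb ⊢
    simpa using hb
  · intro a _; simp
  · intro b _; simp

lemma hamB {n : ℕ} {p q i j : Fin n} (hpq : p ≠ q) (hij : i ≠ j) :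
    hamming (swap p q) (swap i j) =
      if ({p, q} : Finset (Fin n)) = {i, j} then 0
      else ({p, q, i, j} : Finset (Fin n)).card := by
  split_ifs with h
  · have : swap p q = swap i j := by
      have hp : p ∈ ({i,j} : Finset (Fin n)) := h ▸ (by simp)
      have hq : q ∈ ({i,j} : Finset (Fin n)) := h ▸ (by simp)
      simp only [mem_insert, mem_singleton] at hp hq
      rcases hp with rfl | rfl <;> rcases hq with rfl | rfl
      · exact absurd rfl hpq
      · rfl
      · exact swap_comm _ _
      · exact absurd rfl hpq
    simp [hamming, this]
  · unfold hamming
    congr 1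
    ext a
    simp only [mem_filter, mem_univ, true_and, mem_insert, mem_singleton]
    constructor
    · intro hne
      by_contra hc
      push_neg at hc
      obtain ⟨h1, h2, h3, h4⟩ := hc
      rw [swap_apply_of_ne_of_ne h1 h2, swap_apply_of_ne_of_ne h3 h4] at hne
      exact hne rfl
    · intro ha
      have key : ¬ (p = i ∧ q = j) ∧ ¬ (p = j ∧ q = i) := by
        constructor <;> rintro ⟨rfl, rfl⟩
        · exact h rfl
        · exact h (by rw [Finset.pair_comm])
      rcases ha with rfl | rfl | rfl | rfl <;>
        simp only [swap_apply_left, swap_apply_right, swap_apply_def] <;>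
        split_ifs <;> simp_all <;> tauto

lemma stab_card {n : ℕ} {i j : Fin n} (hij : i ≠ j) :
    (Finset.univ.filter fun α : Equiv.Perm (Fin n) => α i = i ∧ α j = j).card
      = Nat.factorial (n - 2) := by
  have e1 : {α : Equiv.Perm (Fin n) // α i = i ∧ α j = j} ≃
      {f : Equiv.Perm (Fin n) // ∀ a, ¬(a ≠ i ∧ a ≠ j) → f a = a} := by
    apply Equiv.subtypeEquivRight
    intro f
    constructor
    · rintro ⟨h1, h2⟩ a ha
      push_neg at ha
      by_cases hai : a = i
      · subst hai; exact h1
      · rw [ha hai]; exact h2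
    · intro h
      exact ⟨h i (by simp), h j (by simp)⟩
  have e2 := (Equiv.Perm.subtypeEquivSubtypePerm (fun a : Fin n => a ≠ i ∧ a ≠ j)).symm
  have hc : Fintype.card {a : Fin n // a ≠ i ∧ a ≠ j} = n - 2 := by
    rw [Fintype.card_subtype]
    have : (Finset.univ.filter fun a : Fin n => a ≠ i ∧ a ≠ j)
        = Finset.univ \ {i, j} := by
      ext a; simp [and_comm]
    rw [this, Finset.card_sdiff_of_subset (by simp)]
    simp [Finset.card_insert_of_notMem, hij]
  calc (Finset.univ.filter fun α : Equiv.Perm (Fin n) => α i = i ∧ α j = j).card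
      = Fintype.card {α : Equiv.Perm (Fin n) // α i = i ∧ α j = j} := by
        rw [Fintype.card_subtype]
    _ = Fintype.card (Equiv.Perm {a : Fin n // a ≠ i ∧ a ≠ j}) :=
        Fintype.card_congr (e1.trans e2.symm.symm)
    _ = Nat.factorial (n - 2) := by rw [Fintype.card_perm, hc]

lemma fiber_card_s11 {n : ℕ} {i j p q : Fin n} (hij : i ≠ j) (hpq : p ≠ q) :
    (Finset.univ.filter fun α : Equiv.Perm (Fin n) => α i = p ∧ α j = q).card
      = Nat.factorial (n - 2) := by
  set σ : Equiv.Perm (Fin n) := swap (swap i p j) q * swap i p with hσ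
  have hσi : σ i = p := by
    have h1 : (swap i p) i = p := swap_apply_left _ _
    have hne1 : p ≠ swap i p j := by
      intro hcontra
      exact hij (by simpa [h1, hcontra] using (swap i p).injective (h1.trans hcontra))
    simp only [hσ, Equiv.Perm.mul_apply, h1]
    exact swap_apply_of_ne_of_ne hne1 hpq
  have hσj : σ j = q := by
    simp only [hσ, Equiv.Perm.mul_apply]
    exact swap_apply_left _ _
  rw [← stab_card hij]
  apply Finset.card_bij' (fun α _ => σ⁻¹ * α) (fun α _ => σ * α)
  · intro α hα
    simp only [mem_filter, mem_univ, true_and, Equiv.Perm.mul_apply] at hα ⊢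
    rw [hα.1, hα.2, ← hσi, ← hσj]
    simp
  · intro α hα
    simp only [mem_filter, mem_univ, true_and, Equiv.Perm.mul_apply] at hα ⊢
    rw [hα.1, hα.2, hσi, hσj]
    exact ⟨rfl, rfl⟩
  · intro α _; simp [mul_assoc]
  · intro α _; simp [mul_assoc]

lemma count_lemma {n : ℕ} {i j : Fin n} (hij : i ≠ j) (k : ℕ) :
    kcomm k (swap i j) =
      ((Finset.univ ×ˢ Finset.univ).filter fun pq : Fin n × Fin n =>
        pq.1 ≠ pq.2 ∧ hamming (swap pq.1 pq.2) (swap i j) = k).card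
      * Nat.factorial (n - 2) := by
  have key : ∀ α : Equiv.Perm (Fin n),
      hamming (α * swap i j) (swap i j * α) = hamming (swap (α i) (α j)) (swap i j) := by
    intro α
    rw [hamA, swap_apply_apply]
  unfold kcomm
  set t := ((Finset.univ ×ˢ Finset.univ).filter fun pq : Fin n × Fin n =>
      pq.1 ≠ pq.2 ∧ hamming (swap pq.1 pq.2) (swap i j) = k) with ht
  rw [Finset.card_eq_sum_card_fiberwise
    (f := fun α : Equiv.Perm (Fin n) => (α i, α j)) (t := t) ?_]
  · rw [Finset.sum_congr rfl (g := fun _ => Nat.factorial (n - 2)) ?_, Finset.sum_const,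
      smul_eq_mul]
    intro pq hpq
    rw [ht, mem_filter] at hpq
    obtain ⟨-, hne, hham⟩ := hpq
    have : (Finset.univ.filter fun α : Equiv.Perm (Fin n) =>
          hamming (α * swap i j) (swap i j * α) = k).filter
          (fun α => (α i, α j) = pq)
        = Finset.univ.filter fun α : Equiv.Perm (Fin n) => α i = pq.1 ∧ α j = pq.2 := by
      ext α
      simp only [mem_filter, mem_univ, true_and, Prod.ext_iff]
      constructor
      · exact fun h => h.2
      · rintro ⟨h1, h2⟩
        refine ⟨?_, h1, h2⟩
        rw [key, h1, h2, hham]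
    rw [this, fiber_card_s11 hij hne]
  · intro α hα
    rw [Finset.mem_coe, mem_filter] at hα
    rw [Finset.mem_coe, ht, mem_filter]
    refine ⟨by simp, fun h => hij (α.injective h), ?_⟩
    rw [← key, hα.2]

theorem c_k_of_transposition (n : ℕ) (β : Equiv.Perm (Fin n)) (hβ : β.IsSwap) :
    (2 ≤ n → kcomm 0 β = 2 * Nat.factorial (n - 2)) ∧
    (3 ≤ n → kcomm 3 β = 4 * (n - 2) * Nat.factorial (n - 2)) ∧
    (4 ≤ n → kcomm 4 β = (n - 2) * (n - 3) * Nat.factorial (n - 2)) ∧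
    (∀ k, 5 ≤ k → k ≤ n → kcomm k β = 0) := by
  obtain ⟨i, j, hij, rfl⟩ := hβ
  -- basic card facts
  have hcompl : (Finset.univ \ ({i, j} : Finset (Fin n))).card = n - 2 := by
    rw [Finset.card_sdiff_of_subset (by simp)]
    simp [Finset.card_insert_of_notMem, hij]
  have hij2 : ({i, j} : Finset (Fin n)).card = 2 := by
    rw [Finset.card_insert_of_notMem (by simpa using hij), Finset.card_singleton]
  refine ⟨?_, ?_, ?_, ?_⟩
  · -- k = 0
    intro _
    rw [count_lemma hij 0]
    congr 1
    have : ((Finset.univ ×ˢ Finset.univ).filter fun pq : Fin n × Fin n =>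
        pq.1 ≠ pq.2 ∧ hamming (swap pq.1 pq.2) (swap i j) = 0)
        = {(i, j), (j, i)} := by
      ext ⟨p, q⟩
      simp only [mem_filter, Finset.mem_product, mem_univ, true_and, mem_insert,
        mem_singleton, Prod.mk.injEq]
      constructor
      · rintro ⟨hpq, hham⟩
        rw [hamB hpq hij] at hham
        split_ifs at hham with h
        · have hp : p ∈ ({i,j} : Finset (Fin n)) := h ▸ (by simp)
          have hq : q ∈ ({i,j} : Finset (Fin n)) := h ▸ (by simp)
          simp only [mem_insert, mem_singleton] at hp hq
          rcases hp with rfl | rfl <;> rcases hq with rfl | rfl <;> tauto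
        · exact absurd hham (by simp [Finset.card_eq_zero, Finset.insert_ne_empty])
      · rintro (⟨rfl, rfl⟩ | ⟨rfl, rfl⟩)
        · refine ⟨hij, ?_⟩
          rw [hamB hij hij]
          simp
        · refine ⟨hij.symm, ?_⟩
          rw [hamB hij.symm hij]
          rw [if_pos (Finset.pair_comm _ _)]
    rw [this]
    rw [Finset.card_insert_of_notMem (by simp [Prod.ext_iff, hij]), Finset.card_singleton]
  · -- k = 3
    intro hn
    rw [count_lemma hij 3]
    have : ((Finset.univ ×ˢ Finset.univ).filter fun pq : Fin n × Fin n =>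
        pq.1 ≠ pq.2 ∧ hamming (swap pq.1 pq.2) (swap i j) = 3)
        = (({i, j} : Finset (Fin n)) ×ˢ (Finset.univ \ {i, j})) ∪
          ((Finset.univ \ {i, j}) ×ˢ ({i, j} : Finset (Fin n))) := by
      ext ⟨p, q⟩
      simp only [mem_filter, Finset.mem_product, mem_univ, true_and, Finset.mem_union,
        Finset.mem_sdiff, Finset.mem_product]
      constructor
      · rintro ⟨hpq, hham⟩
        rw [hamB hpq hij] at hham
        split_ifs at hham with h
        by_cases hp : p ∈ ({i, j} : Finset (Fin n)) <;>
          by_cases hq : q ∈ ({i, j} : Finset (Fin n))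
        · -- both in: {p,q} = {i,j}
          exfalso
          apply h
          simp only [mem_insert, mem_singleton] at hp hq
          rcases hp with rfl | rfl <;> rcases hq with rfl | rfl <;>
            first | exact absurd rfl hpq | rfl | exact Finset.pair_comm _ _
        · exact Or.inl ⟨hp, hq⟩
        · exact Or.inr ⟨hp, hq⟩
        · -- both out: card = 4
          exfalso
          simp only [mem_insert, mem_singleton, not_or] at hp hq
          have : ({p, q, i, j} : Finset (Fin n)).card = 4 := by
            rw [Finset.card_insert_of_notMem (by simp [hpq, hp.1, hp.2]),
              Finset.card_insert_of_notMem (by simp [hq.1, hq.2]),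
              Finset.card_insert_of_notMem (by simpa using hij), Finset.card_singleton]
          omega
      · intro h
        have hset : ∃ p' q', p' ∈ ({i,j} : Finset (Fin n)) ∧ q' ∉ ({i,j} : Finset (Fin n)) ∧
            ({p, q, i, j} : Finset (Fin n)) = {q', i, j} ∧ p ≠ q ∧
            ({p, q} : Finset (Fin n)) ≠ {i, j} := by
          rcases h with ⟨hp, hq⟩ | ⟨hp, hq⟩
          · refine ⟨p, q, hp, hq, ?_, ?_, ?_⟩
            · simp only [mem_insert, mem_singleton] at hp
              rcases hp with rfl | rfl
              · ext a; simp; try tauto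
              · ext a; simp; try tauto
            · rintro rfl; exact hq hp
            · intro hc
              exact hq (hc ▸ (by simp))
          · refine ⟨q, p, hq, hp, ?_, ?_, ?_⟩
            · simp only [mem_insert, mem_singleton] at hq
              rcases hq with rfl | rfl
              · ext a; simp; try tauto
              · ext a; simp; try tauto
            · rintro rfl; exact hp hq
            · intro hc
              exact hp (hc ▸ (by simp))
        obtain ⟨p', q', hp', hq', hset, hpq, hne⟩ := hset
        refine ⟨hpq, ?_⟩
        rw [hamB hpq hij, if_neg hne, hset]
        simp only [mem_insert, mem_singleton, not_or] at hq'
        rw [Finset.card_insert_of_notMem (by simp [hq'.1, hq'.2]),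
          Finset.card_insert_of_notMem (by simpa using hij), Finset.card_singleton]
    rw [this, Finset.card_union_of_disjoint, Finset.card_product, Finset.card_product,
      hij2, hcompl]
    · ring
    · rw [Finset.disjoint_left]
      rintro ⟨p, q⟩ h1 h2
      simp only [Finset.mem_product, Finset.mem_sdiff] at h1 h2
      exact h2.1.2 h1.1
  · -- k = 4
    intro hn
    rw [count_lemma hij 4]
    have : ((Finset.univ ×ˢ Finset.univ).filter fun pq : Fin n × Fin n =>
        pq.1 ≠ pq.2 ∧ hamming (swap pq.1 pq.2) (swap i j) = 4)
        = (Finset.univ \ ({i, j} : Finset (Fin n))).offDiag := by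
      ext ⟨p, q⟩
      simp only [mem_filter, Finset.mem_product, mem_univ, true_and, Finset.mem_offDiag,
        Finset.mem_sdiff]
      constructor
      · rintro ⟨hpq, hham⟩
        rw [hamB hpq hij] at hham
        split_ifs at hham with h
        by_cases hp : p ∈ ({i, j} : Finset (Fin n)) <;>
          by_cases hq : q ∈ ({i, j} : Finset (Fin n))
        · exfalso
          apply h
          simp only [mem_insert, mem_singleton] at hp hq
          rcases hp with rfl | rfl <;> rcases hq with rfl | rfl <;>
            first | exact absurd rfl hpq | rfl | exact Finset.pair_comm _ _
        · -- p in, q out: card 3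
          exfalso
          have hcard : ({p, q, i, j} : Finset (Fin n)) = {q, i, j} := by
            simp only [mem_insert, mem_singleton] at hp
            rcases hp with rfl | rfl
            · ext a; simp; try tauto
            · ext a; simp; try tauto
          simp only [mem_insert, mem_singleton, not_or] at hq
          rw [hcard, Finset.card_insert_of_notMem (by simp [hq.1, hq.2]),
            Finset.card_insert_of_notMem (by simpa using hij), Finset.card_singleton] at hham
          omega
        · exfalso
          have hcard : ({p, q, i, j} : Finset (Fin n)) = {p, i, j} := by
            simp only [mem_insert, mem_singleton] at hq
            rcases hq with rfl | rfl
            · ext a; simp; try tauto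
            · ext a; simp; try tauto
          simp only [mem_insert, mem_singleton, not_or] at hp
          rw [hcard, Finset.card_insert_of_notMem (by simp [hp.1, hp.2]),
            Finset.card_insert_of_notMem (by simpa using hij), Finset.card_singleton] at hham
          omega
        · exact ⟨hp, hq, hpq⟩
      · rintro ⟨hp, hq, hpq⟩
        refine ⟨hpq, ?_⟩
        have hne : ({p, q} : Finset (Fin n)) ≠ {i, j} := fun hc => hp (hc ▸ (by simp))
        simp only [mem_insert, mem_singleton, not_or] at hp hq
        rw [hamB hpq hij, if_neg hne]
        rw [Finset.card_insert_of_notMem (by simp [hpq, hp.1, hp.2]),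
          Finset.card_insert_of_notMem (by simp [hq.1, hq.2]),
          Finset.card_insert_of_notMem (by simpa using hij), Finset.card_singleton]
    rw [this, Finset.offDiag_card, hcompl]
    congr 1
    obtain ⟨m, rfl⟩ : ∃ m, n = m + 4 := ⟨n - 4, by omega⟩
    have e1 : m + 4 - 2 = m + 2 := by omega
    have e2 : m + 4 - 3 = m + 1 := by omega
    rw [e1, e2]
    exact Nat.sub_eq_of_eq_add (by ring)
  · -- k ≥ 5
    intro k hk5 hkn
    rw [count_lemma hij k]
    convert Nat.zero_mul _
    rw [Finset.card_eq_zero, Finset.filter_eq_empty_iff]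
    rintro ⟨p, q⟩ -
    rintro ⟨hpq, hham⟩
    rw [hamB hpq hij] at hham
    split_ifs at hham with h
    · omega
    · have hham' : ({p, q, i, j} : Finset (Fin n)).card = k := hham
      have : ({p, q, i, j} : Finset (Fin n)).card ≤ 4 := by
        calc ({p, q, i, j} : Finset (Fin n)).card
            ≤ ({q, i, j} : Finset (Fin n)).card + 1 := Finset.card_insert_le _ _
          _ ≤ ({i, j} : Finset (Fin n)).card + 1 + 1 := by
              exact Nat.add_le_add_right (Finset.card_insert_le _ _) 1
          _ ≤ ({j} : Finset (Fin n)).card + 1 + 1 + 1 := by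
              exact Nat.add_le_add_right (Nat.add_le_add_right (Finset.card_insert_le _ _) 1) 1
          _ = 4 := by simp
      omega
end

section
/- Let n ≥ 2, let α ∈ S_n, and let m ∈ {3, 4}. Then α has exactly m points on the boundary of its bounding square if and only if α m-commutes with the transposition τ = (1 n), i.e., |{i ∈ {1,…,n} : i ∈ {1,n} or α(i) ∈ {1,n}}| = m if and only if H(ατ, τα) = m. -/
theorem aux_boundary {n : ℕ} (α : Equiv.Perm (Fin n)) (z e : Fin n) (hze : z ≠ e)
    (m : ℕ) (hm : m = 3 ∨ m = 4) :
    (Finset.univ.filter fun i : Fin n => i = z ∨ i = e ∨ α i = z ∨ α i = e).card = m ↔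
      hamming (α * Equiv.swap z e) (Equiv.swap z e * α) = m := by
  classical
  set τ := Equiv.swap z e with hτ
  have hτz : τ z = e := Equiv.swap_apply_left z e
  have hτe : τ e = z := Equiv.swap_apply_right z e
  have hτo : ∀ x : Fin n, x ≠ z → x ≠ e → τ x = x := fun x hx hx' =>
    Equiv.swap_apply_of_ne_of_ne hx hx'
  have hτne : ∀ x : Fin n, τ x ≠ x ↔ x = z ∨ x = e := by
    intro x
    rw [Equiv.swap_apply_ne_self_iff]
    tauto
  have hD : hamming (α * τ) (τ * α) =
      (Finset.univ.filter fun a : Fin n => α (τ a) ≠ τ (α a)).card := rfl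
  rw [hD]
  by_cases hz : α e ≠ τ (α z)
  · have he' : α z ≠ τ (α e) := by
      intro h
      exact hz (by rw [h]; exact (Equiv.swap_apply_self z e (α e)).symm)
    have hset : (Finset.univ.filter fun i : Fin n => i = z ∨ i = e ∨ α i = z ∨ α i = e)
        = Finset.univ.filter fun a : Fin n => α (τ a) ≠ τ (α a) := by
      ext i
      simp only [Finset.mem_filter, Finset.mem_univ, true_and]
      by_cases hiz : i = z
      · subst hiz
        simp [hτz, hz]
      · by_cases hie : i = e
        · subst hie
          simp [hτe, he']
        · rw [hτo i hiz hie, ne_comm, hτne]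
          tauto
    rw [hset]
  · push_neg at hz
    have hαz : α z = z ∨ α z = e := by
      by_contra h
      push_neg at h
      rw [hτo _ h.1 h.2] at hz
      exact hze (α.injective hz).symm
    have hαe : α e = z ∨ α e = e := by
      rcases hαz with h | h <;> rw [h] at hz <;> simp [hτz, hτe] at hz <;> tauto
    have key : ∀ i : Fin n, (α i = z ∨ α i = e) → (i = z ∨ i = e) := by
      intro i hi
      rcases hαz with h | h
      · have hαe' : α e = e := by
          rcases hαe with h' | h'
          · exact absurd (α.injective (h.trans h'.symm)) hze
          · exact h'
        rcases hi with hi | hi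
        · exact Or.inl (α.injective (hi.trans h.symm))
        · exact Or.inr (α.injective (hi.trans hαe'.symm))
      · have hαe' : α e = z := by
          rcases hαe with h' | h'
          · exact h'
          · exact absurd (α.injective (h.trans h'.symm)) hze
        rcases hi with hi | hi
        · exact Or.inr (α.injective (hi.trans hαe'.symm))
        · exact Or.inl (α.injective (hi.trans h.symm))
    have hS : (Finset.univ.filter fun i : Fin n => i = z ∨ i = e ∨ α i = z ∨ α i = e)
        = {z, e} := by
      ext i
      simp only [Finset.mem_filter, Finset.mem_univ, true_and, Finset.mem_insert,
        Finset.mem_singleton]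
      constructor
      · rintro (h | h | h | h)
        · exact Or.inl h
        · exact Or.inr h
        · exact key i (Or.inl h)
        · exact key i (Or.inr h)
      · tauto
    have hDe : (Finset.univ.filter fun a : Fin n => α (τ a) ≠ τ (α a)) = ∅ := by
      ext a
      simp only [Finset.mem_filter, Finset.mem_univ, true_and, Finset.notMem_empty,
        iff_false, not_not, ne_eq, Decidable.not_not]
      by_cases haz : a = z
      · rw [haz, hτz]; exact hz
      · by_cases hae : a = e
        · rw [hae, hτe]
          rcases hαz with h | h
          · have hαe' : α e = e := by
              rcases hαe with h' | h'
              · exact absurd (α.injective (h.trans h'.symm)) hze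
              · exact h'
            rw [h, hαe', hτe]
          · have hαe' : α e = z := by
              rcases hαe with h' | h'
              · exact h'
              · exact absurd (α.injective (h.trans h'.symm)) hze
            rw [h, hαe', hτz]
        · rw [hτo a haz hae]
          have : α a ≠ z ∧ α a ≠ e := by
            constructor <;> intro hc
            · rcases key a (Or.inl hc) with h | h
              · exact haz h
              · exact hae h
            · rcases key a (Or.inr hc) with h | h
              · exact haz h
              · exact hae h
          rw [hτo _ this.1 this.2]
    rw [hS, hDe]
    rw [Finset.card_pair hze, Finset.card_empty]
    rcases hm with hm | hm <;> omega

theorem boundary_m_points_iff_m_commutes (n : ℕ) (hn : 2 ≤ n)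
    (α : Equiv.Perm (Fin n)) (m : ℕ) (hm : m = 3 ∨ m = 4) :
    (Finset.univ.filter fun i : Fin n =>
        i = (⟨0, by omega⟩ : Fin n) ∨ i = (⟨n - 1, by omega⟩ : Fin n) ∨
        α i = (⟨0, by omega⟩ : Fin n) ∨ α i = (⟨n - 1, by omega⟩ : Fin n)).card = m ↔
      hamming
        (α * Equiv.swap (⟨0, by omega⟩ : Fin n) (⟨n - 1, by omega⟩ : Fin n))
        (Equiv.swap (⟨0, by omega⟩ : Fin n) (⟨n - 1, by omega⟩ : Fin n) * α) = m := by
  have hze : (⟨0, by omega⟩ : Fin n) ≠ (⟨n - 1, by omega⟩ : Fin n) := by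
    simp [Fin.ext_iff]
    omega
  exact aux_boundary α _ _ hze m hm
end

section
/- Let β be an n-cycle in S_n and let k be an integer with 0 ≤ k ≤ n. Then c(k, β) = n·C(n,k)·D(k), where C(n,k) is the binomial coefficient and D(k) is the number of cyclic permutations of {1,…,k} with no point i mapped to i+1 (mod k). -/
/-- `D k` is the number of cyclic permutations `σ` of `{1, …, k}` (permutations
consisting of a single `k`-cycle) such that `σ i ≠ i + 1 (mod k)` for all `i`
(OEIS A000757, with `D 0 = 1` counting the empty cyclic permutation). -/
noncomputable def D : ℕ → ℕ
  | 0 => 1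
  | (k + 1) => Nat.card {σ : Equiv.Perm (Fin (k + 1)) //
      σ.IsCycle ∧ σ.support.card = k + 1 ∧ ∀ i : Fin (k + 1), σ i ≠ i + 1}

/-- `S m` is the number of permutations of `{1, …, m}` without a succession,
i.e. with no index `i` such that `π (i+1) = π i + 1` (OEIS A000255(m-1)). -/
def S (m : ℕ) : ℕ :=
  (Finset.univ.filter fun π : Equiv.Perm (Fin m) =>
    ∀ i j : Fin m, (j : ℕ) = (i : ℕ) + 1 → ((π j : ℕ) ≠ (π i : ℕ) + 1)).card

open Equiv Equiv.Perm Finset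
open Fin.NatCast

def rotP (n : ℕ) [NeZero n] : Equiv.Perm (Fin n) := Equiv.addRight 1
lemma rotP_apply {n : ℕ} [NeZero n] (x : Fin n) : rotP n x = x + 1 := rfl
lemma rotP_pow_apply {n : ℕ} [NeZero n] (m : ℕ) (x : Fin n) : (rotP n ^ m) x = x + (m : Fin n) := by
  induction m with
  | zero => simp
  | succ m ih => rw [pow_succ', Equiv.Perm.mul_apply, ih, rotP_apply]; push_cast; open Fin.CommRing in ring

lemma rotP_eq_finRotate (m : ℕ) : rotP (m+1) = finRotate (m+1) := by
  ext x
  simp [rotP_apply, finRotate_succ_apply]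

lemma rotP_isCycle {n : ℕ} [NeZero n] (h : 2 ≤ n) : (rotP n).IsCycle := by
  obtain ⟨m, rfl⟩ : ∃ m, n = m + 1 := ⟨n-1, by omega⟩
  rw [rotP_eq_finRotate]; exact isCycle_finRotate_of_le h

lemma rotP_support {n : ℕ} [NeZero n] (h : 2 ≤ n) : (rotP n).support = univ := by
  obtain ⟨m, rfl⟩ : ∃ m, n = m + 1 := ⟨n-1, by omega⟩
  rw [rotP_eq_finRotate]; exact support_finRotate_of_le h


section
variable {n : ℕ} [NeZero n]

lemma exists_reach (B : Finset (Fin n)) (hB : B.Nonempty) (x : Fin n) : ∃ m : ℕ, (rotP n ^ m) x ∈ B := by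
  obtain ⟨b, hb⟩ := hB
  refine ⟨((b - x : Fin n) : ℕ), ?_⟩
  rw [rotP_pow_apply, Fin.cast_val_eq_self, add_comm, sub_add_cancel]
  exact hb

noncomputable def dB (B : Finset (Fin n)) (hB : B.Nonempty) (x : Fin n) : ℕ := Nat.find (exists_reach B hB x)

noncomputable def reach (B : Finset (Fin n)) (hB : B.Nonempty) (x : Fin n) : Fin n := (rotP n ^ (dB B hB x)) x

lemma reach_mem (B : Finset (Fin n)) (hB : B.Nonempty) (x : Fin n) : reach B hB x ∈ B := Nat.find_spec (exists_reach B hB x)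

lemma dB_eq_zero_iff (B : Finset (Fin n)) (hB : B.Nonempty) (x : Fin n) : dB B hB x = 0 ↔ x ∈ B := by
  unfold dB
  rw [Nat.find_eq_zero]
  simp

lemma reach_of_mem (B : Finset (Fin n)) (hB : B.Nonempty) {x : Fin n} (hx : x ∈ B) : reach B hB x = x := by
  unfold reach
  rw [(dB_eq_zero_iff B hB x).2 hx]
  simp

lemma not_mem_of_lt_dB (B : Finset (Fin n)) (hB : B.Nonempty) {x : Fin n} {j : ℕ} (hj : j < dB B hB x) : (rotP n ^ j) x ∉ B :=
  Nat.find_min (exists_reach B hB x) hj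

lemma dB_reach_eq (B : Finset (Fin n)) (hB : B.Nonempty) {x z : Fin n} {m : ℕ} (hz : (rotP n ^ m) x = z) (hzB : z ∈ B)
    (hint : ∀ j < m, (rotP n ^ j) x ∉ B) : dB B hB x = m ∧ reach B hB x = z := by
  have : dB B hB x = m := by
    unfold dB
    rw [Nat.find_eq_iff]
    exact ⟨hz ▸ hzB, fun j hj => hint j hj⟩
  refine ⟨this, ?_⟩
  unfold reach
  rw [this, hz]


lemma dB_rot (B : Finset (Fin n)) (hB : B.Nonempty) {x : Fin n} (hx : x ∉ B) :
    dB B hB (rotP n x) = dB B hB x - 1 ∧ reach B hB (rotP n x) = reach B hB x := by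
  have h0 : dB B hB x ≠ 0 := fun h => hx ((dB_eq_zero_iff B hB x).1 h)
  have key : ∀ j, (rotP n ^ j) (rotP n x) = (rotP n ^ (j+1)) x := by
    intro j
    rw [pow_succ, Equiv.Perm.mul_apply]
  apply dB_reach_eq
  · rw [key, Nat.sub_add_cancel (Nat.one_le_iff_ne_zero.2 h0)]; rfl
  · exact reach_mem B hB x
  · intro j hj
    rw [key]
    exact not_mem_of_lt_dB B hB (by omega)


lemma rotP_pow_val (m : ℕ) (x : Fin n) : (((rotP n ^ m) x : Fin n) : ℕ) = ((x : ℕ) + m) % n := by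
  rw [rotP_pow_apply]
  simp [Fin.add_def, Fin.val_natCast, Nat.add_mod_mod]

lemma mem_B_iff (B : Finset (Fin n)) {k : ℕ} (hk : B.card = k) {y : Fin n} :
    y ∈ B ↔ ∃ l : Fin k, (B.orderIsoOfFin hk l : Fin n) = y := by
  constructor
  · intro hy
    obtain ⟨l, hl⟩ := (B.orderIsoOfFin hk).surjective ⟨y, hy⟩
    exact ⟨l, by rw [hl]⟩
  · rintro ⟨l, rfl⟩
    exact (B.orderIsoOfFin hk l).2

lemma bridge (B : Finset (Fin n)) (hB : B.Nonempty) {k : ℕ} [NeZero k] (hk : B.card = k) (i : Fin k) :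
    reach B hB (rotP n ((B.orderIsoOfFin hk i : Fin n))) =
      (B.orderIsoOfFin hk (i + 1) : Fin n) := by
  obtain ⟨K, rfl⟩ : ∃ K, k = K + 1 := ⟨k - 1, by have := NeZero.ne k; omega⟩
  set e := B.orderIsoOfFin hk with he
  have hn0 : 0 < n := Nat.pos_of_ne_zero (NeZero.ne n)
  set a : ℕ := ((e i : Fin n) : ℕ) with hadef
  have han : a < n := (e i : Fin n).isLt
  have key : ∀ j : ℕ, (rotP n ^ j) (rotP n ((e i : Fin n))) = (rotP n ^ (j + 1)) ((e i : Fin n)) := by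
    intro j; rw [pow_succ, Equiv.Perm.mul_apply]
  -- monotonicity facts
  have emono : ∀ l l' : Fin (K+1), l < l' ↔ (e l : Fin n) < (e l' : Fin n) := by
    intro l l'
    exact ⟨fun h => Subtype.coe_lt_coe.2 (e.lt_iff_lt.2 h),
      fun h => e.lt_iff_lt.1 (Subtype.coe_lt_coe.1 h)⟩
  by_cases hi : (i : ℕ) + 1 < K + 1
  · -- non-wrapping case
    have hilt : i < Fin.last K := by
      rw [Fin.lt_iff_val_lt_val, Fin.val_last]; omega
    have hval : ((i + 1 : Fin (K+1)) : ℕ) = (i : ℕ) + 1 := Fin.val_add_one_of_lt hilt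
    set b : ℕ := ((e (i+1) : Fin n) : ℕ) with hbdef
    have hbn : b < n := (e (i+1) : Fin n).isLt
    have hab : a < b := by
      have : (e i : Fin n) < (e (i+1) : Fin n) := by
        rw [← emono, Fin.lt_iff_val_lt_val, hval]; omega
      rwa [Fin.lt_iff_val_lt_val] at this
    have := dB_reach_eq B hB (x := rotP n ((e i : Fin n))) (z := (e (i+1) : Fin n))
      (m := b - a - 1) ?_ (e (i+1)).2 ?_
    · exact this.2
    · apply Fin.ext
      rw [key, rotP_pow_val, hadef]
      have : a + (b - a - 1 + 1) = b := by omega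
      rw [this, Nat.mod_eq_of_lt hbn]
    · intro j hj hmem
      rw [key] at hmem
      rw [mem_B_iff B hk] at hmem
      obtain ⟨l, hl⟩ := hmem
      have hlval : ((e l : Fin n) : ℕ) = a + j + 1 := by
        rw [hl, rotP_pow_val, ← hadef, Nat.mod_eq_of_lt (by omega)]
        omega
      have h1 : i < l := by
        rw [emono, Fin.lt_iff_val_lt_val, hlval]; omega
      have h2 : l < i + 1 := by
        rw [emono, Fin.lt_iff_val_lt_val, hlval]; omega
      rw [Fin.lt_iff_val_lt_val] at h1 h2
      omega
  · -- wrapping case : i = last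
    have hi' : i = Fin.last K := by
      apply Fin.ext; rw [Fin.val_last]; have := i.isLt; omega
    have hi1 : i + 1 = 0 := by rw [hi', Fin.last_add_one]
    set b : ℕ := ((e (i+1) : Fin n) : ℕ) with hbdef
    have hba : b ≤ a := by
      have : e (i+1) ≤ e i := by
        apply (B.orderIsoOfFin hk).monotone
        rw [hi1]; exact Fin.zero_le _
      have := Subtype.coe_le_coe.2 this
      rwa [Fin.le_iff_val_le_val] at this
    have := dB_reach_eq B hB (x := rotP n ((e i : Fin n))) (z := (e (i+1) : Fin n))
      (m := n - a - 1 + b) ?_ (e (i+1)).2 ?_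
    · exact this.2
    · apply Fin.ext
      rw [key, rotP_pow_val, hadef]
      have h1 : a + (n - a - 1 + b + 1) = n + b := by omega
      rw [h1, Nat.add_mod_left, Nat.mod_eq_of_lt (by omega)]
    · intro j hj hmem
      rw [key] at hmem
      rw [mem_B_iff B hk] at hmem
      obtain ⟨l, hl⟩ := hmem
      have hlval : ((e l : Fin n) : ℕ) = (a + j + 1) % n := by
        rw [hl, rotP_pow_val, ← hadef]
        congr 1
      by_cases hcase : a + j + 1 < n
      · rw [Nat.mod_eq_of_lt hcase] at hlval
        -- e l > e i  but i is the max
        have h1 : i < l := by rw [emono, Fin.lt_iff_val_lt_val, hlval]; omega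
        rw [Fin.lt_iff_val_lt_val] at h1
        have := l.isLt
        rw [hi', Fin.val_last] at h1
        omega
      · have hmod : (a + j + 1) % n = a + j + 1 - n := by
          rw [Nat.mod_eq_sub_mod (by omega), Nat.mod_eq_of_lt (by omega)]
        rw [hmod] at hlval
        have h2 : l < i + 1 := by
          rw [emono, Fin.lt_iff_val_lt_val, hlval]; omega
        rw [hi1] at h2
        exact absurd h2 (Fin.not_lt_zero l)


variable (σ : Equiv.Perm (Fin n))

lemma gamma_pow_le (B : Finset (Fin n)) (hB : B.Nonempty) (hσ : ∀ x, x ∉ B → σ x = x)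
    {s : ℕ} {x : Fin n} (hs : s ≤ dB B hB x) :
    ((rotP n * σ) ^ s) x = (rotP n ^ s) x := by
  induction s with
  | zero => simp
  | succ s ih =>
    rw [pow_succ', Equiv.Perm.mul_apply, ih (by omega), pow_succ', Equiv.Perm.mul_apply]
    have hnot : (rotP n ^ s) x ∉ B := not_mem_of_lt_dB B hB (by omega)
    rw [Equiv.Perm.mul_apply, hσ _ hnot]

lemma gamma_pow_d (B : Finset (Fin n)) (hB : B.Nonempty) (hσ : ∀ x, x ∉ B → σ x = x)
    (x : Fin n) : ((rotP n * σ) ^ (dB B hB x)) x = reach B hB x :=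
  gamma_pow_le σ B hB hσ le_rfl

lemma gamma_not_mem (B : Finset (Fin n)) (hB : B.Nonempty) (hσ : ∀ x, x ∉ B → σ x = x)
    {s : ℕ} {x : Fin n} (hs : s < dB B hB x) : ((rotP n * σ) ^ s) x ∉ B := by
  rw [gamma_pow_le σ B hB hσ (le_of_lt hs)]
  exact not_mem_of_lt_dB B hB hs

lemma sameCycle_reach (B : Finset (Fin n)) (hB : B.Nonempty) (hσ : ∀ x, x ∉ B → σ x = x)
    (x : Fin n) : (rotP n * σ).SameCycle x (reach B hB x) :=
  ⟨(dB B hB x : ℤ), by rw [zpow_natCast, gamma_pow_d σ B hB hσ]⟩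

section transfer

variable (B : Finset (Fin n)) (hB : B.Nonempty) {k : ℕ} [NeZero k] (hk : B.card = k)
  (ρ : Equiv.Perm (Fin k))

lemma up_one (hσ : ∀ x, x ∉ B → σ x = x)
    (hrel : ∀ j : Fin k, (B.orderIsoOfFin hk (ρ j) : Fin n) = reach B hB ((rotP n * σ) (B.orderIsoOfFin hk j : Fin n)))
    (j : Fin k) :
    (rotP n * σ).SameCycle (B.orderIsoOfFin hk j : Fin n) (B.orderIsoOfFin hk (ρ j) : Fin n) := by
  rw [hrel j]
  exact Equiv.Perm.SameCycle.trans ⟨1, by simp⟩ (sameCycle_reach σ B hB hσ _)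

lemma up_pow (hσ : ∀ x, x ∉ B → σ x = x)
    (hrel : ∀ j : Fin k, (B.orderIsoOfFin hk (ρ j) : Fin n) = reach B hB ((rotP n * σ) (B.orderIsoOfFin hk j : Fin n)))
    (m : ℕ) (j : Fin k) :
    (rotP n * σ).SameCycle (B.orderIsoOfFin hk j : Fin n) (B.orderIsoOfFin hk ((ρ ^ m) j) : Fin n) := by
  induction m with
  | zero =>
    simp only [pow_zero, Equiv.Perm.one_apply]
    exact Equiv.Perm.SameCycle.refl _ _
  | succ m ih =>
    rw [pow_succ', Equiv.Perm.mul_apply]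
    exact Equiv.Perm.SameCycle.trans ih (up_one σ B hB hk ρ hσ hrel _)

lemma down (hσ : ∀ x, x ∉ B → σ x = x)
    (hrel : ∀ j : Fin k, (B.orderIsoOfFin hk (ρ j) : Fin n) = reach B hB ((rotP n * σ) (B.orderIsoOfFin hk j : Fin n)))
    (m : ℕ) : ∀ j j' : Fin k, ((rotP n * σ) ^ m) (B.orderIsoOfFin hk j : Fin n) = (B.orderIsoOfFin hk j' : Fin n) →
      ρ.SameCycle j j' := by
  induction m using Nat.strong_induction_on with
  | _ m IH =>
    intro j j' hm
    rcases Nat.eq_zero_or_pos m with h0 | hpos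
    · subst h0
      simp only [pow_zero, Equiv.Perm.one_apply] at hm
      have : j = j' := (B.orderIsoOfFin hk).injective (Subtype.coe_injective hm)
      rw [this]
    · set γ := rotP n * σ with hγ
      obtain ⟨y, hy⟩ : ∃ y, γ (B.orderIsoOfFin hk j : Fin n) = y := ⟨_, rfl⟩
      have hpt : (γ ^ (dB B hB y + 1)) (B.orderIsoOfFin hk j : Fin n) = (B.orderIsoOfFin hk (ρ j) : Fin n) := by
        rw [pow_succ, Equiv.Perm.mul_apply, hy, gamma_pow_d σ B hB hσ, hrel j, hy]
      have hmt : dB B hB y + 1 ≤ m := by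
        by_contra hc
        push_neg at hc
        have h1 : m - 1 < dB B hB y := lt_of_lt_of_le (Nat.sub_lt hpos one_pos) (Nat.lt_succ_iff.mp hc)
        have h2 : (γ ^ m) (B.orderIsoOfFin hk j : Fin n) = (γ ^ (m-1)) y := by
          rw [← hy, ← Equiv.Perm.mul_apply, ← pow_succ, Nat.sub_add_cancel hpos]
        have := gamma_not_mem σ B hB hσ h1 (x := y)
        rw [← h2, hm] at this
        exact this (B.orderIsoOfFin hk j').2
      have hrest : (γ ^ (m - (dB B hB y + 1))) (B.orderIsoOfFin hk (ρ j) : Fin n) = (B.orderIsoOfFin hk j' : Fin n) := by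
        rw [← hpt, ← Equiv.Perm.mul_apply, ← pow_add]
        rw [Nat.sub_add_cancel hmt]
        exact hm
      have : ρ.SameCycle (ρ j) j' := IH (m - (dB B hB y + 1)) (Nat.sub_lt hpos (Nat.succ_pos _)) _ _ hrest
      exact Equiv.Perm.SameCycle.trans ⟨1, by simp⟩ this

lemma trans_transfer (hσ : ∀ x, x ∉ B → σ x = x)
    (hrel : ∀ j : Fin k, (B.orderIsoOfFin hk (ρ j) : Fin n) = reach B hB ((rotP n * σ) (B.orderIsoOfFin hk j : Fin n))) :
    (∀ x y : Fin n, (rotP n * σ).SameCycle x y) ↔ (∀ j j' : Fin k, ρ.SameCycle j j') := by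
  constructor
  · intro h j j'
    obtain ⟨m, _, hm⟩ := (h (B.orderIsoOfFin hk j : Fin n) (B.orderIsoOfFin hk j' : Fin n)).exists_pow_eq'
    exact down σ B hB hk ρ hσ hrel m j j' hm
  · intro h x y
    obtain ⟨jx, hjx⟩ := (mem_B_iff B hk).1 (reach_mem B hB x)
    obtain ⟨jy, hjy⟩ := (mem_B_iff B hk).1 (reach_mem B hB y)
    obtain ⟨m, _, hm⟩ := (h jx jy).exists_pow_eq'
    have h1 : (rotP n * σ).SameCycle x (B.orderIsoOfFin hk jx : Fin n) := by
      rw [hjx]; exact sameCycle_reach σ B hB hσ x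
    have h2 : (rotP n * σ).SameCycle (B.orderIsoOfFin hk jx : Fin n) (B.orderIsoOfFin hk jy : Fin n) := by
      rw [← hm]; exact up_pow σ B hB hk ρ hσ hrel m jx
    have h3 : (rotP n * σ).SameCycle y (B.orderIsoOfFin hk jy : Fin n) := by
      rw [hjy]; exact sameCycle_reach σ B hB hσ y
    exact (h1.trans h2).trans h3.symm

end transfer

end

lemma trans_iff_cycle {α : Type*} [Fintype α] [DecidableEq α] (f : Equiv.Perm α)
    (h2 : 2 ≤ Fintype.card α) :
    (∀ x y, f.SameCycle x y) ↔ (f.IsCycle ∧ f.support.card = Fintype.card α) := by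
  constructor
  · intro h
    have hne : ∃ x, f x ≠ x := by
      by_contra h'
      push_neg at h'
      obtain ⟨x, y, hxy⟩ := Fintype.exists_pair_of_one_lt_card h2
      obtain ⟨i, hi⟩ := h x y
      rw [Equiv.Perm.zpow_apply_eq_self_of_apply_eq_self (h' x)] at hi
      exact hxy hi
    obtain ⟨x, hx⟩ := hne
    have hfull : ∀ y, f y ≠ y := by
      intro y hy
      obtain ⟨i, hi⟩ := h y x
      rw [Equiv.Perm.zpow_apply_eq_self_of_apply_eq_self hy] at hi
      exact hx (hi ▸ hy)
    constructor
    · exact ⟨x, hx, fun y _ => h x y⟩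
    · rw [show f.support = Finset.univ from Finset.eq_univ_iff_forall.2
        (fun y => Equiv.Perm.mem_support.2 (hfull y)), Finset.card_univ]
  · rintro ⟨hc, hcard⟩ x y
    have hsupp : f.support = Finset.univ := Finset.eq_univ_of_card _ (by simp [hcard])
    obtain ⟨z, hz, hall⟩ := hc
    have hx : f x ≠ x := Equiv.Perm.mem_support.1 (hsupp ▸ Finset.mem_univ x)
    have hy : f y ≠ y := Equiv.Perm.mem_support.1 (hsupp ▸ Finset.mem_univ y)
    exact (hall hx).symm.trans (hall hy)

lemma hamming_conj {n : ℕ} (g f1 f2 : Equiv.Perm (Fin n)) :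
    hamming (g * f1 * g⁻¹) (g * f2 * g⁻¹) = hamming f1 f2 := by
  unfold hamming
  apply Finset.card_bij (fun a _ => g⁻¹ a)
  · intro a ha
    simp only [mem_filter, mem_univ, true_and] at ha ⊢
    simp only [Equiv.Perm.mul_apply] at ha ⊢
    intro h
    exact ha (by rw [h])
  · intro a _ b _ hab
    exact g⁻¹.injective hab
  · intro b hb
    refine ⟨g b, ?_, by simp⟩
    simp only [mem_filter, mem_univ, true_and] at hb ⊢
    simp only [Equiv.Perm.mul_apply] at hb ⊢
    simp only [Equiv.Perm.inv_def, Equiv.symm_apply_apply]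
    exact fun h => hb (g.injective h)

lemma kcomm_conj {n : ℕ} (k : ℕ) (g β : Equiv.Perm (Fin n)) :
    kcomm k (g * β * g⁻¹) = kcomm k β := by
  unfold kcomm
  apply Finset.card_bij (fun α _ => g⁻¹ * α * g)
  · intro α hα
    simp only [mem_filter, mem_univ, true_and] at hα ⊢
    have : (g⁻¹ * α * g) * β = g⁻¹ * (α * (g * β * g⁻¹)) * g := by group
    rw [this]
    have : β * (g⁻¹ * α * g) = g⁻¹ * ((g * β * g⁻¹) * α) * g := by group
    rw [this]
    have hc := hamming_conj g⁻¹ (α * (g * β * g⁻¹)) ((g * β * g⁻¹) * α)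
    simp only [inv_inv] at hc
    calc hamming (g⁻¹ * (α * (g * β * g⁻¹)) * g) (g⁻¹ * ((g * β * g⁻¹) * α) * g) 
        = hamming (α * (g * β * g⁻¹)) ((g * β * g⁻¹) * α) := by
          have := hamming_conj (g⁻¹) (α * (g * β * g⁻¹)) ((g * β * g⁻¹) * α)
          rw [inv_inv] at this; exact this
      _ = k := hα
  · intro a _ b _ hab
    have : a = g * (g⁻¹ * a * g) * g⁻¹ := by group
    rw [this, hab]; group
  · intro α hα
    refine ⟨g * α * g⁻¹, ?_, by group⟩
    simp only [mem_filter, mem_univ, true_and] at hα ⊢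
    have e1 : (g * α * g⁻¹) * (g * β * g⁻¹) = g * (α * β) * g⁻¹ := by group
    have e2 : (g * β * g⁻¹) * (g * α * g⁻¹) = g * (β * α) * g⁻¹ := by group
    rw [e1, e2, hamming_conj]
    exact hα


lemma exists_conj_rotP {n : ℕ} [NeZero n] (h2 : 2 ≤ n) (β : Equiv.Perm (Fin n))
    (hβ : β.IsCycle ∧ β.support.card = n) :
    ∃ g : Equiv.Perm (Fin n), β = g * rotP n * g⁻¹ := by
  have h1 : β.cycleType = (rotP n).cycleType := by
    rw [hβ.1.cycleType, (rotP_isCycle h2).cycleType, hβ.2, rotP_support h2,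
      Finset.card_univ, Fintype.card_fin]
  have := Equiv.Perm.isConj_iff_cycleType_eq.2 (h1.symm)
  obtain ⟨g, hg⟩ := isConj_iff.1 this
  exact ⟨g, hg.symm⟩

open scoped Classical

section counting

variable {n : ℕ} [NeZero n]

lemma full_cycle_pow_eq (γ : Equiv.Perm (Fin n)) (hc : γ.IsCycle) (hs : γ.support.card = n)
    (v : Fin n) (m : ℕ) : (γ ^ m) v = v ↔ n ∣ m := by
  have hsupp : γ.support = Finset.univ := Finset.eq_univ_of_card _ (by simp [hs])
  have h1 : γ.IsCycleOn ((Finset.univ : Finset (Fin n)) : Set (Fin n)) := by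
    have h2 := hc.isCycleOn
    have h3 : {x | γ x ≠ x} = ((Finset.univ : Finset (Fin n)) : Set (Fin n)) := by
      ext x
      simp only [Set.mem_setOf_eq, Finset.coe_univ, Set.mem_univ, iff_true]
      exact Equiv.Perm.mem_support.1 (hsupp ▸ Finset.mem_univ x)
    rwa [h3] at h2
  have h4 := h1.pow_apply_eq (Finset.mem_univ v) (n := m)
  simpa [Finset.card_univ] using h4

lemma badset_image (α : Equiv.Perm (Fin n)) :
    (Finset.univ.filter fun b => (α * rotP n * α⁻¹) b ≠ rotP n b) =
      Finset.image α (Finset.univ.filter fun a => (α * rotP n) a ≠ (rotP n * α) a) := by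
  ext b
  simp only [mem_filter, mem_univ, true_and, mem_image]
  simp only [Equiv.Perm.mul_apply]
  constructor
  · intro h
    exact ⟨α⁻¹ b, by simpa using h, by simp⟩
  · rintro ⟨a, h, rfl⟩
    simpa using h


lemma step3 (hn : 2 ≤ n) (k : ℕ) :
    kcomm k (rotP n) = n *
      (Finset.univ.filter fun γ : Equiv.Perm (Fin n) => γ.IsCycle ∧ γ.support.card = n ∧
        (Finset.univ.filter fun b => γ b ≠ rotP n b).card = k).card := by
  have hcard : n * (Finset.univ.filter fun γ : Equiv.Perm (Fin n) => γ.IsCycle ∧ γ.support.card = n ∧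
        (Finset.univ.filter fun b => γ b ≠ rotP n b).card = k).card
      = ((Finset.univ : Finset (Fin n)) ×ˢ (Finset.univ.filter fun γ : Equiv.Perm (Fin n) => γ.IsCycle ∧ γ.support.card = n ∧
        (Finset.univ.filter fun b => γ b ≠ rotP n b).card = k)).card := by
    rw [Finset.card_product, Finset.card_univ, Fintype.card_fin]
  rw [kcomm, hcard]
  apply Finset.card_bij (fun α _ => ((α 0 : Fin n), α * rotP n * α⁻¹))
  · -- maps into target
    intro α hα
    simp only [mem_filter, mem_univ, true_and] at hα
    rw [Finset.mem_product]
    refine ⟨Finset.mem_univ _, ?_⟩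
    simp only [mem_filter, mem_univ, true_and]
    refine ⟨?_, ?_, ?_⟩
    · exact (rotP_isCycle hn).conj
    · rw [Equiv.Perm.support_conj, Finset.card_map, rotP_support hn, Finset.card_univ, Fintype.card_fin]
    · rw [badset_image, Finset.card_image_of_injective _ α.injective]
      exact hα
  · -- injective
    intro α _ α' _ h
    simp only [Prod.mk.injEq] at h
    obtain ⟨h0, hconj⟩ := h
    have hcomm : ∀ x, α (rotP n x) = (α * rotP n * α⁻¹) (α x) := by intro x; simp
    have hcomm' : ∀ x, α' (rotP n x) = (α * rotP n * α⁻¹) (α' x) := by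
      intro x; rw [hconj]; simp
    have key : ∀ m : ℕ, α ((rotP n ^ m) 0) = α' ((rotP n ^ m) 0) := by
      intro m
      induction m with
      | zero => simpa using h0
      | succ m ih =>
        rw [pow_succ', Equiv.Perm.mul_apply, hcomm, hcomm', ih]
    apply Equiv.ext
    intro x
    have hx : (rotP n ^ (x : ℕ)) 0 = x := by
      rw [rotP_pow_apply, Fin.cast_val_eq_self, zero_add]
    rw [← hx]
    exact key (x : ℕ)
  · -- surjective
    intro p hp
    rw [Finset.mem_product] at hp
    obtain ⟨v, γ⟩ := p
    obtain ⟨-, hp2⟩ := hp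
    simp only [mem_filter, mem_univ, true_and] at hp2
    obtain ⟨hc, hs, hbad⟩ := hp2
    have key : ∀ i j : Fin n, (γ ^ (i:ℕ)) v = (γ ^ (j:ℕ)) v → (i:ℕ) ≤ (j:ℕ) → i = j := by
      intro i j hij hle
      have hd : (γ ^ ((j:ℕ) - (i:ℕ))) ((γ ^ (i:ℕ)) v) = (γ ^ (i:ℕ)) v := by
        rw [← Equiv.Perm.mul_apply, ← pow_add, Nat.sub_add_cancel hle, ← hij]
      have hdvd := (full_cycle_pow_eq γ hc hs _ _).1 hd
      have hj := j.isLt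
      have hi := i.isLt
      have h0 : (j:ℕ) - (i:ℕ) = 0 := Nat.eq_zero_of_dvd_of_lt hdvd (by omega)
      apply Fin.ext
      omega
    have hinj : Function.Injective (fun i : Fin n => (γ ^ (i : ℕ)) v) := by
      intro i j hij
      simp only at hij
      rcases le_total ((i:Fin n):ℕ) ((j: Fin n):ℕ) with hle | hle
      · exact key i j hij hle
      · exact (key j i hij.symm hle).symm
    have hbij := Finite.injective_iff_bijective.1 hinj
    set α := Equiv.ofBijective _ hbij with hα
    have happ : ∀ i : Fin n, α i = (γ ^ (i : ℕ)) v := fun i => rfl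
    have hα0 : α 0 = v := by
      rw [happ]
      simp
    have horder : orderOf γ = n := by rw [hc.orderOf, hs]
    have hstep : ∀ i : Fin n, α (rotP n i) = γ (α i) := by
      intro i
      rw [happ, happ]
      have hv1 : ((rotP n i : Fin n) : ℕ) = ((i:ℕ) + 1) % n := by
        simp [rotP_apply, Fin.add_def, Fin.val_one', Nat.add_mod_mod]
      have hpow : γ ^ (((i:ℕ)+1) % n) = γ ^ ((i:ℕ)+1) := by
        have h1 : γ ^ (((i:ℕ)+1) % n) = γ ^ (((i:ℕ)+1) % orderOf γ) := by rw [horder]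
        rw [h1, pow_mod_orderOf]
      rw [hv1, hpow, pow_succ', Equiv.Perm.mul_apply]
    have hconj : α * rotP n * α⁻¹ = γ := by
      apply Equiv.ext
      intro x
      have : (α * rotP n * α⁻¹) x = α (rotP n (α⁻¹ x)) := by simp [Equiv.Perm.mul_apply]
      rw [this, hstep, Equiv.Perm.inv_def, Equiv.apply_symm_apply]
    refine ⟨α, ?_, ?_⟩
    · simp only [mem_filter, mem_univ, true_and]
      show hamming (α * rotP n) (rotP n * α) = k
      rw [hamming]
      have himg := badset_image α
      rw [hconj] at himg
      have : (Finset.univ.filter fun a => (α * rotP n) a ≠ (rotP n * α) a).card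
          = (Finset.univ.filter fun b => γ b ≠ rotP n b).card := by
        rw [himg, Finset.card_image_of_injective _ α.injective]
      rw [← hbad, ← this]
    · exact Prod.ext hα0 hconj

lemma trans_iff_cycle_fin {m : ℕ} (f : Equiv.Perm (Fin m)) (h2 : 2 ≤ m) :
    (∀ x y, f.SameCycle x y) ↔ (f.IsCycle ∧ f.support.card = m) := by
  have h := trans_iff_cycle f (by simpa using h2)
  simpa using h

lemma hrel_of (B : Finset (Fin n)) (hB : B.Nonempty) {k : ℕ} [NeZero k] (hk : B.card = k)
    (σ : Equiv.Perm (Fin n)) (τ : Equiv.Perm (Fin k))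
    (hτ : ∀ j : Fin k, (B.orderIsoOfFin hk (τ j) : Fin n) = σ (B.orderIsoOfFin hk j : Fin n)) :
    ∀ j : Fin k, (B.orderIsoOfFin hk ((rotP k * τ) j) : Fin n) =
      reach B hB ((rotP n * σ) (B.orderIsoOfFin hk j : Fin n)) := by
  intro j
  have h1 : (rotP k * τ) j = τ j + 1 := rfl
  rw [h1]
  have h2 := bridge B hB hk (τ j)
  rw [← h2, hτ j]
  rfl

lemma cycle_iff (hn : 2 ≤ n) (B : Finset (Fin n)) (hB : B.Nonempty) {k : ℕ} [NeZero k]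
    (hk2 : 2 ≤ k) (hk : B.card = k) (σ : Equiv.Perm (Fin n)) (hσ : ∀ x, x ∉ B → σ x = x)
    (τ : Equiv.Perm (Fin k))
    (hτ : ∀ j : Fin k, (B.orderIsoOfFin hk (τ j) : Fin n) = σ (B.orderIsoOfFin hk j : Fin n)) :
    ((rotP n * σ).IsCycle ∧ (rotP n * σ).support.card = n) ↔
      ((rotP k * τ).IsCycle ∧ (rotP k * τ).support.card = k) := by
  rw [← trans_iff_cycle_fin _ hn, ← trans_iff_cycle_fin _ hk2]
  exact trans_transfer σ B hB hk (rotP k * τ) hσ (hrel_of B hB hk σ τ hτ)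

lemma card_SB (hn : 2 ≤ n) (B : Finset (Fin n)) {k : ℕ} [NeZero k] (hk1 : 1 ≤ k) (hk : B.card = k) :
    (Finset.univ.filter fun σ : Equiv.Perm (Fin n) => σ.support = B ∧ (rotP n * σ).IsCycle ∧
      (rotP n * σ).support.card = n).card
    = (Finset.univ.filter fun ρ : Equiv.Perm (Fin k) => ρ.IsCycle ∧ ρ.support.card = k ∧
      ∀ i : Fin k, ρ i ≠ i + 1).card := by
  have hB : B.Nonempty := Finset.card_pos.1 (by omega)
  rcases eq_or_lt_of_le hk1 with hk1' | hk2
  · -- k = 1 : both sides empty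
    rw [Finset.card_eq_zero.2, Finset.card_eq_zero.2]
    · rw [Finset.filter_eq_empty_iff]
      intro ρ _
      rintro ⟨hc, hcard, -⟩
      exact ρ.card_support_ne_one (by omega)
    · rw [Finset.filter_eq_empty_iff]
      intro σ _
      rintro ⟨hsupp, -, -⟩
      exact σ.card_support_ne_one (by rw [hsupp, hk]; omega)
  · -- 2 ≤ k : bijection  ρ ↦ ((rotP k)⁻¹ * ρ).extendDomain
    symm
    apply Finset.card_bij (fun ρ _ => Equiv.Perm.extendDomain ((rotP k)⁻¹ * ρ)
      (B.orderIsoOfFin hk).toEquiv)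
    · -- maps into target
      intro ρ hρ
      simp only [mem_filter, mem_univ, true_and] at hρ ⊢
      obtain ⟨hc, hcard, hfpf⟩ := hρ
      set τ := (rotP k)⁻¹ * ρ with hτdef
      set σ := Equiv.Perm.extendDomain τ (B.orderIsoOfFin hk).toEquiv with hσdef
      have hρτ : rotP k * τ = ρ := by rw [hτdef]; group
      have hσout : ∀ x, x ∉ B → σ x = x := by
        intro x hx
        exact Equiv.Perm.extendDomain_apply_not_subtype _ _ hx
      have hτap : ∀ j : Fin k, (B.orderIsoOfFin hk (τ j) : Fin n) = σ (B.orderIsoOfFin hk j : Fin n) := by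
        intro j
        rw [hσdef]
        exact (Equiv.Perm.extendDomain_apply_image τ (B.orderIsoOfFin hk).toEquiv j).symm
      have hτfix : ∀ j : Fin k, τ j ≠ j := by
        intro j hj
        apply hfpf j
        rw [← hρτ]
        show rotP k (τ j) = j + 1
        rw [hj, rotP_apply]
      have hsupp : σ.support = B := by
        ext x
        constructor
        · intro hx
          by_contra hxB
          exact (Equiv.Perm.mem_support.1 hx) (hσout x hxB)
        · intro hxB
          obtain ⟨j, rfl⟩ := (mem_B_iff B hk).1 hxB
          rw [Equiv.Perm.mem_support, ← hτap j]
          intro heq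
          exact hτfix j ((B.orderIsoOfFin hk).injective (Subtype.coe_injective heq))
      refine ⟨hsupp, ?_⟩
      have := (cycle_iff hn B hB hk2 hk σ hσout τ hτap).2 (by rw [hρτ]; exact ⟨hc, hcard⟩)
      exact this
    · -- injective
      intro ρ _ ρ' _ h
      have key : ∀ j : Fin k, ((rotP k)⁻¹ * ρ) j = ((rotP k)⁻¹ * ρ') j := by
        intro j
        have h1 := congrArg (fun f : Equiv.Perm (Fin n) => f ((B.orderIsoOfFin hk j : Fin n))) h
        have e1 := Equiv.Perm.extendDomain_apply_image ((rotP k)⁻¹ * ρ) (B.orderIsoOfFin hk).toEquiv j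
        have e2 := Equiv.Perm.extendDomain_apply_image ((rotP k)⁻¹ * ρ') (B.orderIsoOfFin hk).toEquiv j
        exact (B.orderIsoOfFin hk).injective (Subtype.coe_injective
          (e1.symm.trans (h1.trans e2)))
      have : (rotP k)⁻¹ * ρ = (rotP k)⁻¹ * ρ' := Equiv.ext key
      exact mul_left_cancel this
    · -- surjective
      intro σ hσ
      simp only [mem_filter, mem_univ, true_and] at hσ
      obtain ⟨hsupp, hc, hcard⟩ := hσ
      have hmem' : ∀ x, x ∈ B ↔ σ x ∈ B := by
        intro x
        rw [← hsupp]
        exact (Equiv.Perm.apply_mem_support).symm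
      set τ : Equiv.Perm (Fin k) :=
        (B.orderIsoOfFin hk).toEquiv.symm.permCongr (σ.subtypePerm (fun x => (hmem' x).symm)) with hτdef
      have hτap : ∀ j : Fin k, (B.orderIsoOfFin hk (τ j) : Fin n) = σ (B.orderIsoOfFin hk j : Fin n) := by
        intro j
        rw [hτdef]
        simp [Equiv.permCongr_apply, Equiv.Perm.subtypePerm_apply]
      have hσout : ∀ x, x ∉ B → σ x = x := by
        intro x hx
        by_contra hne
        exact hx (hsupp ▸ Equiv.Perm.mem_support.2 hne)
      refine ⟨rotP k * τ, ?_, ?_⟩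
      · simp only [mem_filter, mem_univ, true_and]
        have hcyc := (cycle_iff hn B hB hk2 hk σ hσout τ hτap).1 ⟨hc, hcard⟩
        refine ⟨hcyc.1, hcyc.2, ?_⟩
        intro i hi
        rw [Equiv.Perm.mul_apply] at hi
        have h1 : rotP k (τ i) = rotP k i := by
          rw [hi, rotP_apply]
        have h2 : τ i = i := (rotP k).injective h1
        have h3 : σ (B.orderIsoOfFin hk i : Fin n) = (B.orderIsoOfFin hk i : Fin n) := by
          rw [← hτap i, h2]
        have h4 : ((B.orderIsoOfFin hk i : Fin n)) ∈ B := (B.orderIsoOfFin hk i).2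
        have h5 : ((B.orderIsoOfFin hk i : Fin n)) ∉ σ.support := Equiv.Perm.notMem_support.2 h3
        rw [hsupp] at h5
        exact h5 h4
      · -- G (rotP k * τ) = σ
        have : (rotP k)⁻¹ * (rotP k * τ) = τ := by group
        rw [this]
        apply Equiv.ext
        intro x
        by_cases hx : x ∈ B
        · obtain ⟨j, rfl⟩ := (mem_B_iff B hk).1 hx
          exact (Equiv.Perm.extendDomain_apply_image τ (B.orderIsoOfFin hk).toEquiv j).trans (hτap j)
        · rw [Equiv.Perm.extendDomain_apply_not_subtype _ _ hx, hσout x hx]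


lemma badset_supp (σ : Equiv.Perm (Fin n)) :
    (Finset.univ.filter fun b => (rotP n * σ) b ≠ rotP n b) = σ.support := by
  ext b
  simp only [mem_filter, mem_univ, true_and, Equiv.Perm.mem_support]
  simp only [Equiv.Perm.mul_apply]
  constructor
  · intro h heq
    exact h (by rw [heq])
  · intro h heq
    exact h ((rotP n).injective heq)

lemma step2 (hn : 2 ≤ n) {k : ℕ} [NeZero k] :
    (Finset.univ.filter fun γ : Equiv.Perm (Fin n) => γ.IsCycle ∧ γ.support.card = n ∧
        (Finset.univ.filter fun b => γ b ≠ rotP n b).card = k).card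
    = n.choose k * (Finset.univ.filter fun ρ : Equiv.Perm (Fin k) => ρ.IsCycle ∧ ρ.support.card = k ∧
        ∀ i : Fin k, ρ i ≠ i + 1).card := by
  have hk1 : 1 ≤ k := Nat.pos_of_ne_zero (NeZero.ne k)
  -- step A : reindex γ = rotP n * σ
  have hA : (Finset.univ.filter fun γ : Equiv.Perm (Fin n) => γ.IsCycle ∧ γ.support.card = n ∧
        (Finset.univ.filter fun b => γ b ≠ rotP n b).card = k).card
      = (Finset.univ.filter fun σ : Equiv.Perm (Fin n) => (rotP n * σ).IsCycle ∧
          (rotP n * σ).support.card = n ∧ σ.support.card = k).card := by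
    symm
    apply Finset.card_bij (fun σ _ => rotP n * σ)
    · intro σ hσ
      simp only [mem_filter, mem_univ, true_and] at hσ ⊢
      refine ⟨hσ.1, hσ.2.1, ?_⟩
      rw [badset_supp]
      exact hσ.2.2
    · intro a _ b _ h
      exact mul_left_cancel h
    · intro γ hγ
      simp only [mem_filter, mem_univ, true_and] at hγ
      refine ⟨(rotP n)⁻¹ * γ, ?_, by group⟩
      simp only [mem_filter, mem_univ, true_and]
      have hre : rotP n * ((rotP n)⁻¹ * γ) = γ := by group
      rw [hre]
      refine ⟨hγ.1, hγ.2.1, ?_⟩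
      have := hγ.2.2
      rw [← badset_supp ((rotP n)⁻¹ * γ), hre]
      exact this
  rw [hA]
  -- step B : fiberwise over the support
  have hB : (Finset.univ.filter fun σ : Equiv.Perm (Fin n) => (rotP n * σ).IsCycle ∧
          (rotP n * σ).support.card = n ∧ σ.support.card = k).card
      = ∑ B ∈ Finset.powersetCard k (Finset.univ : Finset (Fin n)),
          ((Finset.univ.filter fun σ : Equiv.Perm (Fin n) => (rotP n * σ).IsCycle ∧
          (rotP n * σ).support.card = n ∧ σ.support.card = k).filter
            (fun σ => σ.support = B)).card := by
    apply Finset.card_eq_sum_card_fiberwise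
    intro σ hσ
    simp only [Finset.mem_coe, mem_filter, mem_univ, true_and] at hσ
    rw [Finset.mem_coe, Finset.mem_powersetCard_univ]
    exact hσ.2.2
  rw [hB]
  have hC : ∀ B ∈ Finset.powersetCard k (Finset.univ : Finset (Fin n)),
      ((Finset.univ.filter fun σ : Equiv.Perm (Fin n) => (rotP n * σ).IsCycle ∧
          (rotP n * σ).support.card = n ∧ σ.support.card = k).filter
            (fun σ => σ.support = B)).card
      = (Finset.univ.filter fun ρ : Equiv.Perm (Fin k) => ρ.IsCycle ∧ ρ.support.card = k ∧
        ∀ i : Fin k, ρ i ≠ i + 1).card := by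
    intro B hBmem
    rw [Finset.mem_powersetCard_univ] at hBmem
    rw [← card_SB hn B hk1 hBmem]
    congr 1
    ext σ
    simp only [Finset.mem_filter, Finset.mem_univ, true_and]
    constructor
    · rintro ⟨⟨h1, h2, h3⟩, h4⟩
      exact ⟨h4, h1, h2⟩
    · rintro ⟨h1, h2, h3⟩
      exact ⟨⟨h2, h3, by rw [h1, hBmem]⟩, h1⟩
  rw [Finset.sum_congr rfl hC, Finset.sum_const, Finset.card_powersetCard,
    Finset.card_univ, Fintype.card_fin, smul_eq_mul]

lemma Nk_zero (hn : 2 ≤ n) :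
    (Finset.univ.filter fun γ : Equiv.Perm (Fin n) => γ.IsCycle ∧ γ.support.card = n ∧
        (Finset.univ.filter fun b => γ b ≠ rotP n b).card = 0).card = 1 := by
  rw [Finset.card_eq_one]
  refine ⟨rotP n, ?_⟩
  ext γ
  simp only [Finset.mem_filter, Finset.mem_univ, true_and, Finset.mem_singleton]
  constructor
  · rintro ⟨h1, h2, h3⟩
    rw [Finset.card_eq_zero, Finset.filter_eq_empty_iff] at h3
    apply Equiv.ext
    intro x
    have := h3 (Finset.mem_univ x)
    push_neg at this
    exact this
  · rintro rfl
    refine ⟨rotP_isCycle hn, by rw [rotP_support hn, Finset.card_univ, Fintype.card_fin], ?_⟩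
    rw [Finset.card_eq_zero, Finset.filter_eq_empty_iff]
    intro x _
    simp

end counting

theorem c_k_of_n_cycle (n : ℕ) (β : Equiv.Perm (Fin n))
    (hβ : β.IsCycle ∧ β.support.card = n) :
    ∀ k : ℕ, k ≤ n → kcomm k β = n * Nat.choose n k * D k := by
  intro k hkn
  have hn2 : 2 ≤ n := by
    rw [← hβ.2]
    exact hβ.1.two_le_card_support
  haveI : NeZero n := ⟨by omega⟩
  obtain ⟨g, hg⟩ := exists_conj_rotP hn2 β hβ
  rw [hg, kcomm_conj, step3 hn2]
  rcases Nat.eq_zero_or_pos k with rfl | hk1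
  · rw [Nk_zero hn2]
    simp [D]
  · haveI : NeZero k := ⟨by omega⟩
    rw [step2 hn2]
    obtain ⟨K, rfl⟩ : ∃ K, k = K + 1 := ⟨k - 1, by omega⟩
    have hD : D (K + 1) = (Finset.univ.filter fun ρ : Equiv.Perm (Fin (K+1)) =>
        ρ.IsCycle ∧ ρ.support.card = K + 1 ∧ ∀ i : Fin (K+1), ρ i ≠ i + 1).card := by
      simp only [D]
      rw [Nat.card_eq_fintype_card, Fintype.card_subtype]
    rw [hD]
    ring
end

section
/- Let n ≥ 1 and let β be an n-cycle in S_n. Then the number of permutations α ∈ S_n with H(αβ, βα) ≤ 3 equals n·(1 + C(n,3)), where C(n,3) is the binomial coefficient. -/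
open Equiv Equiv.Perm Finset

namespace CleAux

variable {n : ℕ}

lemma hamming_eq (f g : Perm (Fin n)) : hamming f g = (f * g⁻¹).support.card := by
  unfold hamming
  apply Finset.card_equiv g
  intro i
  simp [Equiv.Perm.mem_support]

lemma hamming_comm_eq (α β : Perm (Fin n)) :
    hamming (α * β) (β * α) = ((α * β * α⁻¹) * β⁻¹).support.card := by
  rw [hamming_eq]
  congr 2


lemma hamming_conj (δ f g : Perm (Fin n)) :
    hamming (δ * f * δ⁻¹) (δ * g * δ⁻¹) = hamming f g := by
  unfold hamming
  apply Finset.card_equiv (δ⁻¹ : Perm (Fin n))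
  intro i
  simp only [mem_filter, mem_univ, true_and, Equiv.Perm.mul_apply]
  constructor
  · intro h hc; exact (Finset.mem_filter.mp h).2 (congrArg δ hc)
  · intro h; exact Finset.mem_filter.mpr ⟨mem_univ _, fun hc => h (δ.injective hc)⟩

lemma cle_conj (k : ℕ) (δ β : Perm (Fin n)) :
    cle k (δ * β * δ⁻¹) = cle k β := by
  unfold cle
  apply Finset.card_equiv ((Equiv.mulLeft δ⁻¹).trans (Equiv.mulRight δ))
  intro α
  simp only [mem_filter, mem_univ, true_and, Equiv.trans_apply, Equiv.coe_mulLeft,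
    Equiv.coe_mulRight]
  have h1 : α * (δ * β * δ⁻¹) = δ * ((δ⁻¹ * α * δ) * β) * δ⁻¹ := by group
  have h2 : (δ * β * δ⁻¹) * α = δ * (β * (δ⁻¹ * α * δ)) * δ⁻¹ := by group
  rw [h1, h2, hamming_conj]

lemma commute_eq_pow {β α : Perm (Fin n)} (hc : β.IsCycle) (hs : β.support = univ)
    (h : α * β = β * α) : ∃ k < n, β ^ k = α := by
  have hcom : Commute α β := h
  have moved : ∀ y : Fin n, β y ≠ y := fun y =>
    mem_support.mp (by rw [hs]; exact mem_univ y)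
  have hc2 := hc
  obtain ⟨x, hx, -⟩ := hc2
  obtain ⟨i, hi⟩ := hc.sameCycle (moved x) (moved (α x))
  have hzp : α = β ^ i := by
    refine Equiv.ext fun y => ?_
    obtain ⟨j, hj⟩ := hc.sameCycle (moved x) (moved y)
    have hcj : α * β ^ j = β ^ j * α := (hcom.zpow_right j).eq
    calc α y = α ((β ^ j) x) := by rw [hj]
    _ = (α * β ^ j) x := rfl
    _ = (β ^ j * α) x := by rw [hcj]
    _ = (β ^ j) (α x) := rfl
    _ = (β ^ j) ((β ^ i) x) := by rw [hi]
    _ = (β ^ i) ((β ^ j) x) := by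
        rw [← Equiv.Perm.mul_apply, ← Equiv.Perm.mul_apply, ← zpow_add, ← zpow_add, add_comm]
    _ = (β ^ i) y := by rw [hj]
  have hord : orderOf β = n := by
    rw [hc.orderOf, hs, card_univ, Fintype.card_fin]
  have hnpos : 0 < n := Fin.pos x
  refine ⟨(i % (n : ℤ)).toNat, ?_, ?_⟩
  · have : i % (n : ℤ) < n := Int.emod_lt_of_pos i (by exact_mod_cast hnpos)
    omega
  · have h1 : β ^ ((i % (n : ℤ)).toNat : ℤ) = β ^ i := by
      rw [Int.toNat_of_nonneg (Int.emod_nonneg i (by exact_mod_cast hnpos.ne'))]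
      have h2 := zpow_mod_orderOf β i
      rw [hord] at h2
      exact h2
    rw [← zpow_natCast, h1, hzp]

lemma card_centralizer {β : Perm (Fin n)} (hc : β.IsCycle) (hs : β.support = univ) :
    (univ.filter fun α : Perm (Fin n) => α * β = β * α).card = n := by
  have hord : orderOf β = n := by
    rw [hc.orderOf, hs, card_univ, Fintype.card_fin]
  have hset : (univ.filter fun α : Perm (Fin n) => α * β = β * α)
      = (Finset.range n).image (β ^ ·) := by
    ext α
    simp only [mem_filter, mem_univ, true_and, mem_image, mem_range]
    constructor
    · intro h
      obtain ⟨k, hk, he⟩ := commute_eq_pow hc hs h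
      exact ⟨k, hk, he⟩
    · rintro ⟨k, -, rfl⟩
      exact ((Commute.refl β).pow_left k).eq
  rw [hset, Finset.card_image_of_injOn, Finset.card_range]
  intro i hi j hj hij
  have hi' : i < orderOf β := by rw [hord]; exact mem_range.mp (mem_coe.mp hi)
  have hj' : j < orderOf β := by rw [hord]; exact mem_range.mp (mem_coe.mp hj)
  exact pow_injOn_Iio_orderOf hi' hj' hij

lemma card_conj_fiber {β γ : Perm (Fin n)} (hc : β.IsCycle) (hs : β.support = univ)
    (hγc : γ.IsCycle) (hγs : γ.support = univ) :
    (univ.filter fun α : Perm (Fin n) => α * β * α⁻¹ = γ).card = n := by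
  obtain ⟨δ, hδ'⟩ := isConj_iff.mp (hc.isConj hγc (by rw [hs, hγs]))
  refine (Finset.card_equiv (Equiv.mulLeft δ⁻¹) ?_).trans (card_centralizer hc hs)
  intro α
  simp only [mem_filter, mem_univ, true_and, Equiv.coe_mulLeft]
  constructor
  · intro h
    have h2 : α * β * α⁻¹ = δ * β * δ⁻¹ := h.trans hδ'.symm
    calc δ⁻¹ * α * β = δ⁻¹ * (α * β * α⁻¹) * α := by group
      _ = δ⁻¹ * (δ * β * δ⁻¹) * α := by rw [h2]
      _ = β * (δ⁻¹ * α) := by group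
  · intro h
    calc α * β * α⁻¹ = δ * (δ⁻¹ * α * β) * α⁻¹ := by group
      _ = δ * (β * (δ⁻¹ * α)) * α⁻¹ := by rw [h]
      _ = δ * β * δ⁻¹ := by group
      _ = γ := hδ'

open scoped Classical in
lemma cle_eq {β : Perm (Fin n)} (hc : β.IsCycle) (hs : β.support = univ) :
    cle 3 β = n * (univ.filter fun γ : Perm (Fin n) =>
      γ.IsCycle ∧ γ.support = univ ∧ (γ * β⁻¹).support.card ≤ 3).card := by
  classical
  unfold cle
  rw [Finset.card_eq_sum_card_fiberwise (f := fun α => α * β * α⁻¹)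
    (t := univ.filter fun γ : Perm (Fin n) =>
      γ.IsCycle ∧ γ.support = univ ∧ (γ * β⁻¹).support.card ≤ 3)]
  · rw [Finset.sum_congr rfl (g := fun _ => n), Finset.sum_const, smul_eq_mul, mul_comm]
    intro γ hγ
    simp only [mem_filter, mem_univ, true_and] at hγ
    obtain ⟨hγc, hγs, hγ3⟩ := hγ
    refine Eq.trans ?_ (card_conj_fiber hc hs hγc hγs)
    congr 1
    ext α
    simp only [mem_filter, mem_univ, true_and]
    constructor
    · rintro ⟨-, h⟩; exact h
    · intro h
      refine ⟨?_, h⟩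
      rw [hamming_comm_eq, h]
      exact hγ3
  · intro α hα
    simp only [mem_filter, mem_univ, true_and] at hα ⊢
    refine Finset.mem_filter.mpr ⟨mem_univ _, hc.conj, ?_, ?_⟩
    · rw [Equiv.Perm.support_conj, hs, Finset.map_univ_equiv]
    · rw [← hamming_comm_eq]
      exact (Finset.mem_filter.mp (Finset.mem_coe.mp hα)).2

end CleAux
section threecycles

variable {m : ℕ}

/-- The 3-cycle `a ↦ b ↦ c ↦ a`. -/
def f3 (a b c : Fin (m + 2)) : Equiv.Perm (Fin (m + 2)) :=
  Equiv.swap a b * Equiv.swap b c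

namespace CleAux

variable {a b c : Fin (m + 2)}

lemma f3_apply_left (hab : a ≠ b) (hac : a ≠ c) : f3 a b c a = b := by
  rw [f3, Equiv.Perm.mul_apply, Equiv.swap_apply_of_ne_of_ne hab hac, Equiv.swap_apply_left]

lemma f3_apply_mid (hca : c ≠ a) (hcb : c ≠ b) : f3 a b c b = c := by
  rw [f3, Equiv.Perm.mul_apply, Equiv.swap_apply_left, Equiv.swap_apply_of_ne_of_ne hca hcb]

lemma f3_apply_right : f3 a b c c = a := by
  rw [f3, Equiv.Perm.mul_apply, Equiv.swap_apply_right, Equiv.swap_apply_right]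

lemma f3_apply_other {x : Fin (m + 2)} (hxa : x ≠ a) (hxb : x ≠ b) (hxc : x ≠ c) :
    f3 a b c x = x := by
  rw [f3, Equiv.Perm.mul_apply, Equiv.swap_apply_of_ne_of_ne hxb hxc,
    Equiv.swap_apply_of_ne_of_ne hxa hxb]

lemma f3_support (hab : a ≠ b) (hbc : b ≠ c) (hac : a ≠ c) :
    (f3 a b c).support = {a, b, c} := by
  ext x
  simp only [Equiv.Perm.mem_support, Finset.mem_insert, Finset.mem_singleton]
  constructor
  · intro h
    by_contra hx
    push_neg at hx
    exact h (f3_apply_other hx.1 hx.2.1 hx.2.2)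
  · rintro (rfl | rfl | rfl)
    · rw [f3_apply_left hab hac]; exact hab.symm
    · rw [f3_apply_mid hac.symm hbc.symm]; exact hbc.symm
    · rw [f3_apply_right]; exact hac

lemma eq_f3_of_support {σ : Equiv.Perm (Fin (m + 2))} (hab : a ≠ b) (hbc : b ≠ c) (hac : a ≠ c)
    (h : σ.support = {a, b, c}) : σ = f3 a b c ∨ σ = f3 a c b := by
  have hmem : ∀ x : Fin (m + 2), x = a ∨ x = b ∨ x = c → σ x = a ∨ σ x = b ∨ σ x = c := by
    intro x hx
    have h1 : x ∈ σ.support := by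
      rw [h]; simp only [Finset.mem_insert, Finset.mem_singleton]; exact hx
    have h2 : σ x ∈ σ.support := Equiv.Perm.apply_mem_support.mpr h1
    rw [h] at h2
    simpa using h2
  have hne : ∀ x : Fin (m + 2), x = a ∨ x = b ∨ x = c → σ x ≠ x := by
    intro x hx
    apply Equiv.Perm.mem_support.mp
    rw [h]; simp only [Finset.mem_insert, Finset.mem_singleton]; exact hx
  have hfix : ∀ x : Fin (m + 2), x ≠ a → x ≠ b → x ≠ c → σ x = x := by
    intro x h1 h2 h3
    apply Equiv.Perm.notMem_support.mp
    rw [h]; simp [h1, h2, h3]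
  have hinj : ∀ x y : Fin (m + 2), σ x = σ y → x = y := fun x y hxy => σ.injective hxy
  have hσa := hmem a (Or.inl rfl)
  have hσb := hmem b (Or.inr (Or.inl rfl))
  have hσc := hmem c (Or.inr (Or.inr rfl))
  have hna := hne a (Or.inl rfl)
  have hnb := hne b (Or.inr (Or.inl rfl))
  have hnc := hne c (Or.inr (Or.inr rfl))
  rcases hσa with ha | ha | ha
  · exact absurd ha hna
  · -- σ a = b; then σ b = c, σ c = a
    left
    have hb2 : σ b = c := by
      rcases hσb with hb | hb | hb
      · -- σ b = a; then σ c has no home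
        exfalso
        rcases hσc with hcc | hcc | hcc
        · exact hbc (hinj _ _ (hb.trans hcc.symm))
        · exact hac (hinj _ _ (ha.trans hcc.symm))
        · exact hnc hcc
      · exact absurd hb hnb
      · exact hb
    have hc2 : σ c = a := by
      rcases hσc with hcc | hcc | hcc
      · exact hcc
      · exact absurd (hinj _ _ (ha.trans hcc.symm)) hac
      · exact absurd hcc hnc
    refine Equiv.ext fun x => ?_
    by_cases h1 : x = a
    · subst h1; rw [ha, f3_apply_left hab hac]
    by_cases h2 : x = b
    · subst h2; rw [hb2, f3_apply_mid hac.symm hbc.symm]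
    by_cases h3 : x = c
    · subst h3; rw [hc2, f3_apply_right]
    · rw [hfix x h1 h2 h3, f3_apply_other h1 h2 h3]
  · -- σ a = c; then σ c = b, σ b = a
    right
    have hc2 : σ c = b := by
      rcases hσc with hcc | hcc | hcc
      · -- σ c = a; then σ b has no home
        exfalso
        rcases hσb with hb | hb | hb
        · exact hbc (hinj _ _ (hb.trans hcc.symm))
        · exact absurd hb hnb
        · exact hab (hinj _ _ (ha.trans hb.symm))
      · exact hcc
      · exact absurd hcc hnc
    have hb2 : σ b = a := by
      rcases hσb with hb | hb | hb
      · exact hb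
      · exact absurd hb hnb
      · exact absurd (hinj _ _ (ha.trans hb.symm)) hab
    refine Equiv.ext fun x => ?_
    by_cases h1 : x = a
    · subst h1; rw [ha, f3_apply_left hac hab]
    by_cases h3 : x = c
    · subst h3; rw [hc2, f3_apply_mid hab.symm hbc]
    by_cases h2 : x = b
    · subst h2; rw [hb2, f3_apply_right]
    · rw [hfix x h1 h2 h3, f3_apply_other h1 h3 h2]

lemma pow_arc (δ : Equiv.Perm (Fin (m + 2))) (v : ℕ) :
    ∀ (L : ℕ) (hvL : v + L < m + 2),
      (∀ (w : ℕ) (_ : v ≤ w) (_ : w < v + L),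
        δ ⟨w, by omega⟩ = ⟨w + 1, by omega⟩) →
      (δ ^ L) ⟨v, by omega⟩ = ⟨v + L, hvL⟩
  | 0, hvL, _ => by simp
  | L + 1, hvL, h => by
    have ih := pow_arc δ v L (by omega) (fun w hw1 hw2 => h w hw1 (by omega))
    rw [pow_succ', Equiv.Perm.mul_apply, ih]
    have := h (v + L) (by omega) (by omega)
    rw [this]
    apply Fin.ext
    simp [Nat.add_assoc]

end CleAux

end threecycles
namespace CleAux

section main

variable {m : ℕ} {a b c : Fin (m + 2)} {β σ : Equiv.Perm (Fin (m + 2))}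

lemma val_add_one' (p : Fin (m + 2)) :
    (p + 1).val = if p.val = m + 1 then 0 else p.val + 1 := by
  rw [Fin.val_add, Fin.val_one]
  rcases Nat.lt_or_ge (p.val + 1) (m + 2) with h | h
  · rw [Nat.mod_eq_of_lt h, if_neg (by omega)]
  · have hp := p.isLt
    have h2 : p.val = m + 1 := by omega
    rw [if_pos h2, h2]
    simp

lemma step_to' (hβ : ∀ x, β x = x + 1) (w t : ℕ) (hw : w < m + 2) (ht : t < m + 2)
    (he : w + 1 = t) : (σ * β) ⟨w, hw⟩ = σ ⟨t, ht⟩ := by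
  rw [Equiv.Perm.mul_apply, hβ]
  congr 1
  apply Fin.ext
  rw [val_add_one']
  have : (⟨w, hw⟩ : Fin (m + 2)).val = w := rfl
  rw [this, if_neg (by omega)]
  exact he

lemma step_wrap (hβ : ∀ x, β x = x + 1) :
    (σ * β) ⟨m + 1, by omega⟩ = σ ⟨0, by omega⟩ := by
  rw [Equiv.Perm.mul_apply, hβ]
  congr 1
  apply Fin.ext
  rw [val_add_one']
  simp

lemma pow_arc' (hfix : ∀ x : Fin (m + 2), x ≠ a → x ≠ b → x ≠ c → σ x = x)
    (hβ : ∀ x, β x = x + 1) (x : Fin (m + 2)) (t : ℕ) (ht : t < m + 2) (hvt : x.val ≤ t)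
    (hcond : ∀ w : ℕ, x.val ≤ w → w < t →
      (w + 1 ≠ a.val ∧ w + 1 ≠ b.val ∧ w + 1 ≠ c.val)) :
    ((σ * β) ^ (t - x.val)) x = ⟨t, ht⟩ := by
  have key := pow_arc (σ * β) x.val (t - x.val) (by omega) ?_
  · have hx : (⟨x.val, by omega⟩ : Fin (m + 2)) = x := Fin.eta x x.isLt
    rw [hx] at key
    rw [key]
    apply Fin.ext
    show x.val + (t - x.val) = t
    omega
  · intro w hw1 hw2
    obtain ⟨k1, k2, k3⟩ := hcond w hw1 (by omega)
    have hst := step_to' (σ := σ) hβ w (w + 1) (by omega) (by omega) rfl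
    rw [hst]
    have hfx : σ ⟨w + 1, by omega⟩ = ⟨w + 1, by omega⟩ :=
      hfix _ (Fin.ne_of_val_ne k1) (Fin.ne_of_val_ne k2) (Fin.ne_of_val_ne k3)
    rw [hfx]

lemma bad_orientation (hab : a.val < b.val) (hbc : b.val < c.val)
    (hβ : ∀ x, β x = x + 1) :
    ¬((f3 a c b * β).IsCycle ∧ (f3 a c b * β).support = Finset.univ) := by
  rintro ⟨hcyc, hsupp⟩
  have hC := c.isLt
  have hfix : ∀ x : Fin (m + 2), x ≠ a → x ≠ b → x ≠ c → f3 a c b x = x :=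
    fun x h1 h2 h3 => f3_apply_other h1 h3 h2
  have h1 : ((f3 a c b * β) ^ (b.val - 1 - a.val)) a = ⟨b.val - 1, by omega⟩ :=
    pow_arc' hfix hβ a (b.val - 1) (by omega) (by omega)
      (fun w hw1 hw2 => ⟨by omega, by omega, by omega⟩)
  have h2 : (f3 a c b * β) ⟨b.val - 1, by omega⟩ = a := by
    rw [step_to' hβ (b.val - 1) b.val (by omega) b.isLt (by omega)]
    have hb : (⟨b.val, b.isLt⟩ : Fin (m + 2)) = b := Fin.eta b b.isLt
    rw [hb]
    exact f3_apply_right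
  have h3 : ((f3 a c b * β) ^ (b.val - a.val)) a = a := by
    have he : b.val - a.val = (b.val - 1 - a.val) + 1 := by omega
    rw [he, pow_succ', Equiv.Perm.mul_apply, h1, h2]
  have hmoved : ∀ x, (f3 a c b * β) x ≠ x := fun x =>
    Equiv.Perm.mem_support.mp (by rw [hsupp]; exact Finset.mem_univ x)
  have hset : {x | (f3 a c b * β) x ≠ x} = Set.univ := Set.eq_univ_of_forall hmoved
  have hco : (f3 a c b * β).IsCycleOn ↑(Finset.univ : Finset (Fin (m + 2))) := by
    rw [Finset.coe_univ, ← hset]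
    exact hcyc.isCycleOn
  have hdvd := (hco.pow_apply_eq (Finset.mem_univ a)).mp h3
  rw [Finset.card_univ, Fintype.card_fin] at hdvd
  have := Nat.le_of_dvd (by omega) hdvd
  omega

lemma good_orientation (hab : a.val < b.val) (hbc : b.val < c.val)
    (hβ : ∀ x, β x = x + 1) :
    (f3 a b c * β).IsCycle ∧ (f3 a b c * β).support = Finset.univ := by
  have hC := c.isLt
  have hne_ab : a ≠ b := Fin.ne_of_val_ne (by omega)
  have hne_bc : b ≠ c := Fin.ne_of_val_ne (by omega)
  have hne_ac : a ≠ c := Fin.ne_of_val_ne (by omega)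
  have hfix : ∀ x : Fin (m + 2), x ≠ a → x ≠ b → x ≠ c → f3 a b c x = x :=
    fun x h1 h2 h3 => f3_apply_other h1 h2 h3
  set F := f3 a b c * β with hF
  -- no fixed points
  have hmove : ∀ p : Fin (m + 2), F p ≠ p := by
    intro p hp
    by_cases h1 : p + 1 = a
    · have hd : F p = b := by
        rw [hF, Equiv.Perm.mul_apply, hβ, h1, f3_apply_left hne_ab hne_ac]
      have hpb : b.val = p.val := congrArg Fin.val (hd.symm.trans hp)
      have e := congrArg Fin.val h1
      rw [val_add_one'] at e
      split_ifs at e <;> omega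
    by_cases h2 : p + 1 = b
    · have hd : F p = c := by
        rw [hF, Equiv.Perm.mul_apply, hβ, h2, f3_apply_mid hne_ac.symm hne_bc.symm]
      have hpc : c.val = p.val := congrArg Fin.val (hd.symm.trans hp)
      have e := congrArg Fin.val h2
      rw [val_add_one'] at e
      split_ifs at e <;> omega
    by_cases h3 : p + 1 = c
    · have hd : F p = a := by
        rw [hF, Equiv.Perm.mul_apply, hβ, h3, f3_apply_right]
      have hpa : a.val = p.val := congrArg Fin.val (hd.symm.trans hp)
      have e := congrArg Fin.val h3
      rw [val_add_one'] at e
      split_ifs at e <;> omega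
    · have hd : F p = p + 1 := by
        rw [hF, Equiv.Perm.mul_apply, hβ, hfix _ h1 h2 h3]
      have e := congrArg Fin.val (hd.symm.trans hp)
      rw [val_add_one'] at e
      split_ifs at e <;> omega
  have hsupp : F.support = Finset.univ := by
    rw [Finset.eq_univ_iff_forall]
    exact fun x => Equiv.Perm.mem_support.mpr (hmove x)
  refine ⟨?_, hsupp⟩
  -- helper to produce SameCycle from a power relation
  have sc : ∀ (x y : Fin (m + 2)) (k : ℕ), (F ^ k) x = y → F.SameCycle x y :=
    fun x y k hk => ⟨(k : ℤ), by rw [zpow_natCast, hk]⟩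
  -- coverage
  have R1 : ∀ (t : ℕ) (h1 : a.val ≤ t) (h2 : t < b.val), F.SameCycle a ⟨t, by omega⟩ := by
    intro t h1 h2
    exact sc _ _ (t - a.val) (pow_arc' hfix hβ a t (by omega) h1
      (fun w hw1 hw2 => ⟨by omega, by omega, by omega⟩))
  have Rc : F.SameCycle a c := by
    have h1 := R1 (b.val - 1) (by omega) (by omega)
    have h2 : F ⟨b.val - 1, by omega⟩ = c := by
      rw [hF, step_to' hβ (b.val - 1) b.val (by omega) b.isLt (by omega)]
      rw [Fin.eta b b.isLt]
      exact f3_apply_mid hne_ac.symm hne_bc.symm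
    exact h1.trans (sc _ _ 1 (by rw [pow_one]; exact h2))
  have R2 : ∀ (t : ℕ) (h1 : c.val ≤ t) (ht : t < m + 2), F.SameCycle a ⟨t, ht⟩ := by
    intro t h1 ht
    refine Rc.trans (sc _ _ (t - c.val) (pow_arc' hfix hβ c t ht h1
      (fun w hw1 hw2 => ⟨by omega, by omega, by omega⟩)))
  have Rzero : a.val ≠ 0 → F.SameCycle a ⟨0, by omega⟩ := by
    intro hA
    have h1 := R2 (m + 1) (by omega) (by omega)
    have h2 : F ⟨m + 1, by omega⟩ = ⟨0, by omega⟩ := by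
      rw [hF, step_wrap hβ]
      exact hfix _ (Fin.ne_of_val_ne (by show (0:ℕ) ≠ a.val; omega))
        (Fin.ne_of_val_ne (by show (0:ℕ) ≠ b.val; omega))
        (Fin.ne_of_val_ne (by show (0:ℕ) ≠ c.val; omega))
    exact h1.trans (sc _ _ 1 (by rw [pow_one]; exact h2))
  have Rlow : ∀ (t : ℕ) (h2 : t < a.val), F.SameCycle a ⟨t, by omega⟩ := by
    intro t h2
    have h0 := Rzero (by omega)
    refine h0.trans (sc _ _ (t - 0) (pow_arc' hfix hβ ⟨0, by omega⟩ t (by omega)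
      (Nat.zero_le t) (fun w hw1 hw2 => ⟨by omega, by omega, by omega⟩)))
  have Rb : F.SameCycle a b := by
    rcases Nat.eq_zero_or_pos a.val with hA0 | hApos
    · have h1 := R2 (m + 1) (by omega) (by omega)
      have h2 : F ⟨m + 1, by omega⟩ = b := by
        rw [hF, step_wrap hβ]
        have ha0 : (⟨0, by omega⟩ : Fin (m + 2)) = a := Fin.ext (by show (0:ℕ) = a.val; omega)
        rw [ha0]
        exact f3_apply_left hne_ab hne_ac
      exact h1.trans (sc _ _ 1 (by rw [pow_one]; exact h2))
    · have h1 := Rlow (a.val - 1) (by omega)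
      have h2 : F ⟨a.val - 1, by omega⟩ = b := by
        rw [hF, step_to' hβ (a.val - 1) a.val (by omega) a.isLt (by omega)]
        rw [Fin.eta a a.isLt]
        exact f3_apply_left hne_ab hne_ac
      exact h1.trans (sc _ _ 1 (by rw [pow_one]; exact h2))
  have R3 : ∀ (t : ℕ) (h1 : b.val ≤ t) (h2 : t < c.val), F.SameCycle a ⟨t, by omega⟩ := by
    intro t h1 h2
    refine Rb.trans (sc _ _ (t - b.val) (pow_arc' hfix hβ b t (by omega) h1
      (fun w hw1 hw2 => ⟨by omega, by omega, by omega⟩)))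
  refine ⟨a, hmove a, fun y _ => ?_⟩
  obtain ⟨t, ht⟩ := y
  rcases Nat.lt_or_ge t a.val with h | h
  · exact Rlow t h
  rcases Nat.lt_or_ge t b.val with h2 | h2
  · exact R1 t h h2
  rcases Nat.lt_or_ge t c.val with h3 | h3
  · exact R3 t h2 h3
  · exact R2 t h3 ht

end main

end CleAux
namespace CleAux

variable {m : ℕ}

lemma sorted_of_card_three {s : Finset (Fin (m + 2))} (h : s.card = 3) :
    ∃ a b c : Fin (m + 2), a.val < b.val ∧ b.val < c.val ∧ s = {a, b, c} := by
  obtain ⟨x, y, z, hxy, hxz, hyz, rfl⟩ := Finset.card_eq_three.mp h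
  have hxy' : x.val ≠ y.val := fun h => hxy (Fin.ext h)
  have hxz' : x.val ≠ z.val := fun h => hxz (Fin.ext h)
  have hyz' : y.val ≠ z.val := fun h => hyz (Fin.ext h)
  have hperm : ∀ u v w : Fin (m + 2),
      ({x, y, z} : Finset (Fin (m + 2))) = {u, v, w} ∨
      ({x, y, z} : Finset (Fin (m + 2))) ≠ {u, v, w} := fun _ _ _ => em _
  rcases Nat.lt_or_ge x.val y.val with h1 | h1 <;> rcases Nat.lt_or_ge y.val z.val with h2 | h2 <;>
    rcases Nat.lt_or_ge x.val z.val with h3 | h3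
  · exact ⟨x, y, z, h1, h2, rfl⟩
  · exact ⟨x, y, z, h1, h2, rfl⟩
  · exact ⟨x, z, y, by omega, by omega, by ext u; simp; tauto⟩
  · exact ⟨z, x, y, by omega, by omega, by ext u; simp; tauto⟩
  · exact ⟨y, x, z, by omega, by omega, by ext u; simp; tauto⟩
  · exact ⟨y, z, x, by omega, by omega, by ext u; simp; tauto⟩
  · exact ⟨y, z, x, by omega, by omega, by ext u; simp; tauto⟩
  · exact ⟨z, y, x, by omega, by omega, by ext u; simp; tauto⟩

open Finset Equiv Equiv.Perm in
open scoped Classical in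
lemma countT (β : Perm (Fin (m + 2))) (hβ : ∀ x, β x = x + 1)
    (hc : β.IsCycle) (hs : β.support = univ) :
    (univ.filter fun γ : Perm (Fin (m + 2)) =>
      γ.IsCycle ∧ γ.support = univ ∧ (γ * β⁻¹).support.card ≤ 3).card
    = 1 + Nat.choose (m + 2) 3 := by
  classical
  have hsplit : (univ.filter fun γ : Perm (Fin (m + 2)) =>
      γ.IsCycle ∧ γ.support = univ ∧ (γ * β⁻¹).support.card ≤ 3)
      = insert β (univ.filter fun γ : Perm (Fin (m + 2)) =>
        γ.IsCycle ∧ γ.support = univ ∧ (γ * β⁻¹).support.card = 3) := by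
    ext γ
    simp only [mem_filter, mem_univ, true_and, mem_insert]
    constructor
    · rintro ⟨h1, h2, h3⟩
      have hne1 : (γ * β⁻¹).support.card ≠ 1 := Equiv.Perm.card_support_ne_one _
      rcases Nat.lt_or_ge (γ * β⁻¹).support.card 3 with h4 | h4
      · -- card 0 or 2
        rcases Nat.lt_or_ge (γ * β⁻¹).support.card 2 with h5 | h5
        · -- card 0
          have h0 : (γ * β⁻¹).support.card = 0 := by omega
          left
          have : γ * β⁻¹ = 1 := by
            rw [← Equiv.Perm.support_eq_empty_iff, ← Finset.card_eq_zero]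
            exact h0
          have := mul_inv_eq_one.mp this
          exact this
        · -- card 2: swap, impossible by sign
          exfalso
          have h2' : (γ * β⁻¹).support.card = 2 := by omega
          obtain ⟨x, y, hxy, hswap⟩ := Equiv.Perm.card_support_eq_two.mp h2'
          have hsign : Equiv.Perm.sign γ = Equiv.Perm.sign (γ * β⁻¹) * Equiv.Perm.sign β := by
            rw [← map_mul, inv_mul_cancel_right]
          rw [hswap, Equiv.Perm.sign_swap hxy] at hsign
          have hsγ : Equiv.Perm.sign γ = -(-1) ^ γ.support.card := h1.sign
          have hsβ : Equiv.Perm.sign β = -(-1) ^ β.support.card := hc.sign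
          have hss : Equiv.Perm.sign γ = Equiv.Perm.sign β := by
            rw [hsγ, hsβ, h2, hs]
          rw [hss, neg_one_mul] at hsign
          rcases Int.units_eq_one_or (Equiv.Perm.sign β) with h | h <;> rw [h] at hsign <;>
            exact absurd hsign (by decide)
      · right
        exact ⟨h1, h2, by omega⟩
    · rintro (rfl | ⟨h1, h2, h3⟩)
      · refine ⟨hc, hs, ?_⟩
        simp
      · exact ⟨h1, h2, by omega⟩
  rw [hsplit, Finset.card_insert_of_notMem (by simp), Nat.add_comm]
  congr 1
  have hpc : (Finset.powersetCard 3 (univ : Finset (Fin (m + 2)))).card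
      = (m + 2).choose 3 := by
    rw [Finset.card_powersetCard, Finset.card_univ, Fintype.card_fin]
  rw [← hpc]
  apply Finset.card_bij (fun γ _ => (γ * β⁻¹).support)
  · intro γ hγ
    simp only [mem_filter, mem_univ, true_and] at hγ
    rw [Finset.mem_powersetCard]
    exact ⟨Finset.subset_univ _, hγ.2.2⟩
  · intro γ1 hγ1 γ2 hγ2 heq
    simp only [mem_filter, mem_univ, true_and] at hγ1 hγ2
    obtain ⟨a, b, c, hab, hbc, hset⟩ := sorted_of_card_three hγ1.2.2
    have hne_ab : a ≠ b := Fin.ne_of_val_ne (by omega)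
    have hne_bc : b ≠ c := Fin.ne_of_val_ne (by omega)
    have hne_ac : a ≠ c := Fin.ne_of_val_ne (by omega)
    have key : ∀ γ : Perm (Fin (m + 2)), γ.IsCycle → γ.support = univ →
        (γ * β⁻¹).support = {a, b, c} → γ = f3 a b c * β := by
      intro γ hγc hγs hγsup
      rcases eq_f3_of_support hne_ab hne_bc hne_ac hγsup with h | h
      · rw [← h, inv_mul_cancel_right]
      · exfalso
        apply bad_orientation hab hbc hβ
        have : γ = f3 a c b * β := by rw [← h, inv_mul_cancel_right]
        rw [← this]
        exact ⟨hγc, hγs⟩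
    rw [key γ1 hγ1.1 hγ1.2.1 hset, key γ2 hγ2.1 hγ2.2.1 (by rw [← heq]; exact hset)]
  · intro s hstate
    rw [Finset.mem_powersetCard] at hstate
    obtain ⟨a, b, c, hab, hbc, hset⟩ := sorted_of_card_three hstate.2
    have hne_ab : a ≠ b := Fin.ne_of_val_ne (by omega)
    have hne_bc : b ≠ c := Fin.ne_of_val_ne (by omega)
    have hne_ac : a ≠ c := Fin.ne_of_val_ne (by omega)
    obtain ⟨hcyc, hsup⟩ := good_orientation hab hbc hβ
    refine ⟨f3 a b c * β, ?_, ?_⟩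
    · simp only [mem_filter, mem_univ, true_and]
      refine ⟨hcyc, hsup, ?_⟩
      rw [mul_inv_cancel_right, f3_support hne_ab hne_bc hne_ac, ← hset]
      exact hstate.2
    · rw [mul_inv_cancel_right, f3_support hne_ab hne_bc hne_ac, ← hset]

end CleAux
open Finset Equiv Equiv.Perm in
theorem cle_three_of_n_cycle (n : ℕ) (hn : 1 ≤ n) (β : Equiv.Perm (Fin n))
    (hβ : β.IsCycle ∧ β.support.card = n) :
    cle 3 β = n * (1 + Nat.choose n 3) := by
  obtain ⟨hc, hcard⟩ := hβ
  rcases Nat.lt_or_ge n 4 with h4 | h4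
  · -- small cases: every permutation satisfies the bound
    have hle : ∀ f g : Equiv.Perm (Fin n), hamming f g ≤ 3 := by
      intro f g
      calc hamming f g ≤ (univ : Finset (Fin n)).card := Finset.card_filter_le _ _
        _ = n := by rw [card_univ, Fintype.card_fin]
        _ ≤ 3 := by omega
    have hfact : cle 3 β = Nat.factorial n := by
      unfold cle
      rw [Finset.filter_true_of_mem (fun α _ => hle _ _), card_univ, Fintype.card_perm,
        Fintype.card_fin]
    rw [hfact]
    interval_cases n <;> decide
  · obtain ⟨m, rfl⟩ : ∃ m, n = m + 2 := ⟨n - 2, by omega⟩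
    have hfc : (finRotate (m + 2)).IsCycle := isCycle_finRotate
    have hfs : (finRotate (m + 2)).support = univ := support_finRotate
    obtain ⟨δ, hδ⟩ := isConj_iff.mp (hfc.isConj hc
      (by rw [hfs, hcard, card_univ, Fintype.card_fin]))
    rw [← hδ, CleAux.cle_conj, CleAux.cle_eq hfc hfs,
      CleAux.countT (finRotate (m + 2)) (fun x => finRotate_succ_apply x) hfc hfs]
end

section
/- Let n ≥ 2 and let β be an n-cycle in S_n. Then the number of permutations α ∈ S_n with H(αβ, βα) ≤ 4 equals n·(1 + C(n+1,4)), where C(n+1,4) is the binomial coefficient. -/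
open Equiv Equiv.Perm Finset
namespace CleWork
variable {n : ℕ}
def z1 (n : ℕ) [NeZero n] : Equiv.Perm (ZMod n) := Equiv.addRight 1
def Cyc [NeZero n] (γ : Equiv.Perm (ZMod n)) : Prop := γ.IsCycle ∧ γ.support = Finset.univ
lemma mulz1_apply [NeZero n] (δ : Equiv.Perm (ZMod n)) (x : ZMod n) :
    (z1 n * δ) x = δ x + 1 := rfl
lemma sameCycle_of_pow {G : Type*} {γ : Equiv.Perm G} {x y : G} (m : ℕ)
    (h : (γ ^ m) x = y) : γ.SameCycle x y :=
  ⟨m, by simpa [zpow_natCast] using h⟩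
lemma off_inj [NeZero n] (a : ZMod n) {u v : ℕ} (hu : u < n) (hv : v < n) :
    a + (u : ZMod n) = a + (v : ZMod n) ↔ u = v := by
  constructor
  · intro h
    have h2 : (u : ZMod n) = (v : ZMod n) := add_left_cancel h
    have := congrArg ZMod.val h2
    rwa [ZMod.val_cast_of_lt hu, ZMod.val_cast_of_lt hv] at this
  · rintro rfl; rfl
lemma off_eq_base [NeZero n] (a : ZMod n) {o : ℕ} (ho : o < n) :
    a + (o : ZMod n) = a ↔ o = 0 := by
  have h := off_inj a ho (Nat.pos_of_ne_zero (NeZero.ne n))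
  simpa using h
lemma off_ne [NeZero n] (a : ZMod n) {u v : ℕ} (hu : u < n) (hv : v < n) (huv : u ≠ v) :
    a + (u : ZMod n) ≠ a + (v : ZMod n) := fun h => huv ((off_inj a hu hv).mp h)
lemma off_n [NeZero n] (a : ZMod n) : a + ((n : ℕ) : ZMod n) = a := by simp
lemma arc [NeZero n] {γ : Equiv.Perm (ZMod n)} {a : ZMod n} {lo hi : ℕ}
    (hstep : ∀ o, lo ≤ o → o < hi → γ (a + (o : ZMod n)) = a + ((o + 1 : ℕ) : ZMod n)) :
    ∀ t, lo + t ≤ hi → (γ ^ t) (a + (lo : ZMod n)) = a + ((lo + t : ℕ) : ZMod n) := by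
  intro t
  induction t with
  | zero => simp
  | succ m ih =>
    intro h
    rw [pow_succ']
    show γ ((γ ^ m) (a + (lo : ZMod n))) = _
    rw [ih (by omega), hstep (lo + m) (by omega) (by omega), ← Nat.add_assoc]
lemma compP {G : Type*} (γ : Equiv.Perm G) (s t : ℕ) (x : G) :
    (γ ^ (t + s)) x = (γ ^ t) ((γ ^ s) x) := by
  rw [pow_add]; rfl

/-- the good 3-cycle: `a ↦ a+i ↦ a+j ↦ a`. -/
lemma good3 [NeZero n] (a : ZMod n) {i j : ℕ} (h0 : 0 < i) (hij : i < j) (hjn : j < n) :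
    Cyc (z1 n * (swap a (a + (j : ZMod n)) * swap a (a + (i : ZMod n)))) ∧
    (swap a (a + (j : ZMod n)) * swap a (a + (i : ZMod n))).support
      = {a, a + (i : ZMod n), a + (j : ZMod n)} := by
  set b := a + (i : ZMod n) with hbdef
  set c := a + (j : ZMod n) with hcdef
  have hab : a ≠ b := fun h => by
    have := (off_eq_base a (by omega)).mp h.symm; omega
  have hac : a ≠ c := fun h => by
    have := (off_eq_base a (by omega)).mp h.symm; omega
  have hbc : b ≠ c := off_ne a (by omega) (by omega) (by omega)
  set δ := swap a c * swap a b with hδdef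
  have hδa : δ a = b := by
    rw [hδdef, Equiv.Perm.mul_apply, swap_apply_left, swap_apply_of_ne_of_ne hab.symm hbc]
  have hδb : δ b = c := by
    rw [hδdef, Equiv.Perm.mul_apply, swap_apply_right, swap_apply_left]
  have hδc : δ c = a := by
    rw [hδdef, Equiv.Perm.mul_apply, swap_apply_of_ne_of_ne hac.symm hbc.symm, swap_apply_right]
  have hδo : ∀ x, x ≠ a → x ≠ b → x ≠ c → δ x = x := fun x h1 h2 h3 => by
    rw [hδdef, Equiv.Perm.mul_apply, swap_apply_of_ne_of_ne h1 h2, swap_apply_of_ne_of_ne h1 h3]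
  set γ := z1 n * δ with hγdef
  have hga : γ a = a + ((i + 1 : ℕ) : ZMod n) := by
    rw [hγdef, mulz1_apply, hδa, hbdef]; push_cast; ring
  have hgb : γ b = a + ((j + 1 : ℕ) : ZMod n) := by
    rw [hγdef, mulz1_apply, hδb, hcdef]; push_cast; ring
  have hgc : γ c = a + ((1 : ℕ) : ZMod n) := by
    rw [hγdef, mulz1_apply, hδc]; push_cast; ring
  have hgo : ∀ o : ℕ, 0 < o → o < n → o ≠ i → o ≠ j →
      γ (a + (o : ZMod n)) = a + ((o + 1 : ℕ) : ZMod n) := by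
    intro o ho1 ho2 ho3 ho4
    have h1 : a + (o : ZMod n) ≠ a := fun h => by
      have := (off_eq_base a ho2).mp h; omega
    have h2 : a + (o : ZMod n) ≠ b := off_ne a ho2 (by omega) ho3
    have h3 : a + (o : ZMod n) ≠ c := off_ne a ho2 (by omega) ho4
    rw [hγdef, mulz1_apply, hδo _ h1 h2 h3]; push_cast; ring
  -- support of γ is everything
  have hsupp : γ.support = Finset.univ := by
    apply Finset.eq_univ_iff_forall.mpr
    intro x
    rw [Equiv.Perm.mem_support]
    have hx : x = a + ((x - a).val : ZMod n) := by rw [ZMod.natCast_zmod_val]; ring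
    set o := (x - a).val with hodef
    have hon : o < n := ZMod.val_lt _
    rcases Nat.eq_zero_or_pos o with ho | ho
    · -- x = a
      have hxa : x = a := by rw [hx, ho]; simp
      rw [hxa, hga]
      intro h
      have := (off_eq_base a (by omega)).mp h; omega
    rcases eq_or_ne o i with rfl | hoi
    · rw [← hbdef] at hx; rw [hx, hgb]
      rcases eq_or_ne (j + 1) n with hj1 | hj1
      · rw [hj1, off_n]
        exact fun h => by have := (off_eq_base a (by omega)).mp h.symm; omega
      · exact off_ne a (by omega) (by omega) (by omega)
    rcases eq_or_ne o j with rfl | hoj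
    · rw [← hcdef] at hx; rw [hx, hgc]
      exact off_ne a (by omega) (by omega) (by omega)
    · rw [hx, hgo o ho hon hoi hoj]
      rcases eq_or_ne (o + 1) n with ho1 | ho1
      · rw [ho1, off_n]
        exact fun h => by have := (off_eq_base a (by omega)).mp h.symm; omega
      · exact off_ne a (by omega) (by omega) (by omega)
  constructor
  · constructor
    swap
    · exact hsupp
    -- IsCycle
    have hall : ∀ y, γ y ≠ y := fun y =>
      Equiv.Perm.mem_support.mp (by rw [hsupp]; exact Finset.mem_univ y)
    refine ⟨a + ((1 : ℕ) : ZMod n), hall _, ?_⟩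
    intro y _
    -- milestones
    have A1 : ∀ t, t ≤ i - 1 →
        (γ ^ t) (a + ((1 : ℕ) : ZMod n)) = a + ((1 + t : ℕ) : ZMod n) := by
      intro t ht
      exact arc (lo := 1) (hi := i)
        (fun o ho1 ho2 => hgo o (by omega) (by omega) (by omega) (by omega)) t (by omega)
    have M1 : (γ ^ i) (a + ((1 : ℕ) : ZMod n)) = a + ((j + 1 : ℕ) : ZMod n) := by
      rw [show i = 1 + (i - 1) by omega, compP, A1 (i - 1) le_rfl,
        show 1 + (i - 1) = i by omega, pow_one, ← hbdef, hgb]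
    have A2 : ∀ t, t ≤ n - (j + 1) →
        (γ ^ t) (a + ((j + 1 : ℕ) : ZMod n)) = a + ((j + 1 + t : ℕ) : ZMod n) := by
      intro t ht
      exact arc (lo := j + 1) (hi := n)
        (fun o ho1 ho2 => hgo o (by omega) (by omega) (by omega) (by omega)) t (by omega)
    have M2 : (γ ^ (i + (n - j - 1))) (a + ((1 : ℕ) : ZMod n)) = a := by
      rw [show i + (n - j - 1) = (n - j - 1) + i by omega, compP, M1,
        A2 (n - j - 1) (by omega), show j + 1 + (n - j - 1) = n by omega, off_n]
    have M3 : (γ ^ (i + (n - j - 1) + 1)) (a + ((1 : ℕ) : ZMod n))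
        = a + ((i + 1 : ℕ) : ZMod n) := by
      rw [show i + (n - j - 1) + 1 = 1 + (i + (n - j - 1)) by omega, compP, M2, pow_one, hga]
    have A3 : ∀ t, t ≤ j - (i + 1) →
        (γ ^ t) (a + ((i + 1 : ℕ) : ZMod n)) = a + ((i + 1 + t : ℕ) : ZMod n) := by
      intro t ht
      exact arc (lo := i + 1) (hi := j)
        (fun o ho1 ho2 => hgo o (by omega) (by omega) (by omega) (by omega)) t (by omega)
    -- coverage
    have hy : y = a + ((y - a).val : ZMod n) := by rw [ZMod.natCast_zmod_val]; ring
    set o := (y - a).val with hodef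
    have hon : o < n := ZMod.val_lt _
    rcases Nat.eq_zero_or_pos o with ho | ho
    · refine sameCycle_of_pow (i + (n - j - 1)) ?_
      rw [M2, hy, ho]; simp
    rcases Nat.lt_or_ge o (i + 1) with hoi | hoi
    · refine sameCycle_of_pow (o - 1) ?_
      rw [A1 (o - 1) (by omega), hy, show 1 + (o - 1) = o by omega]
    rcases Nat.lt_or_ge o (j + 1) with hoj | hoj
    · refine sameCycle_of_pow ((o - (i + 1)) + (i + (n - j - 1) + 1)) ?_
      rw [compP, M3, A3 (o - (i + 1)) (by omega), hy, show i + 1 + (o - (i + 1)) = o by omega]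
    · refine sameCycle_of_pow ((o - (j + 1)) + i) ?_
      rw [compP, M1, A2 (o - (j + 1)) (by omega), hy, show j + 1 + (o - (j + 1)) = o by omega]
  · -- support of δ
    ext x
    simp only [Equiv.Perm.mem_support, Finset.mem_insert, Finset.mem_singleton]
    constructor
    · intro h
      by_contra hc
      push_neg at hc
      exact h (hδo x hc.1 hc.2.1 hc.2.2)
    · rintro (rfl | rfl | rfl)
      · rw [hδa]; exact fun h => hab h.symm
      · rw [hδb]; exact hbc.symm
      · rw [hδc]; exact hac

/-- the good double transposition: `(a, a+j) (a+i, a+k)` with `i<j<k`. -/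
lemma good4 [NeZero n] (a : ZMod n) {i j k : ℕ}
    (h0 : 0 < i) (hij : i < j) (hjk : j < k) (hkn : k < n) :
    Cyc (z1 n * (swap a (a + (j : ZMod n)) * swap (a + (i : ZMod n)) (a + (k : ZMod n)))) ∧
    (swap a (a + (j : ZMod n)) * swap (a + (i : ZMod n)) (a + (k : ZMod n))).support
      = {a, a + (i : ZMod n), a + (j : ZMod n), a + (k : ZMod n)} := by
  set b := a + (i : ZMod n) with hbdef
  set c := a + (j : ZMod n) with hcdef
  set d := a + (k : ZMod n) with hddef
  have hab : a ≠ b := fun h => by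
    have := (off_eq_base a (by omega)).mp h.symm; omega
  have hac : a ≠ c := fun h => by
    have := (off_eq_base a (by omega)).mp h.symm; omega
  have had : a ≠ d := fun h => by
    have := (off_eq_base a (by omega)).mp h.symm; omega
  have hbc : b ≠ c := off_ne a (by omega) (by omega) (by omega)
  have hbd : b ≠ d := off_ne a (by omega) (by omega) (by omega)
  have hcd : c ≠ d := off_ne a (by omega) (by omega) (by omega)
  set δ := swap a c * swap b d with hδdef
  have hδa : δ a = c := by
    rw [hδdef, Equiv.Perm.mul_apply, swap_apply_of_ne_of_ne hab had, swap_apply_left]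
  have hδb : δ b = d := by
    rw [hδdef, Equiv.Perm.mul_apply, swap_apply_left, swap_apply_of_ne_of_ne had.symm hcd.symm]
  have hδc : δ c = a := by
    rw [hδdef, Equiv.Perm.mul_apply, swap_apply_of_ne_of_ne hbc.symm hcd, swap_apply_right]
  have hδd : δ d = b := by
    rw [hδdef, Equiv.Perm.mul_apply, swap_apply_right, swap_apply_of_ne_of_ne hab.symm hbc]
  have hδo : ∀ x, x ≠ a → x ≠ b → x ≠ c → x ≠ d → δ x = x := fun x h1 h2 h3 h4 => by
    rw [hδdef, Equiv.Perm.mul_apply, swap_apply_of_ne_of_ne h2 h4, swap_apply_of_ne_of_ne h1 h3]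
  set γ := z1 n * δ with hγdef
  have hga : γ a = a + ((j + 1 : ℕ) : ZMod n) := by
    rw [hγdef, mulz1_apply, hδa, hcdef]; push_cast; ring
  have hgb : γ b = a + ((k + 1 : ℕ) : ZMod n) := by
    rw [hγdef, mulz1_apply, hδb, hddef]; push_cast; ring
  have hgc : γ c = a + ((1 : ℕ) : ZMod n) := by
    rw [hγdef, mulz1_apply, hδc]; push_cast; ring
  have hgd : γ d = a + ((i + 1 : ℕ) : ZMod n) := by
    rw [hγdef, mulz1_apply, hδd, hbdef]; push_cast; ring
  have hgo : ∀ o : ℕ, 0 < o → o < n → o ≠ i → o ≠ j → o ≠ k →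
      γ (a + (o : ZMod n)) = a + ((o + 1 : ℕ) : ZMod n) := by
    intro o ho1 ho2 h3 h4 h5
    have h1 : a + (o : ZMod n) ≠ a := fun h => by
      have := (off_eq_base a ho2).mp h; omega
    rw [hγdef, mulz1_apply,
      hδo _ h1 (off_ne a ho2 (by omega) h3) (off_ne a ho2 (by omega) h4)
        (off_ne a ho2 (by omega) h5)]
    push_cast; ring
  have hsupp : γ.support = Finset.univ := by
    apply Finset.eq_univ_iff_forall.mpr
    intro x
    rw [Equiv.Perm.mem_support]
    have hx : x = a + ((x - a).val : ZMod n) := by rw [ZMod.natCast_zmod_val]; ring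
    set o := (x - a).val with hodef
    have hon : o < n := ZMod.val_lt _
    rcases Nat.eq_zero_or_pos o with ho | ho
    · have hxa : x = a := by rw [hx, ho]; simp
      rw [hxa, hga]
      intro h
      have := (off_eq_base a (by omega)).mp h; omega
    rcases eq_or_ne o i with rfl | hoi
    · rw [← hbdef] at hx; rw [hx, hgb]
      rcases eq_or_ne (k + 1) n with hk1 | hk1
      · rw [hk1, off_n]
        exact fun h => by have := (off_eq_base a (by omega)).mp h.symm; omega
      · exact off_ne a (by omega) (by omega) (by omega)
    rcases eq_or_ne o j with rfl | hoj
    · rw [← hcdef] at hx; rw [hx, hgc]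
      exact off_ne a (by omega) (by omega) (by omega)
    rcases eq_or_ne o k with rfl | hok
    · rw [← hddef] at hx; rw [hx, hgd]
      exact off_ne a (by omega) (by omega) (by omega)
    · rw [hx, hgo o ho hon hoi hoj hok]
      rcases eq_or_ne (o + 1) n with ho1 | ho1
      · rw [ho1, off_n]
        exact fun h => by have := (off_eq_base a (by omega)).mp h.symm; omega
      · exact off_ne a (by omega) (by omega) (by omega)
  constructor
  · refine ⟨?_, hsupp⟩
    have hall : ∀ y, γ y ≠ y := fun y =>
      Equiv.Perm.mem_support.mp (by rw [hsupp]; exact Finset.mem_univ y)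
    refine ⟨a + ((1 : ℕ) : ZMod n), hall _, ?_⟩
    intro y _
    have A1 : ∀ t, t ≤ i - 1 →
        (γ ^ t) (a + ((1 : ℕ) : ZMod n)) = a + ((1 + t : ℕ) : ZMod n) := fun t ht =>
      arc (lo := 1) (hi := i)
        (fun o ho1 ho2 => hgo o (by omega) (by omega) (by omega) (by omega) (by omega))
        t (by omega)
    have M1 : (γ ^ i) (a + ((1 : ℕ) : ZMod n)) = a + ((k + 1 : ℕ) : ZMod n) := by
      rw [show i = 1 + (i - 1) by omega, compP, A1 (i - 1) le_rfl,
        show 1 + (i - 1) = i by omega, pow_one, ← hbdef, hgb]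
    have A2 : ∀ t, t ≤ n - (k + 1) →
        (γ ^ t) (a + ((k + 1 : ℕ) : ZMod n)) = a + ((k + 1 + t : ℕ) : ZMod n) := fun t ht =>
      arc (lo := k + 1) (hi := n)
        (fun o ho1 ho2 => hgo o (by omega) (by omega) (by omega) (by omega) (by omega))
        t (by omega)
    have M2 : (γ ^ (i + (n - k - 1))) (a + ((1 : ℕ) : ZMod n)) = a := by
      rw [show i + (n - k - 1) = (n - k - 1) + i by omega, compP, M1,
        A2 (n - k - 1) (by omega), show k + 1 + (n - k - 1) = n by omega, off_n]
    have M3 : (γ ^ (i + (n - k - 1) + 1)) (a + ((1 : ℕ) : ZMod n))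
        = a + ((j + 1 : ℕ) : ZMod n) := by
      rw [show i + (n - k - 1) + 1 = 1 + (i + (n - k - 1)) by omega, compP, M2, pow_one, hga]
    have A3 : ∀ t, t ≤ k - (j + 1) →
        (γ ^ t) (a + ((j + 1 : ℕ) : ZMod n)) = a + ((j + 1 + t : ℕ) : ZMod n) := fun t ht =>
      arc (lo := j + 1) (hi := k)
        (fun o ho1 ho2 => hgo o (by omega) (by omega) (by omega) (by omega) (by omega))
        t (by omega)
    have M4 : (γ ^ (i + (n - k - 1) + 1 + (k - j - 1) + 1)) (a + ((1 : ℕ) : ZMod n))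
        = a + ((i + 1 : ℕ) : ZMod n) := by
      rw [show i + (n - k - 1) + 1 + (k - j - 1) + 1
          = 1 + ((k - j - 1) + (i + (n - k - 1) + 1)) by omega, compP, compP, M3,
        A3 (k - j - 1) (by omega), show j + 1 + (k - j - 1) = k by omega, pow_one,
        ← hddef, hgd]
    have A4 : ∀ t, t ≤ j - (i + 1) →
        (γ ^ t) (a + ((i + 1 : ℕ) : ZMod n)) = a + ((i + 1 + t : ℕ) : ZMod n) := fun t ht =>
      arc (lo := i + 1) (hi := j)
        (fun o ho1 ho2 => hgo o (by omega) (by omega) (by omega) (by omega) (by omega))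
        t (by omega)
    have hy : y = a + ((y - a).val : ZMod n) := by rw [ZMod.natCast_zmod_val]; ring
    set o := (y - a).val with hodef
    have hon : o < n := ZMod.val_lt _
    rcases Nat.eq_zero_or_pos o with ho | ho
    · refine sameCycle_of_pow (i + (n - k - 1)) ?_
      rw [M2, hy, ho]; simp
    rcases Nat.lt_or_ge o (i + 1) with h1 | h1
    · refine sameCycle_of_pow (o - 1) ?_
      rw [A1 (o - 1) (by omega), hy, show 1 + (o - 1) = o by omega]
    rcases Nat.lt_or_ge o (j + 1) with h2 | h2
    · refine sameCycle_of_pow ((o - (i + 1)) + (i + (n - k - 1) + 1 + (k - j - 1) + 1)) ?_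
      rw [compP, M4, A4 (o - (i + 1)) (by omega), hy,
        show i + 1 + (o - (i + 1)) = o by omega]
    rcases Nat.lt_or_ge o (k + 1) with h3 | h3
    · refine sameCycle_of_pow ((o - (j + 1)) + (i + (n - k - 1) + 1)) ?_
      rw [compP, M3, A3 (o - (j + 1)) (by omega), hy,
        show j + 1 + (o - (j + 1)) = o by omega]
    · refine sameCycle_of_pow ((o - (k + 1)) + i) ?_
      rw [compP, M1, A2 (o - (k + 1)) (by omega), hy,
        show k + 1 + (o - (k + 1)) = o by omega]
  · ext x
    simp only [Equiv.Perm.mem_support, Finset.mem_insert, Finset.mem_singleton]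
    constructor
    · intro h
      by_contra hcon
      push_neg at hcon
      exact h (hδo x hcon.1 hcon.2.1 hcon.2.2.1 hcon.2.2.2)
    · rintro (rfl | rfl | rfl | rfl)
      · rw [hδa]; exact hac.symm
      · rw [hδb]; exact hbd.symm
      · rw [hδc]; exact hac
      · rw [hδd]; exact hbd

lemma pow_z1 [NeZero n] (k : ℕ) (x : ZMod n) : ((z1 n) ^ k) x = x + (k : ZMod n) := by
  induction k with
  | zero => simp
  | succ m ih =>
    rw [pow_succ']
    show z1 n (((z1 n) ^ m) x) = _
    rw [ih]
    show x + (m : ZMod n) + 1 = _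
    push_cast; ring

lemma z1cyc [NeZero n] (hn : 2 ≤ n) : Cyc (z1 n) := by
  haveI : Fact (1 < n) := ⟨hn⟩
  have hsupp : (z1 n).support = Finset.univ := by
    apply Finset.eq_univ_iff_forall.mpr
    intro x
    rw [Equiv.Perm.mem_support]
    show x + 1 ≠ x
    simp
  refine ⟨⟨0, ?_, ?_⟩, hsupp⟩
  · show (0 : ZMod n) + 1 ≠ 0
    simp
  · intro y _
    exact sameCycle_of_pow y.val (by rw [pow_z1, zero_add, ZMod.natCast_zmod_val])

lemma killInv [NeZero n] {γ : Equiv.Perm (ZMod n)} (hcyc : Cyc γ) {T : Finset (ZMod n)}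
    (hinv : ∀ x ∈ T, γ x ∈ T) {x0 y0 : ZMod n} (hx0 : x0 ∈ T) (hy0 : y0 ∉ T) : False := by
  have hall : ∀ y, γ y ≠ y := fun y =>
    Equiv.Perm.mem_support.mp (by rw [hcyc.2]; exact Finset.mem_univ y)
  obtain ⟨m, hm⟩ := hcyc.1.exists_pow_eq (hall x0) (hall y0)
  have key : ∀ t : ℕ, (γ ^ t) x0 ∈ T := by
    intro t
    induction t with
    | zero => simpa
    | succ s ih =>
      rw [pow_succ']
      exact hinv _ ih
  exact hy0 (hm ▸ key m)

lemma killA [NeZero n] {δ : Equiv.Perm (ZMod n)} (a : ZMod n) {i : ℕ}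
    (h0 : 0 < i) (hin : i < n)
    (hfix : ∀ t : ℕ, 0 < t → t < i → δ (a + (t : ZMod n)) = a + (t : ZMod n))
    (hjump : δ (a + (i : ZMod n)) = a)
    (hcyc : Cyc (z1 n * δ)) : False := by
  refine killInv hcyc (T := (Finset.Icc 1 i).image fun t : ℕ => a + (t : ZMod n)) ?_
    (x0 := a + ((1 : ℕ) : ZMod n)) ?_ (y0 := a) ?_
  · intro x hx
    simp only [Finset.mem_image, Finset.mem_Icc] at hx ⊢
    obtain ⟨t, ⟨ht1, ht2⟩, rfl⟩ := hx
    rcases eq_or_lt_of_le ht2 with rfl | htlt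
    · refine ⟨1, ⟨le_rfl, h0⟩, ?_⟩
      rw [mulz1_apply, hjump]
      norm_num
    · refine ⟨t + 1, ⟨by omega, by omega⟩, ?_⟩
      rw [mulz1_apply, hfix t (by omega) htlt]
      push_cast; ring
  · simp only [Finset.mem_image, Finset.mem_Icc]
    exact ⟨1, ⟨le_rfl, h0⟩, rfl⟩
  · simp only [Finset.mem_image, Finset.mem_Icc]
    rintro ⟨t, ⟨ht1, ht2⟩, ht3⟩
    have := (off_eq_base a (by omega)).mp ht3
    omega

lemma killB [NeZero n] {δ : Equiv.Perm (ZMod n)} (a : ZMod n) {i j k : ℕ}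
    (h0 : 0 < i) (hij : i < j) (hjk : j < k) (hkn : k < n)
    (hfix1 : ∀ t : ℕ, 0 < t → t < i → δ (a + (t : ZMod n)) = a + (t : ZMod n))
    (hfix2 : ∀ t : ℕ, j < t → t < k → δ (a + (t : ZMod n)) = a + (t : ZMod n))
    (hj1 : δ (a + (i : ZMod n)) = a + (j : ZMod n))
    (hj2 : δ (a + (k : ZMod n)) = a)
    (hcyc : Cyc (z1 n * δ)) : False := by
  refine killInv hcyc
    (T := ((Finset.Icc 1 i ∪ Finset.Icc (j + 1) k)).image fun t : ℕ => a + (t : ZMod n)) ?_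
    (x0 := a + ((1 : ℕ) : ZMod n)) ?_ (y0 := a) ?_
  · intro x hx
    simp only [Finset.mem_image, Finset.mem_union, Finset.mem_Icc] at hx ⊢
    obtain ⟨t, ht, rfl⟩ := hx
    rcases eq_or_ne t i with rfl | hti
    · refine ⟨j + 1, Or.inr ⟨le_rfl, by omega⟩, ?_⟩
      rw [mulz1_apply, hj1]
      push_cast; ring
    rcases eq_or_ne t k with rfl | htk
    · refine ⟨1, Or.inl ⟨le_rfl, h0⟩, ?_⟩
      rw [mulz1_apply, hj2]
      norm_num
    · refine ⟨t + 1, ?_, ?_⟩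
      · rcases ht with ⟨h1, h2⟩ | ⟨h1, h2⟩
        · exact Or.inl ⟨by omega, by omega⟩
        · exact Or.inr ⟨by omega, by omega⟩
      · have hfix : δ (a + (t : ZMod n)) = a + (t : ZMod n) := by
          rcases ht with ⟨h1, h2⟩ | ⟨h1, h2⟩
          · exact hfix1 t (by omega) (by omega)
          · exact hfix2 t (by omega) (by omega)
        rw [mulz1_apply, hfix]
        push_cast; ring
  · simp only [Finset.mem_image, Finset.mem_union, Finset.mem_Icc]
    exact ⟨1, Or.inl ⟨le_rfl, h0⟩, rfl⟩
  · simp only [Finset.mem_image, Finset.mem_union, Finset.mem_Icc]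
    rintro ⟨t, ht, ht3⟩
    have ht4 : t < n := by rcases ht with ⟨h1, h2⟩ | ⟨h1, h2⟩ <;> omega
    have := (off_eq_base a ht4).mp ht3
    rcases ht with ⟨h1, h2⟩ | ⟨h1, h2⟩ <;> omega

lemma sign4 [NeZero n] {δ : Equiv.Perm (ZMod n)} {a b c d : ZMod n}
    (hab : a ≠ b)
    (h1 : δ a = b) (h2 : δ b = c) (h3 : δ c = d) (h4 : δ d = a)
    (hmove : ∀ y, δ y ≠ y → y = a ∨ y = b ∨ y = c ∨ y = d)
    (hcard : δ.support.card = 4) :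
    Equiv.Perm.sign δ = -1 := by
  have hcyc : δ.IsCycle := by
    refine ⟨a, by rw [h1]; exact hab.symm, ?_⟩
    intro y hy
    rcases hmove y hy with rfl | rfl | rfl | rfl
    · exact ⟨0, by simp⟩
    · exact sameCycle_of_pow 1 (by simpa using h1)
    · exact sameCycle_of_pow 2 (by simp [pow_succ, Equiv.Perm.mul_apply, h1, h2])
    · exact sameCycle_of_pow 3 (by simp [pow_succ, Equiv.Perm.mul_apply, h1, h2, h3])
  rw [hcyc.sign, hcard]
  norm_num

lemma signkill [NeZero n] (hn : 2 ≤ n) {δ : Equiv.Perm (ZMod n)}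
    (hsign : Equiv.Perm.sign δ ≠ 1) (hcyc : Cyc (z1 n * δ)) : False := by
  have key : Equiv.Perm.sign (z1 n) * Equiv.Perm.sign δ = Equiv.Perm.sign (z1 n) := by
    rw [← map_mul, hcyc.1.sign, (z1cyc hn).1.sign, hcyc.2, (z1cyc hn).2]
  exact hsign (mul_eq_left.mp key)

lemma uniq3 [NeZero n] {δ : Equiv.Perm (ZMod n)} (a : ZMod n) {i j : ℕ}
    (h0 : 0 < i) (hij : i < j) (hjn : j < n)
    (hsupp : δ.support = {a, a + (i : ZMod n), a + (j : ZMod n)})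
    (hcyc : Cyc (z1 n * δ)) :
    δ = swap a (a + (j : ZMod n)) * swap a (a + (i : ZMod n)) := by
  set b := a + (i : ZMod n) with hbdef
  set c := a + (j : ZMod n) with hcdef
  have hab : a ≠ b := fun h => by have := (off_eq_base a (by omega)).mp h.symm; omega
  have hac : a ≠ c := fun h => by have := (off_eq_base a (by omega)).mp h.symm; omega
  have hbc : b ≠ c := off_ne a (by omega) (by omega) (by omega)
  have hmem : ∀ x : ZMod n, δ x ≠ x ↔ (x = a ∨ x = b ∨ x = c) := fun x => by
    rw [← Equiv.Perm.mem_support, hsupp]; simp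
  have hfix : ∀ x, x ≠ a → x ≠ b → x ≠ c → δ x = x := by
    intro x n1 n2 n3
    by_contra h
    rcases (hmem x).mp h with rfl | rfl | rfl <;> simp_all
  have hfixoff : ∀ t : ℕ, 0 < t → t < i → δ (a + (t : ZMod n)) = a + (t : ZMod n) := by
    intro t ht1 ht2
    exact hfix _ (fun h => by have := (off_eq_base a (by omega)).mp h; omega)
      (off_ne a (by omega) (by omega) (by omega)) (off_ne a (by omega) (by omega) (by omega))
  have himg : ∀ x : ZMod n, δ x ≠ x → (δ x = a ∨ δ x = b ∨ δ x = c) := by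
    intro x hx
    exact (hmem (δ x)).mp (fun h => hx (δ.injective h))
  have hmA : δ a ≠ a := (hmem a).mpr (Or.inl rfl)
  have hmB : δ b ≠ b := (hmem b).mpr (Or.inr (Or.inl rfl))
  have hmC : δ c ≠ c := (hmem c).mpr (Or.inr (Or.inr rfl))
  rcases himg a hmA with h1 | h1 | h1
  · exact absurd h1 hmA
  · -- δ a = b
    rcases himg b hmB with h2 | h2 | h2
    · exact (killA a h0 (by omega) hfixoff h2 hcyc).elim
    · exact absurd h2 hmB
    · -- δ b = c; now δ c = a forced
      rcases himg c hmC with h3 | h3 | h3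
      · apply Equiv.ext
        intro x
        by_cases xa : x = a
        · subst xa
          rw [h1, Equiv.Perm.mul_apply, swap_apply_left, swap_apply_of_ne_of_ne hab.symm hbc]
        by_cases xb : x = b
        · subst xb
          rw [h2, Equiv.Perm.mul_apply, swap_apply_right, swap_apply_left]
        by_cases xc : x = c
        · subst xc
          rw [h3, Equiv.Perm.mul_apply, swap_apply_of_ne_of_ne hac.symm hbc.symm,
            swap_apply_right]
        · rw [hfix x xa xb xc, Equiv.Perm.mul_apply, swap_apply_of_ne_of_ne xa xb, swap_apply_of_ne_of_ne xa xc]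
      · exact absurd (δ.injective (h1.trans h3.symm)) hac
      · exact absurd h3 hmC
  · -- δ a = c
    rcases himg b hmB with h2 | h2 | h2
    · exact (killA a h0 (by omega) hfixoff h2 hcyc).elim
    · exact absurd h2 hmB
    · exact absurd (δ.injective (h1.trans h2.symm)) hab

set_option maxHeartbeats 2000000 in
lemma uniq4 [NeZero n] (hn : 2 ≤ n) {δ : Equiv.Perm (ZMod n)} (a : ZMod n) {i j k : ℕ}
    (h0 : 0 < i) (hij : i < j) (hjk : j < k) (hkn : k < n)
    (hsupp : δ.support = {a, a + (i : ZMod n), a + (j : ZMod n), a + (k : ZMod n)})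
    (hcyc : Cyc (z1 n * δ)) :
    δ = swap a (a + (j : ZMod n)) * swap (a + (i : ZMod n)) (a + (k : ZMod n)) := by
  set b := a + (i : ZMod n) with hbdef
  set c := a + (j : ZMod n) with hcdef
  set d := a + (k : ZMod n) with hddef
  have hab : a ≠ b := fun h => by have := (off_eq_base a (by omega)).mp h.symm; omega
  have hac : a ≠ c := fun h => by have := (off_eq_base a (by omega)).mp h.symm; omega
  have had : a ≠ d := fun h => by have := (off_eq_base a (by omega)).mp h.symm; omega
  have hbc : b ≠ c := off_ne a (by omega) (by omega) (by omega)
  have hbd : b ≠ d := off_ne a (by omega) (by omega) (by omega)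
  have hcd : c ≠ d := off_ne a (by omega) (by omega) (by omega)
  have hmem : ∀ x : ZMod n, δ x ≠ x ↔ (x = a ∨ x = b ∨ x = c ∨ x = d) := fun x => by
    rw [← Equiv.Perm.mem_support, hsupp]; simp
  have hfix : ∀ x, x ≠ a → x ≠ b → x ≠ c → x ≠ d → δ x = x := by
    intro x n1 n2 n3 n4
    by_contra h
    rcases (hmem x).mp h with rfl | rfl | rfl | rfl <;> simp_all
  have hfixoff1 : ∀ t : ℕ, 0 < t → t < i → δ (a + (t : ZMod n)) = a + (t : ZMod n) := by
    intro t ht1 ht2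
    exact hfix _ (fun h => by have := (off_eq_base a (by omega)).mp h; omega)
      (off_ne a (by omega) (by omega) (by omega)) (off_ne a (by omega) (by omega) (by omega))
      (off_ne a (by omega) (by omega) (by omega))
  have hfixoff2 : ∀ t : ℕ, j < t → t < k → δ (a + (t : ZMod n)) = a + (t : ZMod n) := by
    intro t ht1 ht2
    exact hfix _ (fun h => by have := (off_eq_base a (by omega)).mp h; omega)
      (off_ne a (by omega) (by omega) (by omega)) (off_ne a (by omega) (by omega) (by omega))
      (off_ne a (by omega) (by omega) (by omega))
  have himg : ∀ x : ZMod n, δ x ≠ x → (δ x = a ∨ δ x = b ∨ δ x = c ∨ δ x = d) := by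
    intro x hx
    exact (hmem (δ x)).mp (fun h => hx (δ.injective h))
  have hmA : δ a ≠ a := (hmem a).mpr (Or.inl rfl)
  have hmB : δ b ≠ b := (hmem b).mpr (Or.inr (Or.inl rfl))
  have hmC : δ c ≠ c := (hmem c).mpr (Or.inr (Or.inr (Or.inl rfl)))
  have hmD : δ d ≠ d := (hmem d).mpr (Or.inr (Or.inr (Or.inr rfl)))
  have hcard4 : δ.support.card = 4 := by
    rw [hsupp, Finset.card_insert_of_notMem (by simp [hab, hac, had]),
      Finset.card_insert_of_notMem (by simp [hbc, hbd]),
      Finset.card_insert_of_notMem (by simp [hcd]), Finset.card_singleton]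
  have skill : ∀ (x y z w : ZMod n), x ≠ y → δ x = y → δ y = z → δ z = w → δ w = x →
      (∀ v : ZMod n, δ v ≠ v → v = x ∨ v = y ∨ v = z ∨ v = w) → False := by
    intro x y z w hxy e1 e2 e3 e4 hmove
    have hs := sign4 hxy e1 e2 e3 e4 hmove hcard4
    exact signkill hn (by rw [hs]; decide) hcyc
  have hmove4 : ∀ (x y z w : ZMod n),
      ({x, y, z, w} : Set (ZMod n)) = {a, b, c, d} →
      ∀ v : ZMod n, δ v ≠ v → v = x ∨ v = y ∨ v = z ∨ v = w := by
    intro x y z w hset v hv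
    have : v ∈ ({x, y, z, w} : Set (ZMod n)) := by
      rw [hset]
      rcases (hmem v).mp hv with rfl | rfl | rfl | rfl <;> simp
    simpa using this
  rcases himg a hmA with h1 | h1 | h1 | h1
  · exact absurd h1 hmA
  · -- δ a = b
    rcases himg b hmB with h2 | h2 | h2 | h2
    · exact (killA a h0 (by omega) hfixoff1 h2 hcyc).elim
    · exact absurd h2 hmB
    · -- δ b = c
      rcases himg c hmC with h3 | h3 | h3 | h3
      · -- δ c = a, so δ d = d : contradiction
        rcases himg d hmD with h4 | h4 | h4 | h4
        · exact absurd (δ.injective (h4.trans h3.symm)) hcd.symm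
        · exact absurd (δ.injective (h4.trans h1.symm)) had.symm
        · exact absurd (δ.injective (h4.trans h2.symm)) hbd.symm
        · exact absurd h4 hmD
      · exact absurd (δ.injective (h1.trans h3.symm)) hac
      · exact absurd h3 hmC
      · -- δ c = d, δ d = a : 4-cycle (a b c d)
        rcases himg d hmD with h4 | h4 | h4 | h4
        · exact (skill a b c d hab h1 h2 h3 h4
            (hmove4 a b c d (by ext v; simp))).elim
        · exact absurd (δ.injective (h4.trans h1.symm)) had.symm
        · exact absurd (δ.injective (h4.trans h2.symm)) hbd.symm
        · exact absurd h4 hmD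
    · -- δ b = d
      rcases himg c hmC with h3 | h3 | h3 | h3
      · -- δ c = a, δ d = c : 4-cycle (a b d c)
        rcases himg d hmD with h4 | h4 | h4 | h4
        · exact absurd (δ.injective (h4.trans h3.symm)) hcd.symm
        · exact absurd (δ.injective (h4.trans h1.symm)) had.symm
        · exact (skill a b d c hab h1 h2 h4 h3
            (hmove4 a b d c (by ext v; simp; tauto))).elim
        · exact absurd h4 hmD
      · exact absurd (δ.injective (h1.trans h3.symm)) hac
      · exact absurd h3 hmC
      · exact absurd (δ.injective (h2.trans h3.symm)) hbc
  · -- δ a = c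
    rcases himg b hmB with h2 | h2 | h2 | h2
    · exact (killA a h0 (by omega) hfixoff1 h2 hcyc).elim
    · exact absurd h2 hmB
    · exact absurd (δ.injective (h1.trans h2.symm)) hab
    · -- δ b = d
      rcases himg c hmC with h3 | h3 | h3 | h3
      · -- δ c = a : need δ d = b : GOOD
        rcases himg d hmD with h4 | h4 | h4 | h4
        · exact absurd (δ.injective (h4.trans h3.symm)) hcd.symm
        · -- δ d = b : the good case
          apply Equiv.ext
          intro x
          by_cases xa : x = a
          · subst xa
            rw [h1, Equiv.Perm.mul_apply, swap_apply_of_ne_of_ne hab had, swap_apply_left]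
          by_cases xb : x = b
          · subst xb
            rw [h2, Equiv.Perm.mul_apply, swap_apply_left,
              swap_apply_of_ne_of_ne had.symm hcd.symm]
          by_cases xc : x = c
          · subst xc
            rw [h3, Equiv.Perm.mul_apply, swap_apply_of_ne_of_ne hbc.symm hcd,
              swap_apply_right]
          by_cases xd : x = d
          · subst xd
            rw [h4, Equiv.Perm.mul_apply, swap_apply_right,
              swap_apply_of_ne_of_ne hab.symm hbc]
          · rw [hfix x xa xb xc xd, Equiv.Perm.mul_apply,
              swap_apply_of_ne_of_ne xb xd, swap_apply_of_ne_of_ne xa xc]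
        · exact absurd (δ.injective (h4.trans h1.symm)) had.symm
        · exact absurd h4 hmD
      · -- δ c = b, δ d = a : 4-cycle (a c b d)
        rcases himg d hmD with h4 | h4 | h4 | h4
        · exact (skill a c b d hac h1 h3 h2 h4
            (hmove4 a c b d (by ext v; simp; tauto))).elim
        · exact absurd (δ.injective (h4.trans h3.symm)) hcd.symm
        · exact absurd (δ.injective (h4.trans h1.symm)) had.symm
        · exact absurd h4 hmD
      · exact absurd h3 hmC
      · exact absurd (δ.injective (h2.trans h3.symm)) hbc
  · -- δ a = d
    rcases himg b hmB with h2 | h2 | h2 | h2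
    · exact (killA a h0 (by omega) hfixoff1 h2 hcyc).elim
    · exact absurd h2 hmB
    · -- δ b = c
      rcases himg c hmC with h3 | h3 | h3 | h3
      · -- δ c = a : δ d = b : 4-cycle (a d b c)
        rcases himg d hmD with h4 | h4 | h4 | h4
        · exact absurd (δ.injective (h4.trans h3.symm)) hcd.symm
        · exact (skill a d b c had h1 h4 h2 h3
            (hmove4 a d b c (by ext v; simp; tauto))).elim
        · exact absurd (δ.injective (h4.trans h2.symm)) hbd.symm
        · exact absurd h4 hmD
      · -- δ c = b : δ d = a : (a d)(b c) : killB
        rcases himg d hmD with h4 | h4 | h4 | h4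
        · exact (killB a h0 hij hjk hkn hfixoff1 hfixoff2 h2 h4 hcyc).elim
        · exact absurd (δ.injective (h4.trans h3.symm)) hcd.symm
        · exact absurd (δ.injective (h4.trans h2.symm)) hbd.symm
        · exact absurd h4 hmD
      · exact absurd h3 hmC
      · exact absurd (δ.injective (h3.trans h1.symm)) hac.symm
    · exact absurd (δ.injective (h1.trans h2.symm)) hab

lemma sort3 [NeZero n] {K : Finset (ZMod n)} (h : K.card = 3) :
    ∃ (a : ZMod n) (i j : ℕ), 0 < i ∧ i < j ∧ j < n ∧
      K = {a, a + (i : ZMod n), a + (j : ZMod n)} := by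
  obtain ⟨a, b, c, hab, hac, hbc, rfl⟩ := Finset.card_eq_three.mp h
  have hb : a + (((b - a).val : ℕ) : ZMod n) = b := by rw [ZMod.natCast_zmod_val]; ring
  have hc : a + (((c - a).val : ℕ) : ZMod n) = c := by rw [ZMod.natCast_zmod_val]; ring
  have hb0 : 0 < (b - a).val := by
    rcases Nat.eq_zero_or_pos (b - a).val with h0 | h0
    · exact absurd (sub_eq_zero.mp ((ZMod.val_eq_zero _).mp h0)) (Ne.symm hab)
    · exact h0
  have hc0 : 0 < (c - a).val := by
    rcases Nat.eq_zero_or_pos (c - a).val with h0 | h0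
    · exact absurd (sub_eq_zero.mp ((ZMod.val_eq_zero _).mp h0)) (Ne.symm hac)
    · exact h0
  have hbn : (b - a).val < n := ZMod.val_lt _
  have hcn : (c - a).val < n := ZMod.val_lt _
  have hne : (b - a).val ≠ (c - a).val := by
    intro h0
    apply hbc
    rw [← hb, ← hc, h0]
  rcases Nat.lt_or_ge (b - a).val (c - a).val with hlt | hge
  · exact ⟨a, (b - a).val, (c - a).val, hb0, hlt, hcn, by rw [hb, hc]⟩
  · refine ⟨a, (c - a).val, (b - a).val, hc0, by omega, hbn, ?_⟩
    rw [hb, hc, Finset.pair_comm c b]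

lemma sort4 [NeZero n] {K : Finset (ZMod n)} (h : K.card = 4) :
    ∃ (a : ZMod n) (i j k : ℕ), 0 < i ∧ i < j ∧ j < k ∧ k < n ∧
      K = {a, a + (i : ZMod n), a + (j : ZMod n), a + (k : ZMod n)} := by
  have hpos : 0 < K.card := by omega
  obtain ⟨a, ha⟩ := Finset.card_pos.mp hpos
  have h3 : (K.erase a).card = 3 := by rw [Finset.card_erase_of_mem ha, h]
  obtain ⟨b, c, d, hbc, hbd, hcd, hK'⟩ := Finset.card_eq_three.mp h3
  have hKa : K = insert a {b, c, d} := by rw [← hK', Finset.insert_erase ha]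
  have hanb : a ∉ ({b, c, d} : Finset (ZMod n)) := by
    rw [← hK']; exact Finset.notMem_erase a K
  simp only [Finset.mem_insert, Finset.mem_singleton, not_or] at hanb
  obtain ⟨hab, hac, had⟩ := hanb
  have main : ∀ x y z : ZMod n, a ≠ x → a ≠ y → a ≠ z →
      (x - a).val < (y - a).val → (y - a).val < (z - a).val →
      K = insert a {x, y, z} →
      ∃ (a' : ZMod n) (i j k : ℕ), 0 < i ∧ i < j ∧ j < k ∧ k < n ∧
        K = {a', a' + (i : ZMod n), a' + (j : ZMod n), a' + (k : ZMod n)} := by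
    intro x y z hax hay haz h1 h2 hKeq
    have hx : a + (((x - a).val : ℕ) : ZMod n) = x := by rw [ZMod.natCast_zmod_val]; ring
    have hy : a + (((y - a).val : ℕ) : ZMod n) = y := by rw [ZMod.natCast_zmod_val]; ring
    have hz : a + (((z - a).val : ℕ) : ZMod n) = z := by rw [ZMod.natCast_zmod_val]; ring
    have hx0 : 0 < (x - a).val := by
      rcases Nat.eq_zero_or_pos (x - a).val with h0 | h0
      · exact absurd (sub_eq_zero.mp ((ZMod.val_eq_zero _).mp h0)) (fun hh => hax hh.symm)
      · exact h0
    exact ⟨a, (x - a).val, (y - a).val, (z - a).val, hx0, h1, h2, ZMod.val_lt _,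
      by rw [hx, hy, hz]; exact hKeq⟩
  have vne : ∀ x y : ZMod n, x ≠ y →
      (x - a).val ≠ (y - a).val := by
    intro x y hxy h0
    apply hxy
    have hx : a + (((x - a).val : ℕ) : ZMod n) = x := by rw [ZMod.natCast_zmod_val]; ring
    have hy : a + (((y - a).val : ℕ) : ZMod n) = y := by rw [ZMod.natCast_zmod_val]; ring
    rw [← hx, ← hy, h0]
  have hvbc := vne b c hbc
  have hvbd := vne b d hbd
  have hvcd := vne c d hcd
  have hset : ∀ (p q r : ZMod n), ({p, q, r} : Finset (ZMod n)) = {b, c, d} →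
      K = insert a {p, q, r} := by
    intro p q r hpqr; rw [hKa, hpqr]
  rcases Nat.lt_or_ge (b - a).val (c - a).val with h1 | h1
  · rcases Nat.lt_or_ge (c - a).val (d - a).val with h2 | h2
    · exact main b c d hab hac had h1 h2 (hset b c d rfl)
    · rcases Nat.lt_or_ge (b - a).val (d - a).val with h3 | h3
      · exact main b d c hab had hac h3 (by omega) (hset b d c (by ext v; simp; tauto))
      · exact main d b c had hab hac (by omega) h1 (hset d b c (by ext v; simp; tauto))
  · rcases Nat.lt_or_ge (b - a).val (d - a).val with h2 | h2
    · exact main c b d hac hab had (by omega) h2 (hset c b d (by ext v; simp; tauto))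
    · rcases Nat.lt_or_ge (c - a).val (d - a).val with h3 | h3
      · exact main c d b hac had hab h3 (by omega) (hset c d b (by ext v; simp; tauto))
      · exact main d c b had hac hab (by omega) (by omega) (hset d c b (by ext v; simp; tauto))

open scoped Classical in
noncomputable def Dset (n : ℕ) [NeZero n] : Finset (Equiv.Perm (ZMod n)) :=
  Finset.univ.filter fun δ => δ.support.card ≤ 4 ∧ Cyc (z1 n * δ)

lemma mem_Dset [NeZero n] {δ : Equiv.Perm (ZMod n)} :
    δ ∈ Dset n ↔ δ.support.card ≤ 4 ∧ Cyc (z1 n * δ) := by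
  simp [Dset]

lemma Dset_card_cases [NeZero n] (hn : 2 ≤ n) {δ : Equiv.Perm (ZMod n)} (hδ : δ ∈ Dset n) :
    δ.support.card = 0 ∨ δ.support.card = 3 ∨ δ.support.card = 4 := by
  obtain ⟨hle, hcyc⟩ := mem_Dset.mp hδ
  have h1 : δ.support.card ≠ 1 := Equiv.Perm.card_support_ne_one δ
  have h2 : δ.support.card ≠ 2 := by
    intro h2
    obtain ⟨x, y, hxy, rfl⟩ := Equiv.Perm.card_support_eq_two.mp h2
    exact signkill hn (by rw [Equiv.Perm.sign_swap hxy]; decide) hcyc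
  omega

lemma card_commute [NeZero n] :
    (Finset.univ.filter fun σ : Equiv.Perm (ZMod n) => σ * z1 n = z1 n * σ).card = n := by
  have himg : (Finset.univ.filter fun σ : Equiv.Perm (ZMod n) => σ * z1 n = z1 n * σ)
      = Finset.univ.image (fun c : ZMod n => Equiv.addRight c) := by
    ext σ
    simp only [Finset.mem_filter, Finset.mem_univ, true_and, Finset.mem_image]
    constructor
    · intro hcomm
      refine ⟨σ 0, ?_⟩
      have key : ∀ x : ZMod n, σ (x + 1) = σ x + 1 := by
        intro x
        have h := Equiv.Perm.ext_iff.mp hcomm x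
        exact h
      have key2 : ∀ m : ℕ, σ ((m : ZMod n)) = σ 0 + (m : ZMod n) := by
        intro m
        induction m with
        | zero => simp
        | succ s ih =>
          push_cast
          rw [key, ih, add_assoc]
      apply Equiv.ext
      intro x
      show x + σ 0 = σ x
      rw [← ZMod.natCast_zmod_val x, key2]
      exact add_comm _ _
    · rintro ⟨c, rfl⟩
      apply Equiv.ext
      intro x
      show x + 1 + c = x + c + 1
      ring
  rw [himg, Finset.card_image_of_injective _ ?_, Finset.card_univ, ZMod.card]
  intro c c' h
  have := Equiv.ext_iff.mp h 0
  simpa using this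

lemma card_Dset [NeZero n] (hn : 2 ≤ n) :
    (Dset n).card = 1 + n.choose 3 + n.choose 4 := by
  classical
  have hnotmem : (∅ : Finset (ZMod n)) ∉
      (Finset.univ.powersetCard 3 : Finset (Finset (ZMod n))) ∪ (Finset.univ.powersetCard 4) := by
    intro hmem
    rcases Finset.mem_union.mp hmem with h | h
    · have := Finset.mem_powersetCard_univ.mp h; simp at this
    · have := Finset.mem_powersetCard_univ.mp h; simp at this
  have hdisj : Disjoint (Finset.univ.powersetCard 3 : Finset (Finset (ZMod n)))
      (Finset.univ.powersetCard 4) := by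
    rw [Finset.disjoint_left]
    intro s hs3 hs4
    have h3 := Finset.mem_powersetCard_univ.mp hs3
    have h4 := Finset.mem_powersetCard_univ.mp hs4
    omega
  have hT : (Dset n).card = (insert (∅ : Finset (ZMod n))
      ((Finset.univ.powersetCard 3 : Finset (Finset (ZMod n))) ∪ (Finset.univ.powersetCard 4))).card := by
    apply Finset.card_bij (fun δ _ => δ.support)
    · intro δ hδ
      rcases Dset_card_cases hn hδ with h | h | h
      · rw [Finset.card_eq_zero.mp h]
        exact Finset.mem_insert_self _ _
      · exact Finset.mem_insert_of_mem
          (Finset.mem_union_left _ (Finset.mem_powersetCard_univ.mpr h))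
      · exact Finset.mem_insert_of_mem
          (Finset.mem_union_right _ (Finset.mem_powersetCard_univ.mpr h))
    · intro δ1 h1 δ2 h2 heq
      rcases Dset_card_cases hn h1 with h | h | h
      · have e1 : δ1 = 1 := Equiv.Perm.support_eq_empty_iff.mp (Finset.card_eq_zero.mp h)
        have h2c : δ2.support.card = 0 := by rw [← heq]; exact h
        have e2 : δ2 = 1 := Equiv.Perm.support_eq_empty_iff.mp (Finset.card_eq_zero.mp h2c)
        rw [e1, e2]
      · obtain ⟨a, i, j, h0, hij, hjn, hsupp⟩ := sort3 h
        have hsupp2 : δ2.support = {a, a + (i : ZMod n), a + (j : ZMod n)} := by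
          rw [← heq]; exact hsupp
        rw [uniq3 a h0 hij hjn hsupp (mem_Dset.mp h1).2,
          uniq3 a h0 hij hjn hsupp2 (mem_Dset.mp h2).2]
      · obtain ⟨a, i, j, k, h0, hij, hjk, hkn, hsupp⟩ := sort4 h
        have hsupp2 : δ2.support
            = {a, a + (i : ZMod n), a + (j : ZMod n), a + (k : ZMod n)} := by
          rw [← heq]; exact hsupp
        rw [uniq4 hn a h0 hij hjk hkn hsupp (mem_Dset.mp h1).2,
          uniq4 hn a h0 hij hjk hkn hsupp2 (mem_Dset.mp h2).2]
    · intro K hK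
      rcases Finset.mem_insert.mp hK with rfl | hK'
      · exact ⟨1, mem_Dset.mpr ⟨by simp, by rw [mul_one]; exact z1cyc hn⟩, by simp⟩
      rcases Finset.mem_union.mp hK' with hK3 | hK4
      · obtain ⟨a, i, j, h0, hij, hjn, rfl⟩ := sort3 (Finset.mem_powersetCard_univ.mp hK3)
        obtain ⟨hcyc, hsupp⟩ := good3 a h0 hij hjn
        refine ⟨_, mem_Dset.mpr ⟨?_, hcyc⟩, hsupp⟩
        rw [hsupp]
        have c1 := Finset.card_insert_le a ({a + (i : ZMod n), a + (j : ZMod n)} :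
          Finset (ZMod n))
        have c2 := Finset.card_insert_le (a + (i : ZMod n)) ({a + (j : ZMod n)} :
          Finset (ZMod n))
        simp only [Finset.card_singleton] at c1 c2
        omega
      · obtain ⟨a, i, j, k, h0, hij, hjk, hkn, rfl⟩ :=
          sort4 (Finset.mem_powersetCard_univ.mp hK4)
        obtain ⟨hcyc, hsupp⟩ := good4 a h0 hij hjk hkn
        refine ⟨_, mem_Dset.mpr ⟨?_, hcyc⟩, hsupp⟩
        rw [hsupp]
        have c1 := Finset.card_insert_le a
          ({a + (i : ZMod n), a + (j : ZMod n), a + (k : ZMod n)} : Finset (ZMod n))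
        have c2 := Finset.card_insert_le (a + (i : ZMod n))
          ({a + (j : ZMod n), a + (k : ZMod n)} : Finset (ZMod n))
        have c3 := Finset.card_insert_le (a + (j : ZMod n))
          ({a + (k : ZMod n)} : Finset (ZMod n))
        simp only [Finset.card_singleton] at c1 c2 c3
        omega
  rw [hT, Finset.card_insert_of_notMem hnotmem, Finset.card_union_of_disjoint hdisj,
    Finset.card_powersetCard, Finset.card_powersetCard, Finset.card_univ, ZMod.card]
  omega

def ham {G : Type*} [Fintype G] [DecidableEq G] (f g : Equiv.Perm G) : ℕ :=
  (Finset.univ.filter fun a => f a ≠ g a).card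

def cnt {G : Type*} [Fintype G] [DecidableEq G] (k : ℕ) (β : Equiv.Perm G) : ℕ :=
  (Finset.univ.filter fun α : Equiv.Perm G => ham (α * β) (β * α) ≤ k).card

lemma GID [NeZero n] (α : Equiv.Perm (ZMod n)) :
    z1 n * ((z1 n)⁻¹ * α⁻¹ * z1 n * α) = α⁻¹ * z1 n * α := by
  group

lemma keyPhi [NeZero n] (α : Equiv.Perm (ZMod n)) (x : ZMod n) :
    ((z1 n)⁻¹ * α⁻¹ * z1 n * α) x = x ↔ α ((z1 n) x) = (z1 n) (α x) := by
  show ((z1 n)⁻¹ : Equiv.Perm (ZMod n)) ((α⁻¹ : Equiv.Perm (ZMod n)) ((z1 n) (α x))) = x ↔ _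
  constructor
  · intro h
    have h1 := congrArg (z1 n) h
    rw [Equiv.Perm.coe_inv, Equiv.apply_symm_apply] at h1
    have h2 := congrArg α h1
    rw [Equiv.Perm.coe_inv, Equiv.apply_symm_apply] at h2
    exact h2.symm
  · intro h
    rw [← h]; simp only [Equiv.Perm.coe_inv, Equiv.symm_apply_apply]

lemma HAMSUP [NeZero n] (α : Equiv.Perm (ZMod n)) :
    ham (α * z1 n) (z1 n * α) = ((z1 n)⁻¹ * α⁻¹ * z1 n * α).support.card := by
  unfold ham
  congr 1
  ext x
  simp only [Finset.mem_filter, Finset.mem_univ, true_and, Equiv.Perm.mem_support]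
  simp only [Equiv.Perm.mul_apply]
  exact not_congr ((keyPhi α x).symm)

lemma P1 [NeZero n] (hn : 2 ≤ n) : cnt 4 (z1 n) = (Dset n).card * n := by
  classical
  unfold cnt
  set Aset := Finset.univ.filter
    fun α : Equiv.Perm (ZMod n) => ham (α * z1 n) (z1 n * α) ≤ 4 with hAdef
  have hmaps : ∀ α ∈ Aset, ((z1 n)⁻¹ * α⁻¹ * z1 n * α) ∈ Dset n := by
    intro α hα
    have hham : ham (α * z1 n) (z1 n * α) ≤ 4 := by
      rw [hAdef] at hα
      simpa using hα
    refine mem_Dset.mpr ⟨by rw [← HAMSUP]; exact hham, ?_⟩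
    rw [GID]
    constructor
    · have := (z1cyc hn).1.conj (g := α⁻¹)
      simpa [inv_inv] using this
    · apply Finset.eq_univ_of_card
      have hrw : α⁻¹ * z1 n * α = α⁻¹ * z1 n * (α⁻¹)⁻¹ := by rw [inv_inv]
      rw [hrw, Equiv.Perm.card_support_conj, (z1cyc hn).2, Finset.card_univ]
  rw [Finset.card_eq_sum_card_fiberwise hmaps]
  have hfib : ∀ δ ∈ Dset n,
      (Aset.filter fun α => (z1 n)⁻¹ * α⁻¹ * z1 n * α = δ).card = n := by
    intro δ hδ
    obtain ⟨hcard, hcyc⟩ := mem_Dset.mp hδ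
    have hconj : IsConj (z1 n) (z1 n * δ) :=
      (z1cyc hn).1.isConj hcyc.1 (by rw [(z1cyc hn).2, hcyc.2])
    obtain ⟨cc, hcc⟩ := isConj_iff.mp hconj
    have hfibeq : (Aset.filter fun α => (z1 n)⁻¹ * α⁻¹ * z1 n * α = δ)
        = Finset.univ.filter fun α => α⁻¹ * z1 n * α = z1 n * δ := by
      ext α
      simp only [hAdef, Finset.mem_filter, Finset.mem_univ, true_and, Finset.filter_filter]
      constructor
      · rintro ⟨h1, h2⟩
        rw [← h2]
        exact (GID α).symm
      · intro h
        have hΦ : (z1 n)⁻¹ * α⁻¹ * z1 n * α = δ := by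
          apply mul_left_cancel (a := z1 n)
          rw [GID, h]
        exact ⟨by rw [HAMSUP, hΦ]; exact hcard, hΦ⟩
    have hbij : (Finset.univ.filter
          fun α : Equiv.Perm (ZMod n) => α⁻¹ * z1 n * α = z1 n * δ).card
        = (Finset.univ.filter
          fun σ : Equiv.Perm (ZMod n) => σ * z1 n = z1 n * σ).card := by
      apply Finset.card_bij (fun α _ => α * cc)
      · intro α hα
        simp only [Finset.mem_filter, Finset.mem_univ, true_and] at hα ⊢
        have h' : α⁻¹ * z1 n * α = cc * z1 n * cc⁻¹ := hα.trans hcc.symm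
        calc α * cc * z1 n = α * (cc * z1 n * cc⁻¹) * cc := by group
          _ = α * (α⁻¹ * z1 n * α) * cc := by rw [h']
          _ = z1 n * (α * cc) := by group
      · intro α1 h1 α2 h2 heq
        exact mul_right_cancel heq
      · intro σ hσ
        simp only [Finset.mem_filter, Finset.mem_univ, true_and] at hσ
        refine ⟨σ * cc⁻¹, ?_, by group⟩
        simp only [Finset.mem_filter, Finset.mem_univ, true_and]
        calc (σ * cc⁻¹)⁻¹ * z1 n * (σ * cc⁻¹)
            = cc * (σ⁻¹ * (z1 n * σ)) * cc⁻¹ := by group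
          _ = cc * z1 n * cc⁻¹ := by rw [← hσ, inv_mul_cancel_left]
          _ = z1 n * δ := hcc
    rw [hfibeq, hbij, card_commute]
  rw [Finset.sum_congr rfl hfib, Finset.sum_const, smul_eq_mul]

def Ψ {G H : Type*} (e : G ≃ H) : Equiv.Perm G ≃* Equiv.Perm H :=
  { e.permCongr with
    map_mul' := by
      intro f g
      ext x
      simp [Equiv.permCongr_apply] }

lemma Ψ_apply {G H : Type*} (e : G ≃ H) (f : Equiv.Perm G) (y : H) :
    (Ψ e f) y = e (f (e.symm y)) := rfl

lemma hamΨ {G H : Type*} [Fintype G] [DecidableEq G] [Fintype H] [DecidableEq H]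
    (e : G ≃ H) (f g : Equiv.Perm G) : ham (Ψ e f) (Ψ e g) = ham f g := by
  unfold ham
  apply Finset.card_bij (fun x _ => e.symm x)
  · intro x hx
    simp only [Finset.mem_filter, Finset.mem_univ, true_and] at hx ⊢
    simp only [Ψ_apply] at hx ⊢
    exact fun h => hx (congrArg e h)
  · intro x1 _ x2 _ h
    exact e.symm.injective h
  · intro y hy
    simp only [Finset.mem_filter, Finset.mem_univ, true_and] at hy ⊢
    simp only [Ψ_apply] at hy ⊢
    refine ⟨e y, ?_, by simp⟩
    simpa using fun h => hy (by simpa using h)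

lemma cntΨ {G H : Type*} [Fintype G] [DecidableEq G] [Fintype H] [DecidableEq H]
    (e : G ≃ H) (kk : ℕ) (β : Equiv.Perm G) : cnt kk (Ψ e β) = cnt kk β := by
  unfold cnt
  apply Finset.card_bij (fun α _ => (Ψ e).symm α)
  · intro α hα
    simp only [Finset.mem_filter, Finset.mem_univ, true_and] at hα ⊢
    have hrepr : α = Ψ e ((Ψ e).symm α) := ((Ψ e).apply_symm_apply α).symm
    rw [hrepr, ← map_mul, ← map_mul, hamΨ] at hα
    exact hα
  · intro x1 _ x2 _ h
    exact (Ψ e).symm.injective h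
  · intro α' hα'
    simp only [Finset.mem_filter, Finset.mem_univ, true_and] at hα' ⊢
    refine ⟨Ψ e α', ?_, by simp⟩
    rw [← map_mul, ← map_mul, hamΨ]
    exact hα'

lemma ham_conj {G : Type*} [Fintype G] [DecidableEq G] (σ f g : Equiv.Perm G) :
    ham (σ⁻¹ * f * σ) (σ⁻¹ * g * σ) = ham f g := by
  unfold ham
  apply Finset.card_bij (fun x _ => σ x)
  · intro x hx
    simp only [Finset.mem_filter, Finset.mem_univ, true_and] at hx ⊢
    simp only [Equiv.Perm.mul_apply] at hx ⊢
    exact fun h => hx (by rw [h])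
  · intro x1 _ x2 _ h
    exact σ.injective h
  · intro y hy
    simp only [Finset.mem_filter, Finset.mem_univ, true_and] at hy ⊢
    simp only [Equiv.Perm.mul_apply] at hy ⊢
    refine ⟨σ⁻¹ y, ?_, by simp⟩
    simp only [Equiv.Perm.coe_inv, Equiv.apply_symm_apply]
    exact fun h => hy ((Equiv.injective σ⁻¹) h)

lemma cnt_conj {G : Type*} [Fintype G] [DecidableEq G] (σ β : Equiv.Perm G) (kk : ℕ) :
    cnt kk (σ * β * σ⁻¹) = cnt kk β := by
  unfold cnt
  apply Finset.card_bij (fun α _ => σ⁻¹ * α * σ)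
  · intro α hα
    simp only [Finset.mem_filter, Finset.mem_univ, true_and] at hα ⊢
    have e1 : (σ⁻¹ * α * σ) * β = σ⁻¹ * (α * (σ * β * σ⁻¹)) * σ := by group
    have e2 : β * (σ⁻¹ * α * σ) = σ⁻¹ * ((σ * β * σ⁻¹) * α) * σ := by group
    rw [e1, e2, ham_conj]
    exact hα
  · intro x1 _ x2 _ h
    have := mul_right_cancel h
    exact mul_left_cancel this
  · intro α' hα'
    simp only [Finset.mem_filter, Finset.mem_univ, true_and] at hα' ⊢
    refine ⟨σ * α' * σ⁻¹, ?_, by group⟩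
    have e1 : (σ * α' * σ⁻¹) * (σ * β * σ⁻¹) = σ * (α' * β) * σ⁻¹ := by group
    have e2 : (σ * β * σ⁻¹) * (σ * α' * σ⁻¹) = σ * (β * α') * σ⁻¹ := by group
    rw [e1, e2]
    have e3 : σ * (α' * β) * σ⁻¹ = (σ⁻¹)⁻¹ * (α' * β) * σ⁻¹ := by rw [inv_inv]
    have e4 : σ * (β * α') * σ⁻¹ = (σ⁻¹)⁻¹ * (β * α') * σ⁻¹ := by rw [inv_inv]
    rw [e3, e4, ham_conj]
    exact hα'

lemma ΨIsCycle {G H : Type*} (e : G ≃ H) {f : Equiv.Perm G} (hf : f.IsCycle) :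
    (Ψ e f).IsCycle := by
  obtain ⟨x, hx, hall⟩ := hf
  refine ⟨e x, ?_, ?_⟩
  · rw [Ψ_apply, Equiv.symm_apply_apply]
    exact fun h => hx (e.injective h)
  · intro y hy
    have hy' : f (e.symm y) ≠ e.symm y := by
      intro h
      apply hy
      rw [Ψ_apply, h, Equiv.apply_symm_apply]
    obtain ⟨m, hm⟩ := hall hy'
    refine ⟨m, ?_⟩
    rw [← map_zpow (Ψ e), Ψ_apply, Equiv.symm_apply_apply, hm, Equiv.apply_symm_apply]

lemma Ψsupp {G H : Type*} [Fintype G] [DecidableEq G] [Fintype H] [DecidableEq H]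
    (e : G ≃ H) (f : Equiv.Perm G) : (Ψ e f).support.card = f.support.card := by
  apply Finset.card_bij (fun x _ => e.symm x)
  · intro x hx
    rw [Equiv.Perm.mem_support] at hx ⊢
    rw [Ψ_apply] at hx
    exact fun h => hx (by rw [h, Equiv.apply_symm_apply])
  · intro x1 _ x2 _ h
    exact e.symm.injective h
  · intro y hy
    rw [Equiv.Perm.mem_support] at hy
    refine ⟨e y, ?_, by simp⟩
    rw [Equiv.Perm.mem_support, Ψ_apply, Equiv.symm_apply_apply]
    exact fun h => hy (e.injective h)

end CleWork

theorem cle_four_of_n_cycle (n : ℕ) (hn : 2 ≤ n) (β : Equiv.Perm (Fin n))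
    (hβ : β.IsCycle ∧ β.support.card = n) :
    cle 4 β = n * (1 + Nat.choose (n + 1) 4) := by
  classical
  obtain ⟨hcyc, hcard⟩ := hβ
  haveI : NeZero n := ⟨by omega⟩
  let e : Fin n ≃ ZMod n :=
    { toFun := fun i => ((i : ℕ) : ZMod n)
      invFun := fun x => ⟨x.val, ZMod.val_lt x⟩
      left_inv := fun i => Fin.ext (ZMod.val_cast_of_lt i.isLt)
      right_inv := fun x => ZMod.natCast_zmod_val x }
  have hcle : cle 4 β = CleWork.cnt 4 β := rfl
  have h1 : CleWork.cnt 4 β = CleWork.cnt 4 (CleWork.Ψ e β) := (CleWork.cntΨ e 4 β).symm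
  have hβ'cyc : (CleWork.Ψ e β).IsCycle := CleWork.ΨIsCycle e hcyc
  have hβ'card : (CleWork.Ψ e β).support.card = n := by
    rw [CleWork.Ψsupp]; exact hcard
  have hz := CleWork.z1cyc (n := n) hn
  have hzcard : (CleWork.z1 n).support.card = n := by
    rw [hz.2, Finset.card_univ, ZMod.card]
  have hconj : IsConj (CleWork.Ψ e β) (CleWork.z1 n) :=
    hβ'cyc.isConj hz.1 (by rw [hβ'card, hzcard])
  obtain ⟨cc, hcc⟩ := isConj_iff.mp hconj
  have h2 : CleWork.cnt 4 (CleWork.z1 n) = CleWork.cnt 4 (CleWork.Ψ e β) := by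
    rw [← hcc, CleWork.cnt_conj]
  rw [hcle, h1, ← h2, CleWork.P1 hn, CleWork.card_Dset hn]
  have hps : (n + 1).choose 4 = n.choose 3 + n.choose 4 := Nat.choose_succ_succ n 3
  rw [hps]
  ring
end
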